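/- arXiv:math/9912178 — 9 statements merged into one kernel-verified Lean document; each statement's English description precedes it below -/
import Mathlib

section
/- (Schmidt–Sprindžuk lemma, Theorem 1.4.) Let (X, μ) be a probability space and (B_n)_{n≥1} a sequence of measurable subsets of X with ∑_{n=1}^∞ μ(B_n) = ∞. Suppose there exists a constant C > 0 such that for all integers 1 ≤ M ≤ N one has ∑_{m,n=M}^N ( μ(B_m ∩ B_n) − μ(B_m)μ(B_n) ) ≤ C·∑_{n=M}^N μ(B_n). Then for μ-almost every x ∈ X, setting S_N(x) = #{1 ≤ n ≤ N : x ∈ B_n} and E_N = ∑_{n=1}^N μ(B_n), one has S_N(x)/E_N → 1 as N → ∞. (Applied to B_n = T^{-n}(A_n) for a measure-preserving map T, this says that any sequence (A_n) satisfying condition (SP) with divergent sum of measures is strongly Borel–Cantelli.) -/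
/-!
Chebyshev's inequality and (SP) give `μ {|S_N - E_N| ≥ ε E_N} ≤ C / (ε² E_N)`. Along the indices
`N_k` at which `E_N` first reaches `(k + 1)²` these bounds are summable, so by Borel–Cantelli
`S_{N_k} / E_{N_k} → 1` almost surely. As `E_N` grows by at most `1` per step,
`E_{N_{k+1}} / E_{N_k} → 1`, and since `S_N` and `E_N` are monotone, the convergence passes from the
subsequence to all `N`.
-/

open MeasureTheory Filter ProbabilityTheory Finset Topology
open scoped Classical

lemma card_filter_mem_eq_sum_indicator {X ι : Type*} (I : Finset ι) (B : ι → Set X) (x : X) :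
    ((I.filter (fun n => x ∈ B n)).card : ℝ) = ∑ n ∈ I, (B n).indicator 1 x := by
  simp [Set.indicator_apply, Finset.sum_boole]

section Moments

variable {X ι : Type*} [MeasurableSpace X] {μ : Measure X} [IsProbabilityMeasure μ]

lemma memLp_indicator_one {A : Set X} (hA : MeasurableSet A) (p : ENNReal) :
    MemLp (A.indicator (1 : X → ℝ)) p μ :=
  (memLp_const 1).indicator hA

lemma covariance_indicator_one {A B : Set X} (hA : MeasurableSet A) (hB : MeasurableSet B) :
    cov[A.indicator 1, B.indicator 1; μ] = μ.real (A ∩ B) - μ.real A * μ.real B := by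
  rw [covariance_eq_sub (memLp_indicator_one hA 2) (memLp_indicator_one hB 2),
    ← Set.inter_indicator_one, integral_indicator_one (hA.inter hB), integral_indicator_one hA,
    integral_indicator_one hB]

variable {B : ι → Set X} (hB : ∀ n, MeasurableSet (B n)) (I : Finset ι)
include hB

lemma integral_card_filter_mem :
    μ[fun x => ((I.filter (fun n => x ∈ B n)).card : ℝ)] = ∑ n ∈ I, μ.real (B n) := by
  simp_rw [card_filter_mem_eq_sum_indicator]
  rw [integral_finsetSum I fun n _ => (memLp_indicator_one (hB n) 1).integrable le_rfl]
  exact Finset.sum_congr rfl fun n _ => integral_indicator_one (hB n)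

lemma variance_card_filter_mem :
    variance (fun x => ((I.filter (fun n => x ∈ B n)).card : ℝ)) μ =
      ∑ m ∈ I, ∑ n ∈ I, (μ.real (B m ∩ B n) - μ.real (B m) * μ.real (B n)) := by
  have hmem : ∀ n ∈ I, MemLp ((B n).indicator 1) 2 μ := fun n _ => memLp_indicator_one (hB n) 2
  simp_rw [card_filter_mem_eq_sum_indicator]
  rw [← covariance_self (memLp_finsetSum I hmem).aemeasurable,
    covariance_fun_sum_fun_sum' hmem hmem]
  exact Finset.sum_congr rfl fun m _ => Finset.sum_congr rfl fun n _ =>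
    covariance_indicator_one (hB m) (hB n)

lemma measure_le_abs_card_filter_mem_sub_le {c : ℝ} (hc : 0 < c) :
    μ {x | c ≤ |((I.filter (fun n => x ∈ B n)).card : ℝ) - ∑ n ∈ I, μ.real (B n)|} ≤
      ENNReal.ofReal
        ((∑ m ∈ I, ∑ n ∈ I, (μ.real (B m ∩ B n) - μ.real (B m) * μ.real (B n))) / c ^ 2) := by
  have hmem : MemLp (fun x => ((I.filter (fun n => x ∈ B n)).card : ℝ)) 2 μ := by
    simp_rw [card_filter_mem_eq_sum_indicator]
    exact memLp_finsetSum I fun n _ => memLp_indicator_one (hB n) 2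
  rw [← variance_card_filter_mem hB, ← integral_card_filter_mem hB]
  exact meas_ge_le_variance_div_sq hmem hc

lemma measure_le_abs_card_filter_mem_div_sub_one_le (hpos : 0 < ∑ n ∈ I, μ.real (B n)) {C : ℝ}
    (hvar : ∑ m ∈ I, ∑ n ∈ I, (μ.real (B m ∩ B n) - μ.real (B m) * μ.real (B n)) ≤
      C * ∑ n ∈ I, μ.real (B n)) {ε : ℝ} (hε : 0 < ε) :
    μ {x | ε ≤ |((I.filter (fun n => x ∈ B n)).card : ℝ) / ∑ n ∈ I, μ.real (B n) - 1|} ≤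
      ENNReal.ofReal (C / (ε ^ 2 * ∑ n ∈ I, μ.real (B n))) := by
  set E := ∑ n ∈ I, μ.real (B n)
  have hset : {x | ε ≤ |((I.filter (fun n => x ∈ B n)).card : ℝ) / E - 1|} =
      {x | ε * E ≤ |((I.filter (fun n => x ∈ B n)).card : ℝ) - E|} := by
    ext x
    rw [Set.mem_ofPred_eq, Set.mem_ofPred_eq, div_sub_one hpos.ne', abs_div, abs_of_pos hpos,
      le_div_iff₀ hpos]
  rw [hset]
  refine (measure_le_abs_card_filter_mem_sub_le hB I (mul_pos hε hpos)).trans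
    (ENNReal.ofReal_le_ofReal ?_)
  calc _ ≤ C * E / (ε * E) ^ 2 := by gcongr
    _ = C / (ε ^ 2 * E) := by field_simp

end Moments

lemma ae_tendsto_zero_of_tsum_measure_ne_top {X : Type*} [MeasurableSpace X] {μ : Measure X}
    {f : ℕ → X → ℝ} (hf : ∀ ε > 0, ∑' k, μ {x | ε ≤ |f k x|} ≠ ⊤) :
    ∀ᵐ x ∂μ, Tendsto (fun k => f k x) atTop (𝓝 0) := by
  have h : ∀ j : ℕ, ∀ᵐ x ∂μ, ∀ᶠ k in atTop, |f k x| < 1 / ((j : ℝ) + 1) := fun j => by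
    filter_upwards [ae_eventually_notMem (hf _ Nat.one_div_pos_of_nat)] with x hx
    simpa only [Set.mem_ofPred_eq, not_le] using hx
  filter_upwards [ae_all_iff.2 h] with x hx
  refine Metric.tendsto_nhds.2 fun ε hε => ?_
  obtain ⟨j, hj⟩ := exists_nat_one_div_lt hε
  filter_upwards [hx j] with k hk
  simpa only [Real.dist_eq, sub_zero] using hk.trans hj

lemma ae_tendsto_card_filter_mem_div_of_sq_le {X ι : Type*} [MeasurableSpace X] {μ : Measure X}
    [IsProbabilityMeasure μ] {B : ι → Set X} (hB : ∀ n, MeasurableSet (B n)) (I : ℕ → Finset ι)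
    (hI : ∀ k : ℕ, ((k : ℝ) + 1) ^ 2 ≤ ∑ n ∈ I k, μ.real (B n)) {C : ℝ} (hC : 0 ≤ C)
    (hvar : ∀ k, ∑ m ∈ I k, ∑ n ∈ I k, (μ.real (B m ∩ B n) - μ.real (B m) * μ.real (B n)) ≤
      C * ∑ n ∈ I k, μ.real (B n)) :
    ∀ᵐ x ∂μ, Tendsto (fun k => (((I k).filter (fun n => x ∈ B n)).card : ℝ) /
      ∑ n ∈ I k, μ.real (B n)) atTop (𝓝 1) := by
  have hpos (k : ℕ) : 0 < ∑ n ∈ I k, μ.real (B n) :=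
    (by positivity : (0 : ℝ) < ((k : ℝ) + 1) ^ 2).trans_le (hI k)
  have hbound (ε : ℝ) (hε : 0 < ε) (k : ℕ) :
      μ {x | ε ≤ |(((I k).filter (fun n => x ∈ B n)).card : ℝ) / ∑ n ∈ I k, μ.real (B n) - 1|} ≤
        ENNReal.ofReal (C / ε ^ 2 * (1 / ((k : ℝ) + 1) ^ 2)) := by
    refine (measure_le_abs_card_filter_mem_div_sub_one_le hB (I k) (hpos k) (hvar k) hε).trans
      (ENNReal.ofReal_le_ofReal ?_)
    rw [div_mul_div_comm, mul_one]
    gcongr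
    exact hI k
  have hsummable (ε : ℝ) : Summable fun k : ℕ => C / ε ^ 2 * (1 / ((k : ℝ) + 1) ^ 2) := by
    refine Summable.mul_left _ ?_
    exact_mod_cast (summable_nat_add_iff 1).2 (Real.summable_one_div_nat_pow.2 one_lt_two)
  have htsum (ε : ℝ) (hε : 0 < ε) : ∑' k, μ {x | ε ≤
      |(((I k).filter (fun n => x ∈ B n)).card : ℝ) / ∑ n ∈ I k, μ.real (B n) - 1|} ≠ ⊤ := by
    refine ne_top_of_le_ne_top ?_ (ENNReal.tsum_le_tsum (hbound ε hε))
    rw [← ENNReal.ofReal_tsum_of_nonneg (fun k => by positivity) (hsummable ε)]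
    exact ENNReal.ofReal_ne_top
  filter_upwards [ae_tendsto_zero_of_tsum_measure_ne_top htsum] with x hx
  simpa using hx.add_const 1

lemma exists_mem_Icc_add_one_of_tendsto_atTop {E : ℕ → ℝ} (hE : Tendsto E atTop atTop)
    (hstep : ∀ N, E (N + 1) ≤ E N + 1) {t : ℝ} (ht : E 0 ≤ t) : ∃ N, E N ∈ Set.Icc t (t + 1) := by
  have hex : ∃ N, t ≤ E N := (hE.eventually_ge_atTop t).exists
  refine ⟨Nat.find hex, Nat.find_spec hex, ?_⟩
  rcases h : Nat.find hex with _ | N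
  · linarith [h ▸ Nat.find_spec hex]
  · have hN : E N < t := not_le.1 (Nat.find_min hex (h ▸ N.lt_succ_self))
    linarith [hstep N]

lemma exists_strictMono_mem_Icc_sq_of_tendsto_atTop {E : ℕ → ℝ} (hE : Tendsto E atTop atTop)
    (hmono : Monotone E) (hstep : ∀ N, E (N + 1) ≤ E N + 1) (hE0 : E 0 ≤ 1) :
    ∃ n : ℕ → ℕ, StrictMono n ∧
      ∀ k : ℕ, E (n k) ∈ Set.Icc (((k : ℝ) + 1) ^ 2) (((k : ℝ) + 1) ^ 2 + 1) := by
  choose n hn using fun k : ℕ => exists_mem_Icc_add_one_of_tendsto_atTop hE hstep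
    (t := ((k : ℝ) + 1) ^ 2) (hE0.trans (by nlinarith [k.cast_nonneg (α := ℝ)]))
  refine ⟨n, strictMono_nat_of_lt_succ fun k => hmono.reflect_lt ?_, hn⟩
  have h1 := (hn k).2
  have h2 := (hn (k + 1)).1
  push_cast at h2
  nlinarith [k.cast_nonneg (α := ℝ)]

lemma tendsto_succ_div_of_mem_Icc_sq {b : ℕ → ℝ}
    (hb : ∀ k : ℕ, b k ∈ Set.Icc (((k : ℝ) + 1) ^ 2) (((k : ℝ) + 1) ^ 2 + 1)) :
    Tendsto (fun k => b (k + 1) / b k) atTop (𝓝 1) := by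
  have hu : Tendsto (fun k : ℕ => 1 / ((k : ℝ) + 1)) atTop (𝓝 0) :=
    tendsto_one_div_add_atTop_nhds_zero_nat
  have hupper : Tendsto (fun k : ℕ => (1 + 1 / ((k : ℝ) + 1)) ^ 2 + (1 / ((k : ℝ) + 1)) ^ 2)
      atTop (𝓝 1) := by
    simpa using ((hu.const_add 1).pow 2).add (hu.pow 2)
  refine tendsto_of_tendsto_of_tendsto_of_le_of_le tendsto_const_nhds hupper (fun k => ?_)
    (fun k => ?_)
  · have h1 := (hb k).2
    have h2 := (hb (k + 1)).1
    push_cast at h2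
    rw [le_div_iff₀ ((by positivity : (0 : ℝ) < ((k : ℝ) + 1) ^ 2).trans_le (hb k).1), one_mul]
    nlinarith [k.cast_nonneg (α := ℝ)]
  · have hk : (0 : ℝ) < (k : ℝ) + 1 := by positivity
    have h := (hb (k + 1)).2
    push_cast at h
    calc b (k + 1) / b k ≤ (((k : ℝ) + 1 + 1) ^ 2 + 1) / ((k : ℝ) + 1) ^ 2 :=
          div_le_div₀ (by positivity) h (by positivity) (hb k).1
      _ = (1 + 1 / ((k : ℝ) + 1)) ^ 2 + (1 / ((k : ℝ) + 1)) ^ 2 := by field_simp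

lemma StrictMono.exists_tendsto_atTop_mem_Ico {n : ℕ → ℕ} (hn : StrictMono n) :
    ∃ k : ℕ → ℕ, Tendsto k atTop atTop ∧ ∀ N, n 0 ≤ N → N ∈ Set.Ico (n (k N)) (n (k N + 1)) := by
  refine ⟨fun N => Nat.findGreatest (fun k => n k ≤ N) N, ?_, fun N hN => ⟨?_, ?_⟩⟩
  · refine tendsto_atTop_atTop.2 fun k => ⟨n k, fun N hN => ?_⟩
    exact Nat.le_findGreatest ((hn.id_le k).trans hN) hN
  · exact Nat.findGreatest_spec (P := fun k => n k ≤ N) (Nat.zero_le N) hN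
  · by_contra! h
    exact Nat.findGreatest_is_greatest (Nat.lt_succ_self _) ((hn.id_le _).trans h) h

lemma tendsto_div_of_monotone_of_tendsto_div_subseq {a b : ℕ → ℝ} (ha : Monotone a)
    (ha0 : ∀ N, 0 ≤ a N) (hb : Monotone b) {n : ℕ → ℕ} (hn : StrictMono n)
    (hbpos : ∀ k, 0 < b (n k)) (hratio : Tendsto (fun k => b (n (k + 1)) / b (n k)) atTop (𝓝 1))
    (hsub : Tendsto (fun k => a (n k) / b (n k)) atTop (𝓝 1)) :
    Tendsto (fun N => a N / b N) atTop (𝓝 1) := by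
  obtain ⟨k, hk, hbracket⟩ := hn.exists_tendsto_atTop_mem_Ico
  have hlower : Tendsto (fun j => a (n j) / b (n (j + 1))) atTop (𝓝 1) := by
    have h := hsub.div hratio one_ne_zero
    rw [div_one] at h
    exact h.congr fun j => div_div_div_cancel_right₀ (hbpos j).ne' _ _
  have hupper : Tendsto (fun j => a (n (j + 1)) / b (n j)) atTop (𝓝 1) := by
    have h := ((tendsto_add_atTop_iff_nat 1).2 hsub).mul hratio
    rw [one_mul] at h
    exact h.congr fun j => div_mul_div_cancel₀ (hbpos (j + 1)).ne'
  refine tendsto_of_tendsto_of_tendsto_of_le_of_le' (hlower.comp hk) (hupper.comp hk) ?_ ?_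
  · filter_upwards [eventually_ge_atTop (n 0)] with N hN
    obtain ⟨h1, h2⟩ := hbracket N hN
    have hbN : 0 < b N := (hbpos _).trans_le (hb h1)
    exact div_le_div₀ (ha0 N) (ha h1) hbN (hb h2.le)
  · filter_upwards [eventually_ge_atTop (n 0)] with N hN
    obtain ⟨h1, h2⟩ := hbracket N hN
    exact div_le_div₀ (ha0 _) (ha h2.le) (hbpos _) (hb h1)

/-- **Schmidt–Sprindžuk lemma (Theorem 1.4).**
If `(B n)` are measurable subsets of a probability space with divergent sum of
measures, satisfying the (SP) correlation condition, then for a.e. `x` the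
counting function `S_N(x) = #{1 ≤ n ≤ N : x ∈ B n}` satisfies `S_N/E_N → 1`,
where `E_N = ∑_{n=1}^N μ(B n)`. -/
theorem schmidt_sprindzuk
    {X : Type*} [MeasurableSpace X] (μ : Measure X) [IsProbabilityMeasure μ]
    (B : ℕ → Set X) (hBmeas : ∀ n, MeasurableSet (B n))
    (hdiv : Tendsto (fun N : ℕ => ∑ n ∈ Finset.Icc 1 N, (μ (B n)).toReal) atTop atTop)
    (C : ℝ) (hC : 0 < C)
    (hSP : ∀ M N : ℕ, 1 ≤ M → M ≤ N →
      ∑ m ∈ Finset.Icc M N, ∑ n ∈ Finset.Icc M N,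
        ((μ (B m ∩ B n)).toReal - (μ (B m)).toReal * (μ (B n)).toReal)
      ≤ C * ∑ n ∈ Finset.Icc M N, (μ (B n)).toReal) :
    ∀ᵐ x ∂μ, Tendsto
      (fun N : ℕ => (((Finset.Icc 1 N).filter (fun n => x ∈ B n)).card : ℝ) /
        ∑ n ∈ Finset.Icc 1 N, (μ (B n)).toReal) atTop (nhds 1) := by
  set E : ℕ → ℝ := fun N => ∑ n ∈ Icc 1 N, μ.real (B n)
  have hEmono : Monotone E := fun N N' h =>
    sum_le_sum_of_subset_of_nonneg (Icc_subset_Icc_right h) fun _ _ _ => measureReal_nonneg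
  have hEstep (N : ℕ) : E (N + 1) ≤ E N + 1 := by
    simp only [E, sum_Icc_succ_top (Nat.le_add_left 1 N)]
    linarith [measureReal_le_one (μ := μ) (s := B (N + 1))]
  obtain ⟨n, hn, hnE⟩ := exists_strictMono_mem_Icc_sq_of_tendsto_atTop hdiv hEmono hEstep
    (by simp)
  have hvar (N : ℕ) := N.eq_zero_or_pos.elim (fun h => by simp [h]) (hSP 1 N le_rfl)
  filter_upwards [ae_tendsto_card_filter_mem_div_of_sq_le hBmeas (fun k => Icc 1 (n k))
    (fun k => (hnE k).1) hC.le fun k => hvar (n k)] with x hx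
  refine tendsto_div_of_monotone_of_tendsto_div_subseq (fun N N' h => ?_) (fun N => by positivity)
    hEmono hn (fun k => (by positivity : (0 : ℝ) < ((k : ℝ) + 1) ^ 2).trans_le (hnE k).1)
    (tendsto_succ_div_of_mem_Icc_sq hnE) hx
  gcongr
end

section
/- (Quantitative Schmidt–Sprindžuk lemma, Theorem 1.4, estimate (1.1).) Let (X, μ) be a probability space and (B_n)_{n≥1} measurable subsets of X with ∑_{n=1}^∞ μ(B_n) = ∞, and suppose there exists C > 0 such that ∑_{m,n=M}^N ( μ(B_m ∩ B_n) − μ(B_m)μ(B_n) ) ≤ C·∑_{n=M}^N μ(B_n) for all integers 1 ≤ M ≤ N. Then for every ε > 0 and for μ-almost every x ∈ X there exists a constant K = K(x, ε) > 0 such that |S_N(x) − E_N| ≤ K·E_N^{1/2}·(log E_N)^{3/2+ε} for all N with E_N ≥ 2, where S_N(x) = #{1 ≤ n ≤ N : x ∈ B_n} and E_N = ∑_{n=1}^N μ(B_n). -/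
/-!
Write `Z_N = S_N - E_N`; condition (SP) says `∫ (Z_b - Z_a)² ≤ C (E_b - E_a)`. Let `τ t` be the
first `N` with `t ≤ E_N`; since `μ (B n) ≤ 1`, `E_{τ t} ∈ [t, t + 1]`. Inside the block
`2^k ≤ t ≤ 2^(k+1)`, dyadic chaining (Rademacher–Menshov) bounds every `|Z_{τ t} - Z_{τ 2^k}|` by
`√((k + 1) V_k)`, where `V_k` is the sum over the `k + 1` dyadic levels of the squared increments,
and `∫ V_k ≤ 2C (k + 1) 2^k`. As `∑ ∫ V_k / (2^k (k + 1)^(2+2ε)) < ∞`, almost surely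
`V_k = O(2^k (k + 1)^(2+2ε))`, so block `k` contributes `O(2^(k/2) k^(3/2+ε))`. Between consecutive
`τ t` the monotonicity of `S_N` costs at most `2`, and the geometric series over the blocks up to
`2^k ≈ E_N` gives the bound.
-/

open MeasureTheory Filter Finset

section DyadicChaining

def dyadicLevelSqSum (g : ℕ → ℝ) (k j : ℕ) : ℝ :=
  ∑ p ∈ range (2 ^ j), (g ((p + 1) * 2 ^ (k - j)) - g (p * 2 ^ (k - j))) ^ 2

def dyadicSqVariation (g : ℕ → ℝ) (k : ℕ) : ℝ :=
  ∑ j ∈ range (k + 1), dyadicLevelSqSum g k j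

lemma dyadicLevelSqSum_nonneg (g : ℕ → ℝ) (k j : ℕ) : 0 ≤ dyadicLevelSqSum g k j :=
  sum_nonneg fun _ _ => sq_nonneg _

lemma dyadicSqVariation_nonneg (g : ℕ → ℝ) (k : ℕ) : 0 ≤ dyadicSqVariation g k :=
  sum_nonneg fun j _ => dyadicLevelSqSum_nonneg g k j

lemma abs_sub_le_sqrt_dyadicLevelSqSum (g : ℕ → ℝ) (k : ℕ) {j p : ℕ} (hp : p < 2 ^ j) :
    |g ((p + 1) * 2 ^ (k - j)) - g (p * 2 ^ (k - j))| ≤ √(dyadicLevelSqSum g k j) :=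
  Real.abs_le_sqrt <| single_le_sum
    (f := fun q => (g ((q + 1) * 2 ^ (k - j)) - g (q * 2 ^ (k - j))) ^ 2)
    (fun _ _ => sq_nonneg _) (mem_range.2 hp)

lemma abs_sub_le_sum_sqrt_dyadicLevelSqSum (g : ℕ → ℝ) {k j : ℕ} (hj : j ≤ k) {p : ℕ}
    (hp : p ≤ 2 ^ j) :
    |g (p * 2 ^ (k - j)) - g 0| ≤ ∑ l ∈ range (j + 1), √(dyadicLevelSqSum g k l) := by
  induction j generalizing p with
  | zero =>
    interval_cases p
    · simp
    · simpa using abs_sub_le_sqrt_dyadicLevelSqSum g k (j := 0) (p := 0) one_pos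
  | succ j ih =>
    have h2j : 2 ^ (j + 1) = 2 * 2 ^ j := pow_succ' 2 j
    have hmesh (q : ℕ) : 2 * q * 2 ^ (k - (j + 1)) = q * 2 ^ (k - j) := by
      rw [show k - j = k - (j + 1) + 1 by omega, pow_succ]; ring
    rw [sum_range_succ]
    obtain ⟨q, rfl | rfl⟩ := Nat.even_or_odd' p
    · rw [hmesh]
      exact (ih (by omega) (by omega)).trans (le_add_of_nonneg_right (Real.sqrt_nonneg _))
    · calc |g ((2 * q + 1) * 2 ^ (k - (j + 1))) - g 0|
          ≤ |g ((2 * q + 1) * 2 ^ (k - (j + 1))) - g (2 * q * 2 ^ (k - (j + 1)))|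
            + |g (2 * q * 2 ^ (k - (j + 1))) - g 0| := abs_sub_le _ _ _
        _ ≤ √(dyadicLevelSqSum g k (j + 1)) + ∑ l ∈ range (j + 1), √(dyadicLevelSqSum g k l) := by
          gcongr
          · exact abs_sub_le_sqrt_dyadicLevelSqSum g k (by omega)
          · rw [hmesh]; exact ih (by omega) (by omega)
        _ = _ := add_comm _ _

lemma abs_sub_le_sqrt_dyadicSqVariation (g : ℕ → ℝ) {k m : ℕ} (hm : m ≤ 2 ^ k) :
    |g m - g 0| ≤ √((k + 1) * dyadicSqVariation g k) := by
  have hchain := abs_sub_le_sum_sqrt_dyadicLevelSqSum g le_rfl hm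
  rw [Nat.sub_self, pow_zero, mul_one] at hchain
  refine hchain.trans (Real.le_sqrt_of_sq_le ?_)
  calc (∑ l ∈ range (k + 1), √(dyadicLevelSqSum g k l)) ^ 2
      ≤ #(range (k + 1)) * ∑ l ∈ range (k + 1), √(dyadicLevelSqSum g k l) ^ 2 :=
        sq_sum_le_card_mul_sum_sq
    _ = (k + 1) * dyadicSqVariation g k := by
      simp [dyadicSqVariation, Real.sq_sqrt (dyadicLevelSqSum_nonneg g k _)]

end DyadicChaining

section HittingIndex

variable {E : ℕ → ℝ} (hE : Tendsto E atTop atTop)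

noncomputable def hittingIndex (t : ℝ) : ℕ :=
  Nat.find (hE.eventually_ge_atTop t).exists

lemma le_apply_hittingIndex (t : ℝ) : t ≤ E (hittingIndex hE t) :=
  Nat.find_spec (hE.eventually_ge_atTop t).exists

lemma hittingIndex_le_iff (hmono : Monotone E) {t : ℝ} {N : ℕ} :
    hittingIndex hE t ≤ N ↔ t ≤ E N :=
  ⟨fun h => (le_apply_hittingIndex hE t).trans (hmono h), fun h => Nat.find_le h⟩

lemma hittingIndex_mono (hmono : Monotone E) : Monotone (hittingIndex hE) :=
  fun _ t hst => (hittingIndex_le_iff hE hmono).2 (hst.trans (le_apply_hittingIndex hE t))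

lemma apply_hittingIndex_le (h0 : E 0 = 0) (hstep : ∀ n, E (n + 1) ≤ E n + 1) {t : ℝ}
    (ht : 0 ≤ t) : E (hittingIndex hE t) ≤ t + 1 := by
  rcases h : hittingIndex hE t with _ | n
  · linarith
  · have hmiss : ¬ t ≤ E n := Nat.find_min (hE.eventually_ge_atTop t).exists
      (show n < hittingIndex hE t by omega)
    linarith [hstep n, not_le.1 hmiss]

end HittingIndex

lemma abs_sub_le_abs_sub_add_of_monotone_add {z e : ℕ → ℝ} (he : Monotone e)
    (hze : Monotone fun n => z n + e n) {a n b : ℕ} (han : a ≤ n) (hnb : n ≤ b) :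
    |z n - z a| ≤ |z b - z a| + (e b - e a) := by
  have h₁ := hze han
  have h₂ := hze hnb
  have h₃ := he han
  have h₄ := he hnb
  rw [abs_le]
  constructor <;> linarith [le_abs_self (z b - z a), neg_abs_le (z b - z a)]

lemma sum_integral_sq_sub_le {X : Type*} [MeasurableSpace X] {μ : Measure X} {E : ℕ → ℝ}
    {Z : ℕ → X → ℝ} {C : ℝ}
    (hZ_var : ∀ a b, a ≤ b → ∫ x, (Z b x - Z a x) ^ 2 ∂μ ≤ C * (E b - E a))
    {n : ℕ → ℕ} (hn : Monotone n) (P : ℕ) :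
    ∑ p ∈ range P, ∫ x, (Z (n (p + 1)) x - Z (n p) x) ^ 2 ∂μ ≤ C * (E (n P) - E (n 0)) :=
  calc ∑ p ∈ range P, ∫ x, (Z (n (p + 1)) x - Z (n p) x) ^ 2 ∂μ
      ≤ ∑ p ∈ range P, C * (E (n (p + 1)) - E (n p)) :=
        sum_le_sum fun p _ => hZ_var _ _ (hn p.le_succ)
    _ = C * (E (n P) - E (n 0)) := by rw [← mul_sum, sum_range_sub (fun p => E (n p))]

section BlockVariation

variable {X : Type*} {E : ℕ → ℝ} {Z : ℕ → X → ℝ} {C : ℝ} (hE : Tendsto E atTop atTop)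

noncomputable def blockSqVariation (Z : ℕ → X → ℝ) (k : ℕ) (x : X) : ℝ :=
  dyadicSqVariation (fun m => Z (hittingIndex hE ((2 ^ k + m : ℕ) : ℝ)) x) k

lemma blockSqVariation_nonneg (k : ℕ) (x : X) : 0 ≤ blockSqVariation hE Z k x :=
  dyadicSqVariation_nonneg _ k

lemma abs_sub_le_sqrt_blockSqVariation (k : ℕ) (x : X) {m : ℕ} (hm : m ≤ 2 ^ k) :
    |Z (hittingIndex hE ((2 ^ k + m : ℕ) : ℝ)) x - Z (hittingIndex hE ((2 ^ k : ℕ) : ℝ)) x|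
      ≤ √((k + 1) * blockSqVariation hE Z k x) :=
  abs_sub_le_sqrt_dyadicSqVariation (fun m => Z (hittingIndex hE ((2 ^ k + m : ℕ) : ℝ)) x) hm

variable (hmono : Monotone E)
include hmono

lemma monotone_hittingIndex_dyadicPoint (k j : ℕ) :
    Monotone fun p : ℕ => hittingIndex hE ((2 ^ k + p * 2 ^ (k - j) : ℕ) : ℝ) :=
  (hittingIndex_mono hE hmono).comp fun p q hpq => by gcongr

variable [MeasurableSpace X] {μ : Measure X}

lemma integrable_dyadicLevelSqSum
    (hZ_int : ∀ a b, a ≤ b → Integrable (fun x => (Z b x - Z a x) ^ 2) μ) (k j : ℕ) :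
    Integrable (fun x => dyadicLevelSqSum
      (fun m => Z (hittingIndex hE ((2 ^ k + m : ℕ) : ℝ)) x) k j) μ :=
  integrable_finsetSum _ fun p _ =>
    hZ_int _ _ (monotone_hittingIndex_dyadicPoint hE hmono k j p.le_succ)

lemma integrable_blockSqVariation
    (hZ_int : ∀ a b, a ≤ b → Integrable (fun x => (Z b x - Z a x) ^ 2) μ) (k : ℕ) :
    Integrable (blockSqVariation hE Z k) μ := by
  unfold blockSqVariation dyadicSqVariation
  exact integrable_finsetSum _ fun j _ => integrable_dyadicLevelSqSum hE hmono hZ_int k j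

lemma integral_blockSqVariation_le (h0 : E 0 = 0) (hstep : ∀ n, E (n + 1) ≤ E n + 1)
    (hC : 0 ≤ C) (hZ_int : ∀ a b, a ≤ b → Integrable (fun x => (Z b x - Z a x) ^ 2) μ)
    (hZ_var : ∀ a b, a ≤ b → ∫ x, (Z b x - Z a x) ^ 2 ∂μ ≤ C * (E b - E a)) (k : ℕ) :
    ∫ x, blockSqVariation hE Z k x ∂μ ≤ 2 * C * (k + 1) * 2 ^ k := by
  have hblock : E (hittingIndex hE ((2 ^ (k + 1) : ℕ) : ℝ))
      - E (hittingIndex hE ((2 ^ k : ℕ) : ℝ)) ≤ 2 ^ k + 1 := by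
    have h₁ := apply_hittingIndex_le hE h0 hstep (Nat.cast_nonneg (2 ^ (k + 1)))
    have h₂ := le_apply_hittingIndex hE ((2 ^ k : ℕ) : ℝ)
    push_cast at h₁ h₂ ⊢
    linarith [pow_succ (2 : ℝ) k]
  have hlevel : ∀ j ∈ range (k + 1), ∫ x, dyadicLevelSqSum
      (fun m => Z (hittingIndex hE ((2 ^ k + m : ℕ) : ℝ)) x) k j ∂μ ≤ C * (2 ^ k + 1) := by
    intro j hj
    have hjk : 2 ^ k + 2 ^ j * 2 ^ (k - j) = 2 ^ (k + 1) := by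
      rw [← pow_add, Nat.add_sub_cancel' (Nat.lt_succ_iff.1 (mem_range.1 hj)), pow_succ]
      ring
    simp only [dyadicLevelSqSum]
    rw [integral_finsetSum _ fun p _ =>
      hZ_int _ _ (monotone_hittingIndex_dyadicPoint hE hmono k j p.le_succ)]
    refine (sum_integral_sq_sub_le hZ_var (monotone_hittingIndex_dyadicPoint hE hmono k j)
      (2 ^ j)).trans ?_
    simp only [hjk, zero_mul, add_zero]
    exact mul_le_mul_of_nonneg_left hblock hC
  calc ∫ x, blockSqVariation hE Z k x ∂μ
      = ∑ j ∈ range (k + 1), ∫ x, dyadicLevelSqSum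
          (fun m => Z (hittingIndex hE ((2 ^ k + m : ℕ) : ℝ)) x) k j ∂μ := by
        unfold blockSqVariation dyadicSqVariation
        exact integral_finsetSum _ fun j _ => integrable_dyadicLevelSqSum hE hmono hZ_int k j
    _ ≤ ∑ j ∈ range (k + 1), C * (2 ^ k + 1) := sum_le_sum hlevel
    _ ≤ 2 * C * (k + 1) * 2 ^ k := by
      rw [sum_const, card_range, nsmul_eq_mul]
      push_cast
      nlinarith [one_le_pow₀ (M₀ := ℝ) (n := k) one_le_two, mul_nonneg hC (k.cast_nonneg (α := ℝ))]

end BlockVariation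

section BlockChaining

variable {X : Type*} {E : ℕ → ℝ} {Z : ℕ → X → ℝ} (hE : Tendsto E atTop atTop)

lemma abs_sub_hittingIndex_two_pow_le (x : X) (k : ℕ) :
    |Z (hittingIndex hE ((2 ^ k : ℕ) : ℝ)) x - Z (hittingIndex hE 1) x|
      ≤ ∑ i ∈ range k, √((i + 1) * blockSqVariation hE Z i x) := by
  induction k with
  | zero => simp
  | succ k ih =>
    have hblock := abs_sub_le_sqrt_blockSqVariation hE (Z := Z) k x le_rfl
    rw [← two_mul, ← pow_succ'] at hblock
    rw [sum_range_succ]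
    linarith [abs_sub_le (Z (hittingIndex hE ((2 ^ (k + 1) : ℕ) : ℝ)) x)
      (Z (hittingIndex hE ((2 ^ k : ℕ) : ℝ)) x) (Z (hittingIndex hE 1) x)]

lemma abs_sub_hittingIndex_one_le (hmono : Monotone E) (h0 : E 0 = 0)
    (hstep : ∀ n, E (n + 1) ≤ E n + 1) (x : X) (hZE : Monotone fun N => Z N x + E N)
    {N : ℕ} (hN : 1 ≤ E N) :
    |Z N x - Z (hittingIndex hE 1) x|
      ≤ 3 * ∑ i ∈ range (Nat.log 2 ⌊E N⌋₊ + 1), √((i + 1) * blockSqVariation hE Z i x) + 2 := by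
  set t := ⌊E N⌋₊
  set k := Nat.log 2 t
  set τ := hittingIndex hE
  have ht1 : 1 ≤ t := Nat.le_floor (by simpa using hN)
  have hkt : 2 ^ k ≤ t := Nat.pow_log_le_self 2 (by omega)
  have htk : t < 2 ^ (k + 1) := Nat.lt_pow_succ_log_self one_lt_two t
  have hτt : τ t ≤ N := (hittingIndex_le_iff hE hmono).2 (Nat.floor_le (by linarith))
  have hNτ : N ≤ τ (t + 1 : ℕ) := by
    refine le_of_lt (lt_of_not_ge fun h => ?_)
    have := (hittingIndex_le_iff hE hmono).1 h
    push_cast at this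
    linarith [Nat.lt_floor_add_one (E N)]
  have hgap : E (τ (t + 1 : ℕ)) - E (τ t) ≤ 2 := by
    have h₁ := apply_hittingIndex_le hE h0 hstep (Nat.cast_nonneg (t + 1))
    have h₂ := le_apply_hittingIndex hE t
    push_cast at h₁ ⊢
    linarith
  have hsandwich := abs_sub_le_abs_sub_add_of_monotone_add hmono hZE hτt hNτ
  have hW₁ := abs_sub_le_sqrt_blockSqVariation hE (Z := Z) k x (m := t - 2 ^ k) (by
    rw [pow_succ] at htk; omega)
  have hW₂ := abs_sub_le_sqrt_blockSqVariation hE (Z := Z) k x (m := t - 2 ^ k + 1) (by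
    rw [pow_succ] at htk; omega)
  rw [show 2 ^ k + (t - 2 ^ k) = t by omega] at hW₁
  rw [show 2 ^ k + (t - 2 ^ k + 1) = t + 1 by omega] at hW₂
  have htel := abs_sub_hittingIndex_two_pow_le hE (Z := Z) x k
  rw [sum_range_succ]
  -- split `Z N - Z (τ 1)` at `τ t` and `τ (2 ^ k)`; the step from `τ t` to `N` is sandwiched
  -- between `τ t` and `τ (t + 1)`, which both lie in block `k`
  linarith [abs_sub_le (Z N x) (Z (τ t) x) (Z (τ 1) x),
    abs_sub_le (Z (τ t) x) (Z (τ (2 ^ k : ℕ)) x) (Z (τ 1) x),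
    abs_sub_le (Z (τ (t + 1 : ℕ)) x) (Z (τ (2 ^ k : ℕ)) x) (Z (τ t) x),
    abs_sub_comm (Z (τ (2 ^ k : ℕ)) x) (Z (τ t) x),
    sum_nonneg fun i (_ : i ∈ range k) => Real.sqrt_nonneg ((i + 1) * blockSqVariation hE Z i x)]

end BlockChaining

lemma ae_bddAbove_of_summable_integral {X : Type*} [MeasurableSpace X] {μ : Measure X}
    {f : ℕ → X → ℝ} (hf : ∀ k, 0 ≤ᵐ[μ] f k) (hf_int : ∀ k, Integrable (f k) μ)
    (hsum : Summable fun k => ∫ x, f k x ∂μ) :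
    ∀ᵐ x ∂μ, BddAbove (Set.range fun k => f k x) := by
  have hmeas (k : ℕ) : AEMeasurable (fun x => ENNReal.ofReal (f k x)) μ :=
    (hf_int k).aemeasurable.ennreal_ofReal
  have hfin : ∫⁻ x, ∑' k, ENNReal.ofReal (f k x) ∂μ ≠ ⊤ := by
    rw [lintegral_tsum hmeas]
    simp_rw [← ofReal_integral_eq_lintegral_ofReal (hf_int _) (hf _)]
    rw [← ENNReal.ofReal_tsum_of_nonneg (fun k => integral_nonneg_of_ae (hf k)) hsum]
    exact ENNReal.ofReal_ne_top
  filter_upwards [ae_lt_top' (AEMeasurable.tsum hmeas) hfin] with x hx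
  refine ⟨(∑' k, ENNReal.ofReal (f k x)).toReal, ?_⟩
  rintro _ ⟨k, rfl⟩
  calc f k x ≤ (ENNReal.ofReal (f k x)).toReal := by
        rw [ENNReal.toReal_ofReal']; exact le_max_left _ _
    _ ≤ (∑' k, ENNReal.ofReal (f k x)).toReal := ENNReal.toReal_mono hx.ne (ENNReal.le_tsum k)

lemma sum_range_sqrt_two_pow_le (k : ℕ) : ∑ i ∈ range (k + 1), √(2 ^ i : ℝ) ≤ 4 * √(2 ^ k) := by
  induction k with
  | zero => norm_num
  | succ k ih =>
    have hsqrt2 : (4 : ℝ) ≤ 3 * √2 := by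
      nlinarith [Real.sq_sqrt (show (0 : ℝ) ≤ 2 by norm_num), Real.sqrt_nonneg 2]
    rw [sum_range_succ, pow_succ, Real.sqrt_mul (by positivity)]
    nlinarith [Real.sqrt_nonneg (2 ^ k : ℝ)]

lemma sum_range_sqrt_two_pow_mul_le {L : ℕ → ℝ} (hL : Monotone L) {k : ℕ} (hLk : 0 ≤ L k) :
    ∑ i ∈ range (k + 1), √(2 ^ i : ℝ) * L i ≤ 4 * √(2 ^ k) * L k :=
  calc ∑ i ∈ range (k + 1), √(2 ^ i : ℝ) * L i
      ≤ ∑ i ∈ range (k + 1), √(2 ^ i : ℝ) * L k :=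
        sum_le_sum fun i hi => mul_le_mul_of_nonneg_left
          (hL (Nat.lt_succ_iff.1 (mem_range.1 hi))) (Real.sqrt_nonneg _)
    _ ≤ 4 * √(2 ^ k) * L k := by
      rw [← sum_mul]; exact mul_le_mul_of_nonneg_right (sum_range_sqrt_two_pow_le k) hLk

lemma two_pow_natLog_floor_le {y : ℝ} (hy : 1 ≤ y) : (2 : ℝ) ^ Nat.log 2 ⌊y⌋₊ ≤ y := by
  have h := Nat.pow_log_le_self 2 (Nat.one_le_iff_ne_zero.1 (Nat.one_le_floor_iff y |>.2 hy))
  calc (2 : ℝ) ^ Nat.log 2 ⌊y⌋₊ ≤ ⌊y⌋₊ := by exact_mod_cast h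
    _ ≤ y := Nat.floor_le (by linarith)

lemma natLog_floor_add_one_le {y : ℝ} (hy : 2 ≤ y) :
    (Nat.log 2 ⌊y⌋₊ + 1 : ℝ) ≤ 2 / Real.log 2 * Real.log y := by
  have hk : 1 ≤ Nat.log 2 ⌊y⌋₊ := Nat.log_pos one_lt_two (Nat.le_floor (by simpa using hy))
  have hlog : Nat.log 2 ⌊y⌋₊ * Real.log 2 ≤ Real.log y := by
    rw [← Real.log_pow]
    exact Real.log_le_log (by positivity) (two_pow_natLog_floor_le (by linarith))
  have hlog2 : 0 < Real.log 2 := Real.log_pos one_lt_two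
  rw [div_mul_eq_mul_div, le_div_iff₀ hlog2]
  have : (1 : ℝ) ≤ Nat.log 2 ⌊y⌋₊ := by exact_mod_cast hk
  nlinarith

section QuantitativeLaw

variable {X : Type*} [MeasurableSpace X] {μ : Measure X} {E : ℕ → ℝ} {Z : ℕ → X → ℝ} {C : ℝ}
  (hE : Tendsto E atTop atTop) (hmono : Monotone E) (h0 : E 0 = 0)
  (hstep : ∀ n, E (n + 1) ≤ E n + 1) (hC : 0 ≤ C)
  (hZ_int : ∀ a b, a ≤ b → Integrable (fun x => (Z b x - Z a x) ^ 2) μ)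
  (hZ_var : ∀ a b, a ≤ b → ∫ x, (Z b x - Z a x) ^ 2 ∂μ ≤ C * (E b - E a))
include hE hmono h0 hstep hC hZ_int hZ_var

lemma ae_exists_sqrt_blockSqVariation_le {ε : ℝ} (hε : 0 < ε) :
    ∀ᵐ x ∂μ, ∃ c, 0 ≤ c ∧ ∀ i : ℕ, √((i + 1) * blockSqVariation hE Z i x)
      ≤ c * (√(2 ^ i) * ((i : ℝ) + 1) ^ ((3 : ℝ) / 2 + ε)) := by
  have hL_sq (i : ℕ) : (((i : ℝ) + 1) ^ ((3 : ℝ) / 2 + ε)) ^ 2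
      = ((i : ℝ) + 1) ^ 2 * ((i : ℝ) + 1) ^ (1 + 2 * ε) := by
    rw [← Real.rpow_natCast, ← Real.rpow_mul (by positivity), ← Real.rpow_natCast,
      ← Real.rpow_add (by positivity)]
    congr 1
    push_cast
    ring
  -- `a i` makes `∫ V_i / a i ≤ 2C / (i + 1) ^ (1 + 2ε)` summable while `√((i + 1) a i)` is the
  -- target size `√(2 ^ i) (i + 1) ^ (3/2 + ε)` of block `i`.
  let a (i : ℕ) : ℝ := 2 ^ i * (((i : ℝ) + 1) ^ ((3 : ℝ) / 2 + ε)) ^ 2 / (i + 1)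
  have ha (i : ℕ) : 0 < a i := by positivity
  have hsum : Summable fun i => ∫ x, blockSqVariation hE Z i x / a i ∂μ := by
    refine Summable.of_nonneg_of_le
      (fun i => integral_nonneg fun x => div_nonneg (blockSqVariation_nonneg hE i x) (ha i).le)
      (fun i => ?_)
      (((Real.summable_one_div_nat_add_rpow 1 (1 + 2 * ε)).2 (by linarith)).mul_left (2 * C))
    rw [integral_div, div_le_iff₀ (ha i)]
    refine (integral_blockSqVariation_le hE hmono h0 hstep hC hZ_int hZ_var i).trans_eq ?_
    have : |(i : ℝ) + 1| = i + 1 := abs_of_pos (by positivity)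
    simp only [a, hL_sq, this]
    field_simp
  filter_upwards [ae_bddAbove_of_summable_integral
    (fun i => Eventually.of_forall fun x => div_nonneg (blockSqVariation_nonneg hE i x) (ha i).le)
    (fun i => (integrable_blockSqVariation hE hmono hZ_int i).div_const (a i)) hsum]
    with x ⟨c, hc⟩
  refine ⟨√c, Real.sqrt_nonneg c, fun i => ?_⟩
  have hVc : blockSqVariation hE Z i x ≤ c * a i := (div_le_iff₀ (ha i)).1 (hc ⟨i, rfl⟩)
  calc √((i + 1) * blockSqVariation hE Z i x)
      ≤ √(c * (2 ^ i * (((i : ℝ) + 1) ^ ((3 : ℝ) / 2 + ε)) ^ 2)) := by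
        refine Real.sqrt_le_sqrt ((mul_le_mul_of_nonneg_left hVc (by positivity)).trans_eq ?_)
        simp only [a]
        field_simp
    _ = √c * (√(2 ^ i) * ((i : ℝ) + 1) ^ ((3 : ℝ) / 2 + ε)) := by
      rw [Real.sqrt_mul' _ (by positivity), Real.sqrt_mul (by positivity),
        Real.sqrt_sq (by positivity)]

theorem ae_abs_le_mul_sqrt_mul_log_rpow (hZE : ∀ x, Monotone fun N => Z N x + E N)
    {ε : ℝ} (hε : 0 < ε) :
    ∀ᵐ x ∂μ, ∃ K, 0 < K ∧ ∀ N, 2 ≤ E N →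
      |Z N x| ≤ K * E N ^ ((1 : ℝ) / 2) * Real.log (E N) ^ ((3 : ℝ) / 2 + ε) := by
  filter_upwards [ae_exists_sqrt_blockSqVariation_le hE hmono h0 hstep hC hZ_int hZ_var hε]
    with x ⟨c, hc0, hc⟩
  set L : ℕ → ℝ := fun i => ((i : ℝ) + 1) ^ ((3 : ℝ) / 2 + ε)
  have hL : Monotone L := fun i j hij => by
    simp only [L]; gcongr
  have hL1 (i : ℕ) : 1 ≤ L i := Real.one_le_rpow (by simp) (by positivity)
  set K₀ := |Z (hittingIndex hE 1) x| + 12 * c + 2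
  refine ⟨K₀ * (2 / Real.log 2) ^ ((3 : ℝ) / 2 + ε), by positivity, fun N hN => ?_⟩
  set k := Nat.log 2 ⌊E N⌋₊
  have hchain := abs_sub_hittingIndex_one_le hE hmono h0 hstep x (hZE x) (by linarith)
  have hW : ∑ i ∈ range (k + 1), √((i + 1) * blockSqVariation hE Z i x)
      ≤ c * (4 * √(2 ^ k) * L k) :=
    (sum_le_sum fun i _ => hc i).trans <| by
      rw [← mul_sum]
      exact mul_le_mul_of_nonneg_left
        (sum_range_sqrt_two_pow_mul_le hL (zero_le_one.trans (hL1 k))) hc0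
  have hGL : 1 ≤ √(2 ^ k) * L k :=
    one_le_mul_of_one_le_of_one_le (Real.one_le_sqrt.2 (one_le_pow₀ one_le_two)) (hL1 k)
  have hG : √(2 ^ k) ≤ E N ^ ((1 : ℝ) / 2) := by
    rw [← Real.sqrt_eq_rpow]
    exact Real.sqrt_le_sqrt (two_pow_natLog_floor_le (by linarith))
  have hLk : L k ≤ (2 / Real.log 2) ^ ((3 : ℝ) / 2 + ε) * Real.log (E N) ^ ((3 : ℝ) / 2 + ε) := by
    rw [← Real.mul_rpow (by positivity) (Real.log_nonneg (by linarith))]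
    exact Real.rpow_le_rpow (by positivity) (natLog_floor_add_one_le hN) (by positivity)
  calc |Z N x| ≤ |Z (hittingIndex hE 1) x| + |Z N x - Z (hittingIndex hE 1) x| := by
        linarith [abs_sub_abs_le_abs_sub (Z N x) (Z (hittingIndex hE 1) x)]
    _ ≤ K₀ * (√(2 ^ k) * L k) := by
        nlinarith [abs_nonneg (Z (hittingIndex hE 1) x)]
    _ ≤ K₀ * (E N ^ ((1 : ℝ) / 2) *
          ((2 / Real.log 2) ^ ((3 : ℝ) / 2 + ε) * Real.log (E N) ^ ((3 : ℝ) / 2 + ε))) := by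
        gcongr
    _ = K₀ * (2 / Real.log 2) ^ ((3 : ℝ) / 2 + ε) * E N ^ ((1 : ℝ) / 2)
          * Real.log (E N) ^ ((3 : ℝ) / 2 + ε) := by ring

end QuantitativeLaw

section CenteredIndicators

variable {X : Type*} {s t : Set X}

lemma indicator_sub_mul_indicator_sub (a b : ℝ) :
    (fun x => (s.indicator 1 x - a) * (t.indicator 1 x - b))
      = fun x => (s ∩ t).indicator 1 x - b * s.indicator 1 x - a * t.indicator 1 x + a * b := by
  ext x
  rw [Set.inter_indicator_one]
  simp only [Pi.mul_apply]
  ring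

variable [MeasurableSpace X] {μ : Measure X}

lemma integrable_indicator_sub_mul_indicator_sub [IsFiniteMeasure μ] (hs : MeasurableSet s)
    (ht : MeasurableSet t) (a b : ℝ) :
    Integrable (fun x => (s.indicator 1 x - a) * (t.indicator 1 x - b)) μ := by
  rw [indicator_sub_mul_indicator_sub]
  have hind {u : Set X} (hu : MeasurableSet u) : Integrable (u.indicator (1 : X → ℝ)) μ :=
    (integrable_const 1).indicator hu
  exact ((((hind (hs.inter ht)).sub ((hind hs).const_mul b)).sub ((hind ht).const_mul a)).add
    (integrable_const _))

lemma integral_indicator_sub_mul_indicator_sub [IsProbabilityMeasure μ] (hs : MeasurableSet s)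
    (ht : MeasurableSet t) :
    ∫ x, (s.indicator 1 x - μ.real s) * (t.indicator 1 x - μ.real t) ∂μ
      = μ.real (s ∩ t) - μ.real s * μ.real t := by
  have hind {u : Set X} (hu : MeasurableSet u) : Integrable (u.indicator (1 : X → ℝ)) μ :=
    (integrable_const 1).indicator hu
  have h₁ := hind (hs.inter ht)
  have h₂ := (hind hs).const_mul (μ.real t)
  have h₃ := (hind ht).const_mul (μ.real s)
  rw [indicator_sub_mul_indicator_sub, integral_add ?_ (integrable_const _), integral_sub ?_ h₃,
    integral_sub h₁ h₂, integral_const_mul, integral_const_mul,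
    integral_indicator_one (hs.inter ht), integral_indicator_one hs, integral_indicator_one ht,
    integral_const, probReal_univ, one_smul]
  · ring
  · exact h₁.sub h₂
  · exact (h₁.sub h₂).sub h₃

variable {ι : Type*} {B : ι → Set X}

lemma integrable_sq_sum_indicator_sub [IsFiniteMeasure μ] (hB : ∀ i, MeasurableSet (B i))
    (S : Finset ι) (a : ι → ℝ) :
    Integrable (fun x => (∑ n ∈ S, ((B n).indicator 1 x - a n)) ^ 2) μ := by
  simp_rw [sq, sum_mul_sum]
  exact integrable_finsetSum _ fun m _ => integrable_finsetSum _ fun n _ =>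
    integrable_indicator_sub_mul_indicator_sub (hB m) (hB n) _ _

lemma integral_sq_sum_indicator_sub [IsProbabilityMeasure μ] (hB : ∀ i, MeasurableSet (B i))
    (S : Finset ι) :
    ∫ x, (∑ n ∈ S, ((B n).indicator 1 x - μ.real (B n))) ^ 2 ∂μ
      = ∑ m ∈ S, ∑ n ∈ S, (μ.real (B m ∩ B n) - μ.real (B m) * μ.real (B n)) := by
  simp_rw [sq, sum_mul_sum]
  rw [integral_finsetSum _ fun m _ => integrable_finsetSum _ fun n _ =>
    integrable_indicator_sub_mul_indicator_sub (hB m) (hB n) _ _]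
  refine sum_congr rfl fun m _ => ?_
  rw [integral_finsetSum _ fun n _ => integrable_indicator_sub_mul_indicator_sub (hB m) (hB n) _ _]
  exact sum_congr rfl fun n _ => integral_indicator_sub_mul_indicator_sub (hB m) (hB n)

end CenteredIndicators

lemma sum_Icc_one_sub_sum_Icc_one (f : ℕ → ℝ) {a b : ℕ} (hab : a ≤ b) :
    ∑ n ∈ Icc 1 b, f n - ∑ n ∈ Icc 1 a, f n = ∑ n ∈ Icc (a + 1) b, f n := by
  have hIcc (n : ℕ) : Icc 1 n = Ioc 0 n := Icc_add_one_left_eq_Ioc 0 n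
  rw [hIcc, hIcc, Icc_add_one_left_eq_Ioc, ← sum_Ioc_consecutive f (Nat.zero_le a) hab]
  ring

open scoped Classical

section HitCounts

variable {X : Type*} [MeasurableSpace X] (μ : Measure X) (B : ℕ → Set X)

noncomputable def hitCount (N : ℕ) (x : X) : ℕ := #{n ∈ Icc 1 N | x ∈ B n}

noncomputable def expectedHitCount (N : ℕ) : ℝ := ∑ n ∈ Icc 1 N, μ.real (B n)

noncomputable def centeredHitCount (N : ℕ) (x : X) : ℝ :=
  hitCount B N x - expectedHitCount μ B N

lemma expectedHitCount_zero : expectedHitCount μ B 0 = 0 := by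
  simp [expectedHitCount]

lemma monotone_expectedHitCount : Monotone (expectedHitCount μ B) := fun _ _ hab =>
  sum_le_sum_of_subset_of_nonneg (Icc_subset_Icc_right hab) fun _ _ _ => measureReal_nonneg

lemma expectedHitCount_succ_le [IsProbabilityMeasure μ] (N : ℕ) :
    expectedHitCount μ B (N + 1) ≤ expectedHitCount μ B N + 1 := by
  rw [expectedHitCount, expectedHitCount, sum_Icc_succ_top (by omega)]
  linarith [measureReal_le_one (μ := μ) (s := B (N + 1))]

lemma monotone_centeredHitCount_add (x : X) :
    Monotone fun N => centeredHitCount μ B N x + expectedHitCount μ B N := by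
  simp only [centeredHitCount, sub_add_cancel]
  exact Nat.mono_cast.comp fun _ _ hab =>
    card_le_card (filter_subset_filter _ (Icc_subset_Icc_right hab))

lemma centeredHitCount_sub {a b : ℕ} (hab : a ≤ b) (x : X) :
    centeredHitCount μ B b x - centeredHitCount μ B a x
      = ∑ n ∈ Icc (a + 1) b, ((B n).indicator 1 x - μ.real (B n)) := by
  have hcount (N : ℕ) : (hitCount B N x : ℝ) = ∑ n ∈ Icc 1 N, (B n).indicator 1 x := by
    simp only [hitCount, card_filter, Nat.cast_sum, Nat.cast_ite, Nat.cast_one, Nat.cast_zero,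
      Set.indicator_apply, Pi.one_apply]
  rw [sum_sub_distrib, ← sum_Icc_one_sub_sum_Icc_one _ hab, ← sum_Icc_one_sub_sum_Icc_one _ hab,
    centeredHitCount, centeredHitCount, hcount, hcount, expectedHitCount, expectedHitCount]
  ring

variable [IsProbabilityMeasure μ] {B} (hB : ∀ n, MeasurableSet (B n))
include hB

lemma integrable_sq_centeredHitCount_sub (a b : ℕ) (hab : a ≤ b) :
    Integrable (fun x => (centeredHitCount μ B b x - centeredHitCount μ B a x) ^ 2) μ := by
  simp_rw [centeredHitCount_sub μ B hab]
  exact integrable_sq_sum_indicator_sub hB _ _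

lemma integral_sq_centeredHitCount_sub_le {C : ℝ}
    (hSP : ∀ M N : ℕ, 1 ≤ M → M ≤ N →
      ∑ m ∈ Icc M N, ∑ n ∈ Icc M N, (μ.real (B m ∩ B n) - μ.real (B m) * μ.real (B n))
        ≤ C * ∑ n ∈ Icc M N, μ.real (B n))
    (a b : ℕ) (hab : a ≤ b) :
    ∫ x, (centeredHitCount μ B b x - centeredHitCount μ B a x) ^ 2 ∂μ
      ≤ C * (expectedHitCount μ B b - expectedHitCount μ B a) := by
  simp_rw [centeredHitCount_sub μ B hab]
  rw [integral_sq_sum_indicator_sub hB, expectedHitCount, expectedHitCount,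
    sum_Icc_one_sub_sum_Icc_one _ hab]
  rcases hab.eq_or_lt with rfl | hlt
  · simp
  · exact hSP (a + 1) b (Nat.le_add_left 1 a) hlt

end HitCounts

/-- **Quantitative Schmidt–Sprindžuk lemma (Theorem 1.4, estimate (1.1)).**
Under condition (SP) with divergent sum of measures, for every `ε > 0` and
a.e. `x` there is `K = K(x, ε) > 0` such that
`|S_N(x) − E_N| ≤ K·E_N^{1/2}·(log E_N)^{3/2+ε}` for all `N` with `E_N ≥ 2`. -/
theorem schmidt_sprindzuk_quantitative
    {X : Type*} [MeasurableSpace X] (μ : Measure X) [IsProbabilityMeasure μ]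
    (B : ℕ → Set X) (hBmeas : ∀ n, MeasurableSet (B n))
    (hdiv : Tendsto (fun N : ℕ => ∑ n ∈ Finset.Icc 1 N, (μ (B n)).toReal) atTop atTop)
    (C : ℝ) (hC : 0 < C)
    (hSP : ∀ M N : ℕ, 1 ≤ M → M ≤ N →
      ∑ m ∈ Finset.Icc M N, ∑ n ∈ Finset.Icc M N,
        ((μ (B m ∩ B n)).toReal - (μ (B m)).toReal * (μ (B n)).toReal)
      ≤ C * ∑ n ∈ Finset.Icc M N, (μ (B n)).toReal) :
    ∀ ε : ℝ, 0 < ε →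
      ∀ᵐ x ∂μ, ∃ K : ℝ, 0 < K ∧
        ∀ N : ℕ, 2 ≤ ∑ n ∈ Finset.Icc 1 N, (μ (B n)).toReal →
          |(((Finset.Icc 1 N).filter (fun n => x ∈ B n)).card : ℝ) -
              ∑ n ∈ Finset.Icc 1 N, (μ (B n)).toReal| ≤
            K * (∑ n ∈ Finset.Icc 1 N, (μ (B n)).toReal) ^ ((1 : ℝ) / 2) *
              (Real.log (∑ n ∈ Finset.Icc 1 N, (μ (B n)).toReal)) ^ ((3 : ℝ) / 2 + ε) := by
  intro ε hε
  exact ae_abs_le_mul_sqrt_mul_log_rpow hdiv (monotone_expectedHitCount μ B)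
    (expectedHitCount_zero μ B) (expectedHitCount_succ_le μ B) hC.le
    (integrable_sq_centeredHitCount_sub μ hBmeas) (integral_sq_centeredHitCount_sub_le μ hBmeas hSP)
    (monotone_centeredHitCount_add μ B) hε
end

section
/- (Proposition 1.5(iii).) Let (X, μ) be a probability space and T : X → X a measurable, measure-preserving map. Call T lightly mixing if for every pair of measurable sets A, B ⊆ X with μ(A) > 0 and μ(B) > 0 there exists N₀ such that μ(T^{-n}(A) ∩ B) > 0 for all n ≥ N₀. The following are equivalent: (a) T is lightly mixing; (b) every sequence (A_n)_{n≥1} of measurable sets taking only finitely many distinct values (some of which may have measure zero) and satisfying ∑_{n=1}^∞ μ(A_n) = ∞ is Borel–Cantelli, i.e. for μ-a.e. x ∈ X there are infinitely many n with T^n(x) ∈ A_n. -/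
/-!
If `T` is lightly mixing and the `A n` take finitely many values with divergent sum of
measures, some value `A₀` of positive measure is taken infinitely often. The set of points
whose orbit avoids `A₀` at all those times beyond `N` is null: otherwise light mixing would
make it meet `T^[n] ⁻¹' A₀` for some such large `n`. Conversely, if `μ (T^[n] ⁻¹' A ∩ B) = 0`
for infinitely many `n`, the sequence equal to `A` at those times and to `∅` otherwise has
divergent sum, yet almost no point of `B` ever visits it.
-/

open MeasureTheory Filter

theorem tendsto_sum_Icc_one_atTop_iff_not_summable {f : ℕ → ℝ} (hf : ∀ n, 0 ≤ f n) :
    Tendsto (fun N => ∑ n ∈ Finset.Icc 1 N, f n) atTop atTop ↔ ¬Summable f := by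
  have hIcc (N : ℕ) : ∑ n ∈ Finset.Icc 1 N, f n = ∑ n ∈ Finset.range N, f (n + 1) := by
    rw [← Finset.Ico_add_one_right_eq_Icc, Finset.sum_Ico_eq_sum_range]
    simp only [add_tsub_cancel_right, add_comm]
  simp_rw [hIcc, ← summable_nat_add_iff 1 (f := f)]
  exact (not_summable_iff_tendsto_nat_atTop_of_nonneg fun n => hf (n + 1)).symm

theorem frequently_ne_zero_of_not_summable {f : ℕ → ℝ} (hf : ¬Summable f) :
    ∃ᶠ n in atTop, f n ≠ 0 := by
  refine fun hzero => hf (summable_zero.congr_cofinite ?_)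
  rw [Nat.cofinite_eq_atTop]
  filter_upwards [hzero] with n hn
  exact (not_not.mp hn).symm

theorem not_summable_ite_of_frequently {p : ℕ → Prop} [DecidablePred p]
    (hp : ∃ᶠ n in atTop, p n) {c : ℝ} (hc : c ≠ 0) : ¬Summable fun n => if p n then c else 0 := by
  intro hs
  obtain ⟨n, hpn, hne⟩ :=
    (hp.and_eventually (hs.tendsto_atTop_zero.eventually_ne hc.symm)).exists
  exact hne (if_pos hpn)

theorem Filter.Frequently.exists_frequently_eq_of_finite_range {α β : Type*} {l : Filter α}
    {f : α → β} {p : β → Prop} (hf : (Set.range f).Finite) (h : ∃ᶠ a in l, p (f a)) :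
    ∃ b, p b ∧ ∃ᶠ a in l, f a = b := by
  by_contra! hrare
  have hall : ∀ᶠ a in l, ∀ b ∈ Set.range f, p b → f a ≠ b :=
    (hf.eventually_all).mpr fun b _ => eventually_imp_distrib_left.mpr (hrare b)
  exact h (hall.mono fun a ha hpa => ha (f a) ⟨a, rfl⟩ hpa rfl)

section

variable {X : Type*} [MeasurableSpace X]

def LightlyMixing (μ : Measure X) (T : X → X) : Prop :=
  ∀ A B : Set X, MeasurableSet A → MeasurableSet B → 0 < μ A → 0 < μ B →
    ∀ᶠ n in atTop, 0 < μ (T^[n] ⁻¹' A ∩ B)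

def IsBorelCantelli (μ : Measure X) (T : X → X) (A : ℕ → Set X) : Prop :=
  ∀ᵐ x ∂μ, ∃ᶠ n in atTop, T^[n] x ∈ A n

variable {μ : Measure X} {T : X → X}

theorem LightlyMixing.ae_frequently_mem (h : LightlyMixing μ T) (hT : Measurable T)
    {A : Set X} (hA : MeasurableSet A) (hμA : 0 < μ A) {p : ℕ → Prop}
    (hp : ∃ᶠ n in atTop, p n) : ∀ᵐ x ∂μ, ∃ᶠ n in atTop, p n ∧ T^[n] x ∈ A := by
  simp_rw [frequently_atTop]
  refine ae_all_iff.mpr fun N => ?_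
  set E := ⋂ n ≥ N, ⋂ (_ : p n), (T^[n] ⁻¹' A)ᶜ
  have hE : MeasurableSet E :=
    .iInter fun n => .iInter fun _ => .iInter fun _ => (hT.iterate n hA).compl
  have hμE : μ E = 0 := by
    by_contra hμE
    have hmix := h A E hA hE hμA (pos_iff_ne_zero.mpr hμE)
    obtain ⟨n, hpn, hmeet, hNn⟩ :=
      (hp.and_eventually (hmix.and (eventually_ge_atTop N))).exists
    have hdisj : T^[n] ⁻¹' A ∩ E = ∅ :=
      Set.eq_empty_of_forall_notMem fun x ⟨hxA, hxE⟩ => by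
        simp only [E, Set.mem_iInter] at hxE
        exact hxE n hNn hpn hxA
    simp [hdisj] at hmeet
  filter_upwards [measure_eq_zero_iff_ae_notMem.mp hμE] with x hx
  simpa [E] using hx

theorem LightlyMixing.isBorelCantelli (h : LightlyMixing μ T) (hT : Measurable T)
    {A : ℕ → Set X} (hA : ∀ n, MeasurableSet (A n)) (hfin : (Set.range A).Finite)
    (hsum : ¬Summable fun n => (μ (A n)).toReal) : IsBorelCantelli μ T A := by
  have hpos : ∃ᶠ n in atTop, 0 < μ (A n) :=
    (frequently_ne_zero_of_not_summable hsum).mono fun n hn =>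
      pos_iff_ne_zero.mpr fun h0 => hn (by simp [h0])
  obtain ⟨A₀, hμA₀, hfreq⟩ :=
    hpos.exists_frequently_eq_of_finite_range (p := fun s => 0 < μ s) hfin
  obtain ⟨m, hm⟩ := hfreq.exists
  filter_upwards [h.ae_frequently_mem hT (hm ▸ hA m) hμA₀ hfreq] with x hx
  exact hx.mono fun n ⟨hn, hxn⟩ => hn ▸ hxn

theorem lightlyMixing_of_forall_isBorelCantelli [IsFiniteMeasure μ]
    (h : ∀ A : ℕ → Set X, (∀ n, MeasurableSet (A n)) → (Set.range A).Finite →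
      (¬Summable fun n => (μ (A n)).toReal) → IsBorelCantelli μ T A) :
    LightlyMixing μ T := by
  classical
  intro A B hA _ hμA hμB
  by_contra hmix
  set p : ℕ → Prop := fun n => μ (T^[n] ⁻¹' A ∩ B) = 0
  have hp : ∃ᶠ n in atTop, p n :=
    (not_eventually.mp hmix).mono fun n hn => by simpa [p, pos_iff_ne_zero] using hn
  set A' : ℕ → Set X := fun n => if p n then A else ∅
  have hA' (n : ℕ) : MeasurableSet (A' n) := by by_cases hpn : p n <;> simp [A', hpn, hA]
  have hfin : (Set.range A').Finite :=
    (Set.toFinite {A, ∅}).subset <| Set.range_subset_iff.mpr fun n => by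
      by_cases hpn : p n <;> simp [A', hpn]
  have hsum : ¬Summable fun n => (μ (A' n)).toReal := by
    convert not_summable_ite_of_frequently hp
      (ENNReal.toReal_pos hμA.ne' (measure_ne_top μ A)).ne' using 3 with n
    by_cases hpn : p n <;> simp [A', hpn]
  have hnull : μ (⋃ n, ⋃ (_ : p n), T^[n] ⁻¹' A ∩ B) = 0 :=
    measure_iUnion_null fun n => measure_iUnion_null fun hpn => hpn
  refine hμB.ne' (measure_eq_zero_iff_ae_notMem.mpr ?_)
  filter_upwards [h A' hA' hfin hsum, measure_eq_zero_iff_ae_notMem.mp hnull]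
    with x hx hxmiss hxB
  obtain ⟨n, hn⟩ := hx.exists
  by_cases hpn : p n
  · exact hxmiss (Set.mem_biUnion (x := n) hpn ⟨by simpa [A', hpn] using hn, hxB⟩)
  · simp [A', hpn] at hn

end

theorem lightlyMixing_iff_finitelyManyValues_BC_general
    {X : Type*} [MeasurableSpace X] (μ : Measure X) [IsProbabilityMeasure μ]
    (T : X → X) (hT : Measurable T) :
    (∀ A B : Set X, MeasurableSet A → MeasurableSet B → 0 < μ A → 0 < μ B →
      ∃ N₀ : ℕ, ∀ n, N₀ ≤ n → 0 < μ (T^[n] ⁻¹' A ∩ B)) ↔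
    (∀ A : ℕ → Set X, (∀ n, MeasurableSet (A n)) → (Set.range A).Finite →
      Tendsto (fun N : ℕ => ∑ n ∈ Finset.Icc 1 N, (μ (A n)).toReal) atTop atTop →
      ∀ᵐ x ∂μ, ∃ᶠ n in atTop, T^[n] x ∈ A n) := by
  simp only [tendsto_sum_Icc_one_atTop_iff_not_summable fun _ => ENNReal.toReal_nonneg]
  simp only [← ge_iff_le, ← eventually_atTop]
  exact ⟨fun h _ hA hfin hsum => LightlyMixing.isBorelCantelli h hT hA hfin hsum,
    lightlyMixing_of_forall_isBorelCantelli⟩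

/-- **Proposition 1.5(iii).** For a measure-preserving map `T` of a probability
space, `T` is lightly mixing (for all sets `A, B` of positive measure,
`μ(T^{-n}A ∩ B) > 0` for all large `n`) if and only if every sequence of
measurable sets taking only finitely many distinct values (possibly of measure
zero) with divergent sum of measures is Borel–Cantelli. -/
theorem lightlyMixing_iff_finitelyManyValues_BC
    {X : Type*} [MeasurableSpace X] (μ : Measure X) [IsProbabilityMeasure μ]
    (T : X → X) (hT : Measurable T) (hTm : MeasurePreserving T μ μ) :
    (∀ A B : Set X, MeasurableSet A → MeasurableSet B → 0 < μ A → 0 < μ B →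
      ∃ N₀ : ℕ, ∀ n, N₀ ≤ n → 0 < μ (T^[n] ⁻¹' A ∩ B)) ↔
    (∀ A : ℕ → Set X, (∀ n, MeasurableSet (A n)) → (Set.range A).Finite →
      Tendsto (fun N : ℕ => ∑ n ∈ Finset.Icc 1 N, (μ (A n)).toReal) atTop atTop →
      ∀ᵐ x ∂μ, ∃ᶠ n in atTop, T^[n] x ∈ A n) :=
  lightlyMixing_iff_finitelyManyValues_BC_general μ T hT
end

section
/- (Proposition 1.6, first part.) Let (X, μ) be a probability space such that μ is nontrivial, i.e. there exists a measurable set E ⊆ X with 0 < μ(E) < 1. Then for every measurable, measure-preserving map T : X → X there exists a sequence (A_n)_{n≥1} of measurable subsets of X with ∑_{n=1}^∞ μ(A_n) = ∞ which is not Borel–Cantelli; that is, the set { x ∈ X : T^n(x) ∈ A_n for infinitely many n } does not have full μ-measure. -/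
/-!
If there are measurable sets `S k` with `0 < μ (S k) < 2⁻¹ ^ k`, cut the times into consecutive
blocks, the `k`-th one `[N k, N (k + 1))` of length about `1 / μ (S k)`, and put
`A n = T^[N (k + 1) - n] ⁻¹' S k` on it. Each block adds at least `1` to `∑ μ (A n)`, but within
the block `T^[n] x ∈ A n` holds exactly when `T^[N (k + 1)] x ∈ S k`, which by Borel–Cantelli
happens for only finitely many `k` at almost every `x`.

Otherwise the least positive measure `δ` of a measurable set is positive, and a set `B` with
`0 < μ B < 2 * δ` is an atom. Poincaré recurrence makes `B ∩ T^[p] ⁻¹' B` non-null for some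
`p ≥ 1`, hence `T^[p] ⁻¹' B = B` a.e., and the same construction with `S k = B` and blocks of
length `p` is hit, up to a null set, only on `B`. Since both `E` and `Eᶜ` have measure at least
`δ`, `μ B < 1`.
-/

open MeasureTheory Filter
open scoped ENNReal

lemma ENNReal.tendsto_sum_Icc_toReal_of_tsum_eq_top {f : ℕ → ℝ≥0∞} (hf : ∀ n, f n ≠ ∞)
    (h : ∑' n, f n = ∞) :
    Tendsto (fun N : ℕ => ∑ n ∈ Finset.Icc 1 N, (f n).toReal) atTop atTop := by
  have hns : ¬ Summable fun n => (f n).toReal := fun hsum => by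
    have := ENNReal.ofReal_tsum_of_nonneg (fun n => ENNReal.toReal_nonneg) hsum
    simp only [ENNReal.ofReal_toReal (hf _), h] at this
    exact ENNReal.ofReal_ne_top this
  have hrange := (not_summable_iff_tendsto_nat_atTop_of_nonneg
    (fun n => ENNReal.toReal_nonneg)).mp hns
  refine (tendsto_atTop_add_const_right atTop (-(f 0).toReal)
    (hrange.comp (tendsto_add_atTop_nat 1))).congr fun N => ?_
  rw [Function.comp_apply, Finset.range_eq_Ico, Finset.sum_eq_sum_Ico_succ_bot N.succ_pos,
    add_neg_cancel_comm]
  rfl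

namespace MeasureTheory

variable {X : Type*} {T : X → X} {N : ℕ → ℕ} {S : ℕ → Set X}

def blockSeq (T : X → X) (N : ℕ → ℕ) (S : ℕ → Set X) (n : ℕ) : Set X :=
  ⋃ (k) (_ : n ∈ Set.Ico (N k) (N (k + 1))), T^[N (k + 1) - n] ⁻¹' S k

lemma iterate_mem_blockSeq_iff {n : ℕ} {x : X} :
    T^[n] x ∈ blockSeq T N S n ↔ ∃ k, n ∈ Set.Ico (N k) (N (k + 1)) ∧ T^[N (k + 1)] x ∈ S k := by
  simp only [blockSeq, Set.mem_iUnion, Set.mem_preimage, ← Function.iterate_add_apply]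
  refine exists_congr fun k => ⟨fun ⟨hn, hx⟩ => ⟨hn, ?_⟩, fun ⟨hn, hx⟩ => ⟨hn, ?_⟩⟩
  · rwa [Nat.sub_add_cancel hn.2.le] at hx
  · rwa [Nat.sub_add_cancel hn.2.le]

lemma frequently_of_frequently_iterate_mem_blockSeq (hN : Monotone N) {x : X}
    (h : ∃ᶠ n in atTop, T^[n] x ∈ blockSeq T N S n) :
    ∃ᶠ k in atTop, T^[N (k + 1)] x ∈ S k := by
  refine frequently_atTop.mpr fun k₀ => ?_
  obtain ⟨n, hn, hx⟩ := frequently_atTop.mp h (N k₀)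
  obtain ⟨k, hk, hkx⟩ := iterate_mem_blockSeq_iff.mp hx
  refine ⟨k, ?_, hkx⟩
  by_contra! hlt
  exact (hk.2.trans_le (hN hlt)).not_ge hn

variable [MeasurableSpace X] {μ : Measure X}

def IsBorelCantelli (μ : Measure X) (T : X → X) (A : ℕ → Set X) : Prop :=
  ∀ᵐ x ∂μ, ∃ᶠ n in atTop, T^[n] x ∈ A n

lemma not_ae_mem_of_measure_lt_one [IsProbabilityMeasure μ] {s : Set X} (hs : μ s < 1) :
    ¬ ∀ᵐ x ∂μ, x ∈ s := by
  intro h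
  have hcompl : μ sᶜ = 0 := ae_iff.mp h
  have := measure_univ_le_add_compl (μ := μ) s
  rw [measure_univ, hcompl, add_zero] at this
  exact hs.not_ge this

lemma measurableSet_blockSeq (hT : Measurable T) (hS : ∀ k, MeasurableSet (S k)) (n : ℕ) :
    MeasurableSet (blockSeq T N S n) :=
  .iUnion fun k => .iUnion fun _ => hT.iterate _ (hS k)

lemma measure_le_measure_blockSeq (hTm : MeasurePreserving T μ μ) (hS : ∀ k, MeasurableSet (S k))
    {k n : ℕ} (hn : n ∈ Set.Ico (N k) (N (k + 1))) : μ (S k) ≤ μ (blockSeq T N S n) := by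
  rw [← (hTm.iterate (N (k + 1) - n)).measure_preimage (hS k).nullMeasurableSet]
  exact measure_mono (Set.subset_iUnion₂_of_subset k hn le_rfl)

lemma tsum_nsmul_le_tsum_measure_blockSeq (hTm : MeasurePreserving T μ μ)
    (hS : ∀ k, MeasurableSet (S k)) (hN : Monotone N) :
    ∑' k, (N (k + 1) - N k) • μ (S k) ≤ ∑' n, μ (blockSeq T N S n) := by
  rw [ENNReal.tsum_eq_iSup_nat]
  refine iSup_le fun K => ?_
  calc ∑ k ∈ Finset.range K, (N (k + 1) - N k) • μ (S k)
      ≤ ∑ k ∈ Finset.range K, ∑ n ∈ Finset.Ico (N k) (N (k + 1)), μ (blockSeq T N S n) := by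
        refine Finset.sum_le_sum fun k _ => ?_
        rw [← Nat.card_Ico]
        exact Finset.card_nsmul_le_sum _ _ _ fun n hn =>
          measure_le_measure_blockSeq hTm hS (Set.mem_Ico.mpr (Finset.mem_Ico.mp hn))
    _ = ∑ n ∈ Finset.Ico (N 0) (N K), μ (blockSeq T N S n) := by
        induction K with
        | zero => simp
        | succ K ih =>
          rw [Finset.sum_range_succ, ih, Finset.sum_Ico_consecutive _ (hN K.zero_le) (hN K.le_succ)]
    _ ≤ ∑' n, μ (blockSeq T N S n) := ENNReal.sum_le_tsum _

lemma measure_diff_eq_zero_of_measure_lt_two_mul {δ : ℝ≥0∞}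
    (hδ : ∀ C, MeasurableSet C → μ C ≠ 0 → δ ≤ μ C) {B C : Set X} (hB : MeasurableSet B)
    (hBδ : μ B < 2 * δ) (hC : MeasurableSet C) (hCB : C ⊆ B) (hC0 : μ C ≠ 0) :
    μ (B \ C) = 0 := by
  by_contra hBC
  refine hBδ.not_ge ?_
  calc 2 * δ = δ + δ := two_mul δ
    _ ≤ μ C + μ (B \ C) := add_le_add (hδ C hC hC0) (hδ _ (hB.diff hC) hBC)
    _ = μ B := by rw [measure_add_sdiff hC.nullMeasurableSet, Set.union_eq_right.mpr hCB]

lemma MeasurePreserving.exists_preimage_iterate_ae_eq [IsFiniteMeasure μ]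
    (hTm : MeasurePreserving T μ μ) {δ : ℝ≥0∞} (hδ : ∀ C, MeasurableSet C → μ C ≠ 0 → δ ≤ μ C)
    {B : Set X} (hB : MeasurableSet B) (hB0 : μ B ≠ 0) (hBδ : μ B < 2 * δ) :
    ∃ p ≠ 0, T^[p] ⁻¹' B =ᵐ[μ] B := by
  obtain ⟨p, hp, hret⟩ :=
    hTm.conservative.exists_gt_measure_inter_ne_zero hB.nullMeasurableSet hB0 0
  have hsub : B ≤ᵐ[μ] T^[p] ⁻¹' B := by
    rw [ae_le_set, ← Set.sdiff_self_inter]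
    exact measure_diff_eq_zero_of_measure_lt_two_mul hδ hB hBδ
      (hB.inter (hTm.measurable.iterate p hB)) Set.inter_subset_left hret
  refine ⟨p, hp.ne', (ae_eq_of_ae_subset_of_measure_ge hsub ?_ hB.nullMeasurableSet
    (measure_ne_top μ _)).symm⟩
  rw [(hTm.iterate p).measure_preimage hB.nullMeasurableSet]

variable [IsProbabilityMeasure μ]

theorem exists_not_isBorelCantelli_of_blocks (hTm : MeasurePreserving T μ μ) (hN : Monotone N)
    (hS : ∀ k, MeasurableSet (S k)) (hsum : ∑' k, (N (k + 1) - N k) • μ (S k) = ∞)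
    (hfreq : μ {x | ∃ᶠ k in atTop, T^[N (k + 1)] x ∈ S k} < 1) :
    ∃ A : ℕ → Set X, (∀ n, MeasurableSet (A n)) ∧
      Tendsto (fun N : ℕ => ∑ n ∈ Finset.Icc 1 N, (μ (A n)).toReal) atTop atTop ∧
      ¬ IsBorelCantelli μ T A := by
  refine ⟨blockSeq T N S, measurableSet_blockSeq hTm.measurable hS,
    ENNReal.tendsto_sum_Icc_toReal_of_tsum_eq_top (fun n => measure_ne_top μ _) ?_,
    fun hBC => ?_⟩
  · exact top_le_iff.mp (hsum ▸ tsum_nsmul_le_tsum_measure_blockSeq hTm hS hN)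
  · exact not_ae_mem_of_measure_lt_one hfreq
      (hBC.mono fun x => frequently_of_frequently_iterate_mem_blockSeq hN)

theorem exists_not_isBorelCantelli_of_forall_exists_measure_lt (hTm : MeasurePreserving T μ μ)
    (hsmall : ∀ k : ℕ, ∃ S : Set X, MeasurableSet S ∧ μ S ≠ 0 ∧ μ S < 2⁻¹ ^ k) :
    ∃ A : ℕ → Set X, (∀ n, MeasurableSet (A n)) ∧
      Tendsto (fun N : ℕ => ∑ n ∈ Finset.Icc 1 N, (μ (A n)).toReal) atTop atTop ∧
      ¬ IsBorelCantelli μ T A := by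
  choose S hS hS0 hSlt using hsmall
  choose L hL using fun k => ENNReal.exists_nat_mul_gt (hS0 k) ENNReal.one_ne_top
  have hN : Monotone fun k => ∑ i ∈ Finset.range k, L i :=
    monotone_nat_of_le_succ fun k => by simp [Finset.sum_range_succ]
  refine exists_not_isBorelCantelli_of_blocks hTm hN hS ?_ ?_
  · refine top_le_iff.mp ((ENNReal.tsum_const_eq_top_of_ne_zero one_ne_zero).symm.trans_le
      (ENNReal.tsum_le_tsum fun k => ?_))
    simpa [Finset.sum_range_succ, nsmul_eq_mul] using (hL k).le
  · rw [measure_setOfPred_frequently_eq_zero]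
    · exact zero_lt_one
    · refine ne_top_of_le_ne_top ((tsum_geometric_lt_top (r := 2⁻¹)).mpr (by norm_num)).ne
        (ENNReal.tsum_le_tsum fun k => ?_)
      rw [← Set.preimage_ofPred_eq, Set.ofPred_mem_eq,
        (hTm.iterate _).measure_preimage (hS k).nullMeasurableSet]
      exact (hSlt k).le

theorem exists_not_isBorelCantelli_of_preimage_iterate_ae_eq (hTm : MeasurePreserving T μ μ)
    {B : Set X} (hB : MeasurableSet B) (hB0 : μ B ≠ 0) (hB1 : μ B < 1) {p : ℕ} (hp : p ≠ 0)
    (hpB : T^[p] ⁻¹' B =ᵐ[μ] B) :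
    ∃ A : ℕ → Set X, (∀ n, MeasurableSet (A n)) ∧
      Tendsto (fun N : ℕ => ∑ n ∈ Finset.Icc 1 N, (μ (A n)).toReal) atTop atTop ∧
      ¬ IsBorelCantelli μ T A := by
  refine exists_not_isBorelCantelli_of_blocks hTm (N := fun k => p * k) (S := fun _ => B)
    (fun _ _ h => Nat.mul_le_mul_left p h) (fun _ => hB) ?_ ?_
  · simp only [mul_add, mul_one, add_tsub_cancel_left]
    exact ENNReal.tsum_const_eq_top_of_ne_zero (by simp [hp, hB0])
  · have hiter : ∀ k, T^[p * (k + 1)] ⁻¹' B =ᵐ[μ] B := fun k => by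
      rw [Function.iterate_mul]
      exact (hTm.iterate p).quasiMeasurePreserving.preimage_iterate_ae_eq (k + 1) hpB
    calc μ {x | ∃ᶠ k in atTop, T^[p * (k + 1)] x ∈ B}
        ≤ μ (⋃ k, T^[p * (k + 1)] ⁻¹' B) := measure_mono fun x hx => Set.mem_iUnion.mpr hx.exists
      _ = μ (⋃ _ : ℕ, B) := measure_congr (Filter.EventuallyEq.countable_iUnion hiter)
      _ < 1 := by rwa [Set.iUnion_const]

end MeasureTheory

theorem exists_not_BC_sequence_of_nontrivial_general
    {X : Type*} [MeasurableSpace X] (μ : Measure X) [IsProbabilityMeasure μ]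
    (hnontriv : ∃ E : Set X, MeasurableSet E ∧ 0 < μ E ∧ μ E < 1)
    (T : X → X) (hTm : MeasurePreserving T μ μ) :
    ∃ A : ℕ → Set X, (∀ n, MeasurableSet (A n)) ∧
      Tendsto (fun N : ℕ => ∑ n ∈ Finset.Icc 1 N, (μ (A n)).toReal) atTop atTop ∧
      ¬ (∀ᵐ x ∂μ, ∃ᶠ n in atTop, T^[n] x ∈ A n) := by
  obtain ⟨E, hE, hE0, hE1⟩ := hnontriv
  set δ := ⨅ (C : Set X) (_ : MeasurableSet C) (_ : μ C ≠ 0), μ C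
  have hδ : ∀ C, MeasurableSet C → μ C ≠ 0 → δ ≤ μ C := fun C hC hC0 =>
    iInf₂_le_of_le C hC (iInf_le _ hC0)
  rcases eq_or_ne δ 0 with hδ0 | hδ0
  · refine exists_not_isBorelCantelli_of_forall_exists_measure_lt hTm fun k => ?_
    have : δ < 2⁻¹ ^ k := hδ0 ▸ ENNReal.pow_pos (by norm_num) k
    simpa only [δ, iInf_lt_iff, exists_prop] using this
  · obtain ⟨B, hB, hB0, hBδ⟩ : ∃ B, MeasurableSet B ∧ μ B ≠ 0 ∧ μ B < 2 * δ := by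
      have : δ < 2 * δ := two_mul δ ▸
        ENNReal.lt_add_right (ne_top_of_le_ne_top (measure_ne_top μ E) (hδ E hE hE0.ne')) hδ0
      simpa only [δ, iInf_lt_iff, exists_prop] using this
    have h2δ : 2 * δ ≤ 1 := by
      rw [two_mul, ← prob_add_prob_compl (μ := μ) hE]
      have hEc : μ Eᶜ ≠ 0 := (prob_compl_eq_zero_iff hE).not.mpr hE1.ne
      exact add_le_add (hδ E hE hE0.ne') (hδ _ hE.compl hEc)
    obtain ⟨p, hp, hpB⟩ := hTm.exists_preimage_iterate_ae_eq hδ hB hB0 hBδ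
    exact exists_not_isBorelCantelli_of_preimage_iterate_ae_eq hTm hB hB0 (hBδ.trans_le h2δ) hp hpB

/-- **Proposition 1.6, first part.** If `μ` is a nontrivial probability measure
(some measurable set has measure strictly between 0 and 1), then for every
measure-preserving map `T` there is a sequence `(A n)` of measurable sets with
divergent sum of measures which is not Borel–Cantelli: it is not the case that
a.e. point satisfies `T^n x ∈ A n` for infinitely many `n`. -/
theorem exists_not_BC_sequence_of_nontrivial
    {X : Type*} [MeasurableSpace X] (μ : Measure X) [IsProbabilityMeasure μ]
    (hnontriv : ∃ E : Set X, MeasurableSet E ∧ 0 < μ E ∧ μ E < 1)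
    (T : X → X) (hT : Measurable T) (hTm : MeasurePreserving T μ μ) :
    ∃ A : ℕ → Set X, (∀ n, MeasurableSet (A n)) ∧
      Tendsto (fun N : ℕ => ∑ n ∈ Finset.Icc 1 N, (μ (A n)).toReal) atTop atTop ∧
      ¬ (∀ᵐ x ∂μ, ∃ᶠ n in atTop, T^[n] x ∈ A n) :=
  exists_not_BC_sequence_of_nontrivial_general μ hnontriv T hTm
end

section
/- (Proposition 1.6, second part.) Let (X, μ) be a probability space with μ non-atomic. Then for every measurable, measure-preserving map T : X → X there exists a sequence (A_n)_{n≥1} of measurable subsets of X with ∑_{n=1}^∞ μ(A_n) = ∞ such that for μ-almost every x ∈ X there are at most finitely many n with T^n(x) ∈ A_n. -/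
open MeasureTheory Filter

open scoped ENNReal

/-!
Repeated halving gives measurable sets `B k` with `0 < μ (B k) ≤ 2⁻¹ ^ k`. Choose indices
`c n → ∞` with `μ (B (c n)) ≥ μ (B 0) / n`, let `t k` be the last `n` with `c n = k`, and put
`A n = T^{-(t (c n) - n)} (B (c n))`. Then `μ (A n) = μ (B (c n))` has divergent sum by comparison
with the harmonic series, while `T^n x ∈ A n` iff `T^{t k} x ∈ B k` for `k = c n`. By
Borel–Cantelli almost every `x` lies in only finitely many of the sets `T^{-t k} (B k)`, and each
`k` accounts for only finitely many `n`.
-/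

def MeasureTheory.Measure.IsNonatomic {X : Type*} [MeasurableSpace X] (μ : Measure X) : Prop :=
  ∀ E : Set X, MeasurableSet E → 0 < μ E →
    ∃ F : Set X, MeasurableSet F ∧ F ⊆ E ∧ 0 < μ F ∧ μ F < μ E

lemma sum_Icc_one_div_eq_sum_range (N : ℕ) :
    ∑ n ∈ Finset.Icc 1 N, (1 / n : ℝ) = ∑ i ∈ Finset.range N, (1 / (i + 1) : ℝ) := by
  rw [Finset.range_eq_Ico, ← Finset.Ico_add_one_right_eq_Icc, ← zero_add 1,
    ← Finset.sum_Ico_add' (fun n : ℕ => (1 / n : ℝ)) 0 N 1]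
  simp

lemma tendsto_sum_Icc_atTop_of_div_le {a : ℕ → ℝ} {C : ℝ} (hC : 0 < C) (ha : ∀ n, C / n ≤ a n) :
    Tendsto (fun N : ℕ => ∑ n ∈ Finset.Icc 1 N, a n) atTop atTop := by
  have hharmonic : Tendsto (fun N : ℕ => C * ∑ n ∈ Finset.Icc 1 N, (1 / n : ℝ)) atTop atTop := by
    simpa only [sum_Icc_one_div_eq_sum_range] using
      Real.tendsto_sum_range_one_div_nat_succ_atTop.const_mul_atTop hC
  refine tendsto_atTop_mono (fun N => ?_) hharmonic
  rw [Finset.mul_sum]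
  exact Finset.sum_le_sum fun n _ => by rw [mul_one_div]; exact ha n

lemma exists_tendsto_atTop_div_le {ε : ℕ → ℝ} (hε : ∀ k, 0 < ε k) :
    ∃ c : ℕ → ℕ, Tendsto c atTop atTop ∧ ∀ n, ε 0 / n ≤ ε (c n) := by
  refine ⟨fun n : ℕ => Nat.findGreatest (fun k : ℕ => ε 0 / (n : ℝ) ≤ ε k) n, ?_, fun n => ?_⟩
  · refine tendsto_atTop_atTop.mpr fun k => ⟨max k ⌈ε 0 / ε k⌉₊, fun n hn => ?_⟩
    have hn_pos : (0 : ℝ) < n :=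
      (div_pos (hε 0) (hε k)).trans_le ((Nat.le_ceil _).trans (mod_cast le_of_max_le_right hn))
    refine Nat.le_findGreatest (le_of_max_le_left hn) ?_
    rw [div_le_comm₀ hn_pos (hε k)]
    exact (Nat.le_ceil _).trans (mod_cast le_of_max_le_right hn)
  · refine Nat.findGreatest_spec (P := fun k : ℕ => ε 0 / (n : ℝ) ≤ ε k) n.zero_le ?_
    rcases n.eq_zero_or_pos with rfl | hn
    · simpa using (hε 0).le
    · exact div_le_self (hε 0).le (mod_cast hn)

lemma Function.iterate_mem_preimage_iterate_sub_iff {X : Type*} {T : X → X} {m n : ℕ} (h : n ≤ m)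
    (s : Set X) (x : X) : T^[n] x ∈ T^[m - n] ⁻¹' s ↔ T^[m] x ∈ s := by
  rw [Set.mem_preimage, ← Function.iterate_add_apply, Nat.sub_add_cancel h]

namespace MeasureTheory

section Nonatomic

variable {X : Type*} [MeasurableSpace X] {μ : Measure X}

lemma Measure.IsNonatomic.exists_subset_measure_pos_le_half (hμ : μ.IsNonatomic) {E : Set X}
    (hE : MeasurableSet E) (hpos : 0 < μ E) (hfin : μ E ≠ ∞) :
    ∃ F ⊆ E, MeasurableSet F ∧ 0 < μ F ∧ μ F ≤ μ E / 2 := by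
  obtain ⟨F, hF, hFE, hFpos, hFlt⟩ := hμ E hE hpos
  rcases le_or_gt (μ F) (μ E / 2) with hsmall | hlarge
  · exact ⟨F, hFE, hF, hFpos, hsmall⟩
  · have hdiff : μ (E \ F) = μ E - μ F :=
      measure_sdiff hFE hF.nullMeasurableSet (measure_ne_top_of_subset hFE hfin)
    refine ⟨E \ F, Set.sdiff_subset, hE.diff hF, ?_, ?_⟩
    · rw [hdiff]
      exact tsub_pos_of_lt hFlt
    · rw [hdiff, tsub_le_iff_right]
      calc μ E = μ E / 2 + μ E / 2 := (ENNReal.add_halves _).symm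
        _ ≤ μ E / 2 + μ F := add_le_add_right hlarge.le _

lemma Measure.IsNonatomic.exists_subset_measure_pos_le_inv_two_pow_mul (hμ : μ.IsNonatomic)
    {E : Set X} (hE : MeasurableSet E) (hpos : 0 < μ E) (hfin : μ E ≠ ∞) (k : ℕ) :
    ∃ F ⊆ E, MeasurableSet F ∧ 0 < μ F ∧ μ F ≤ 2⁻¹ ^ k * μ E := by
  induction k with
  | zero => exact ⟨E, subset_rfl, hE, hpos, by simp⟩
  | succ k ih =>
    obtain ⟨F, hFE, hF, hFpos, hFle⟩ := ih
    obtain ⟨G, hGF, hG, hGpos, hGle⟩ := hμ.exists_subset_measure_pos_le_half hF hFpos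
      (measure_ne_top_of_subset hFE hfin)
    refine ⟨G, hGF.trans hFE, hG, hGpos, ?_⟩
    calc μ G ≤ μ F / 2 := hGle
      _ ≤ 2⁻¹ ^ k * μ E / 2 := by gcongr
      _ = 2⁻¹ ^ (k + 1) * μ E := by rw [pow_succ, ENNReal.div_eq_inv_mul]; ring

end Nonatomic

section Recurrence

variable {X : Type*} [MeasurableSpace X] {μ : Measure X} {T : X → X}

lemma MeasurePreserving.ae_finite_setOf_iterate_mem (hT : MeasurePreserving T μ μ)
    {B : ℕ → Set X} (hB : ∀ k, MeasurableSet (B k)) (hsum : ∑' k, μ (B k) ≠ ∞) (t : ℕ → ℕ) :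
    ∀ᵐ x ∂μ, {k | T^[t k] x ∈ B k}.Finite := by
  have hmeas : ∀ k, μ (T^[t k] ⁻¹' B k) = μ (B k) := fun k =>
    (hT.iterate _).measure_preimage (hB k).nullMeasurableSet
  filter_upwards [ae_eventually_notMem (μ := μ) (s := fun k => T^[t k] ⁻¹' B k)
    (by simpa only [hmeas] using hsum)] with x hx
  simpa [← Nat.cofinite_eq_atTop, eventually_cofinite] using hx

theorem MeasurePreserving.exists_ae_finite_setOf_iterate_mem_of_tendsto
    (hT : MeasurePreserving T μ μ) {B : ℕ → Set X} (hB : ∀ k, MeasurableSet (B k))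
    (hsum : ∑' k, μ (B k) ≠ ∞) {c : ℕ → ℕ} (hc : Tendsto c atTop atTop) :
    ∃ A : ℕ → Set X, (∀ n, MeasurableSet (A n)) ∧ (∀ n, μ (A n) = μ (B (c n))) ∧
      ∀ᵐ x ∂μ, {n | T^[n] x ∈ A n}.Finite := by
  have hfiber : ∀ k, (c ⁻¹' {k}).Finite := fun k => by
    have := hc.eventually_gt_atTop k
    rw [← Nat.cofinite_eq_atTop, eventually_cofinite] at this
    exact this.subset fun n hn => by simp_all
  let t : ℕ → ℕ := fun k => sSup (c ⁻¹' {k})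
  have hle : ∀ n, n ≤ t (c n) := fun n => le_csSup (hfiber _).bddAbove rfl
  refine ⟨fun n => T^[t (c n) - n] ⁻¹' B (c n),
    fun n => (hB _).preimage (hT.measurable.iterate _),
    fun n => (hT.iterate _).measure_preimage (hB _).nullMeasurableSet, ?_⟩
  filter_upwards [hT.ae_finite_setOf_iterate_mem hB hsum t] with x hx
  refine (hx.preimage' fun k _ => hfiber k).subset fun n hn => ?_
  exact (Function.iterate_mem_preimage_iterate_sub_iff (hle n) _ x).mp hn

end Recurrence

end MeasureTheory

theorem exists_eventually_avoided_sequence_of_nonatomic_general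
    {X : Type*} [MeasurableSpace X] (μ : Measure X) [IsProbabilityMeasure μ]
    (hNA : ∀ E : Set X, MeasurableSet E → 0 < μ E →
      ∃ F : Set X, MeasurableSet F ∧ F ⊆ E ∧ 0 < μ F ∧ μ F < μ E)
    (T : X → X) (hTm : MeasurePreserving T μ μ) :
    ∃ A : ℕ → Set X, (∀ n, MeasurableSet (A n)) ∧
      Tendsto (fun N : ℕ => ∑ n ∈ Finset.Icc 1 N, (μ (A n)).toReal) atTop atTop ∧
      ∀ᵐ x ∂μ, {n : ℕ | 0 < n ∧ T^[n] x ∈ A n}.Finite := by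
  choose B _ hB hBpos hBle using fun k =>
    Measure.IsNonatomic.exists_subset_measure_pos_le_inv_two_pow_mul hNA MeasurableSet.univ
      (by simp) (measure_ne_top μ _) k
  have hsum : ∑' k, μ (B k) ≠ ∞ :=
    ne_top_of_le_ne_top (by simp) (ENNReal.tsum_le_tsum hBle)
  have hε : ∀ k, 0 < (μ (B k)).toReal := fun k =>
    ENNReal.toReal_pos (hBpos k).ne' (measure_ne_top μ _)
  obtain ⟨c, hc, hcB⟩ := exists_tendsto_atTop_div_le hε
  obtain ⟨A, hA, hμA, hfin⟩ := hTm.exists_ae_finite_setOf_iterate_mem_of_tendsto hB hsum hc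
  refine ⟨A, hA, tendsto_sum_Icc_atTop_of_div_le (hε 0) fun n => (hμA n).symm ▸ hcB n, ?_⟩
  filter_upwards [hfin] with x hx
  exact hx.subset fun n hn => hn.2

/-- **Proposition 1.6, second part.** If `μ` is a non-atomic probability
measure (every measurable set of positive measure contains a measurable subset
of strictly smaller positive measure), then for every measure-preserving map
`T` there is a sequence `(A n)` of measurable sets with divergent sum of
measures such that a.e. point enters only finitely many of the sets
`T^{-n}(A n)`. -/
theorem exists_eventually_avoided_sequence_of_nonatomic
    {X : Type*} [MeasurableSpace X] (μ : Measure X) [IsProbabilityMeasure μ]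
    (hNA : ∀ E : Set X, MeasurableSet E → 0 < μ E →
      ∃ F : Set X, MeasurableSet F ∧ F ⊆ E ∧ 0 < μ F ∧ μ F < μ E)
    (T : X → X) (hT : Measurable T) (hTm : MeasurePreserving T μ μ) :
    ∃ A : ℕ → Set X, (∀ n, MeasurableSet (A n)) ∧
      Tendsto (fun N : ℕ => ∑ n ∈ Finset.Icc 1 N, (μ (A n)).toReal) atTop atTop ∧
      ∀ᵐ x ∂μ, {n : ℕ | 0 < n ∧ T^[n] x ∈ A n}.Finite :=
  exists_eventually_avoided_sequence_of_nonatomic_general μ hNA T hTm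
end

section
/- (Derived-sequence lemma, used in the proofs of Proposition 1.6 and Theorem 2.5.) Let (X, μ) be a probability space and T : X → X a measurable, measure-preserving map. Let (Ã_k)_{k≥1} be measurable subsets of X with ∑_{k=1}^∞ μ(Ã_k) < ∞, and let (l_k)_{k≥1} be positive integers; put s_0 = 0 and s_k = l_1 + ⋯ + l_k. Define the derived sequence (A_n)_{n≥1} by A_n = (T^{s_k − n})^{-1}(Ã_k), where k = k_n is the unique index with s_{k−1} < n ≤ s_k. Then ∑_{n=1}^∞ μ(A_n) = ∑_{k=1}^∞ l_k·μ(Ã_k), and for μ-almost every x ∈ X there are at most finitely many n with T^n(x) ∈ A_n. In particular, if l_k = ⌊1/μ(Ã_k)⌋ + 1 for sets Ã_k of positive measure, then ∑_n μ(A_n) = ∞ while μ-a.e. point enters only finitely many of the sets T^{-n}(A_n). -/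
open MeasureTheory Filter

/-- **Derived-sequence lemma** (used in the proofs of Proposition 1.6 and
Theorem 2.5). Given measurable sets `Atil k` (for `k ≥ 1`) with summable measures
and positive integer lengths `l k`, set `s 0 = 0`, `s k = l 1 + ⋯ + l k`, and
define the derived sequence by `A n = (T^{s k − n})^{-1}(Atil k)` for
`s (k−1) < n ≤ s k`.  Then `∑_{n≥1} μ(A n) = ∑_{k≥1} l k · μ(Atil k)`, and for
a.e. `x` there are at most finitely many `n ≥ 1` with `T^n x ∈ A n`. -/
theorem derived_sequence_lemma
    {X : Type*} [MeasurableSpace X] (μ : Measure X) [IsProbabilityMeasure μ]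
    (T : X → X) (hT : Measurable T) (hTm : MeasurePreserving T μ μ)
    (Atil : ℕ → Set X) (hAtilmeas : ∀ k, MeasurableSet (Atil k))
    (hsum : ∑' k : ℕ, μ (Atil (k + 1)) ≠ ⊤)
    (l : ℕ → ℕ) (hl : ∀ k, 1 ≤ k → 0 < l k)
    (s : ℕ → ℕ) (hs : ∀ k, s k = ∑ i ∈ Finset.Icc 1 k, l i)
    (A : ℕ → Set X)
    (hA : ∀ k n : ℕ, 1 ≤ k → s (k - 1) < n → n ≤ s k →
      A n = T^[s k - n] ⁻¹' (Atil k)) :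
    (∑' n : ℕ, μ (A (n + 1)) = ∑' k : ℕ, (l (k + 1) : ENNReal) * μ (Atil (k + 1))) ∧
    ∀ᵐ x ∂μ, {n : ℕ | 0 < n ∧ T^[n] x ∈ A n}.Finite := by
  have hs0 : s 0 = 0 := by simp [hs]
  have hstep : ∀ k, s (k + 1) = s k + l (k + 1) := by
    intro k
    rw [hs, hs, Finset.sum_Icc_succ_top (by omega)]
  have hmono : StrictMono s := strictMono_nat_of_lt_succ (fun k => by
    have := hl (k + 1) (by omega)
    rw [hstep]; omega)
  have hμA : ∀ k n, 1 ≤ k → s (k - 1) < n → n ≤ s k → μ (A n) = μ (Atil k) := by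
    intro k n h1 h2 h3
    rw [hA k n h1 h2 h3, (hTm.iterate _).measure_preimage (hAtilmeas k).nullMeasurableSet]
  have key : ∀ K, ∑ n ∈ Finset.range (s K), μ (A (n + 1)) =
      ∑ k ∈ Finset.range K, (l (k + 1) : ENNReal) * μ (Atil (k + 1)) := by
    intro K
    induction K with
    | zero => simp [hs0]
    | succ K ih =>
      have h1 : s K ≤ s (K + 1) := hmono.monotone (by omega)
      rw [Finset.sum_range_succ, ← ih, ← Finset.sum_range_add_sum_Ico _ h1]
      congr 1
      have hc : ∀ n ∈ Finset.Ico (s K) (s (K + 1)), μ (A (n + 1)) = μ (Atil (K + 1)) := by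
        intro n hn
        simp only [Finset.mem_Ico] at hn
        exact hμA (K + 1) (n + 1) (by omega) (by simpa using hn.1.trans_lt (Nat.lt_succ_self n))
          (by omega)
      rw [Finset.sum_congr rfl hc, Finset.sum_const, Nat.card_Ico, hstep]
      simp [nsmul_eq_mul]
  constructor
  · have t1 : Tendsto (fun K => ∑ n ∈ Finset.range (s K), μ (A (n + 1))) atTop
        (nhds (∑' n : ℕ, μ (A (n + 1)))) :=
      (ENNReal.tendsto_nat_tsum _).comp hmono.tendsto_atTop
    have t2 : Tendsto (fun K => ∑ k ∈ Finset.range K, (l (k + 1) : ENNReal) * μ (Atil (k + 1)))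
        atTop (nhds (∑' k : ℕ, (l (k + 1) : ENNReal) * μ (Atil (k + 1)))) :=
      ENNReal.tendsto_nat_tsum _
    have : (fun K => ∑ n ∈ Finset.range (s K), μ (A (n + 1))) =
        (fun K => ∑ k ∈ Finset.range K, (l (k + 1) : ENNReal) * μ (Atil (k + 1))) :=
      funext key
    rw [this] at t1
    exact tendsto_nhds_unique t1 t2
  · set B : ℕ → Set X := fun k => T^[s (k + 1)] ⁻¹' Atil (k + 1) with hB
    have hBsum : ∑' k, μ (B k) ≠ ⊤ := by
      have : ∀ k, μ (B k) = μ (Atil (k + 1)) := fun k =>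
        (hTm.iterate _).measure_preimage (hAtilmeas _).nullMeasurableSet
      simpa [this] using hsum
    filter_upwards [MeasureTheory.ae_eventually_notMem hBsum] with x hx
    obtain ⟨K, hK⟩ := eventually_atTop.1 hx
    apply Set.Finite.subset (Set.finite_Iic (s K))
    rintro n ⟨hn0, hnA⟩
    have hex : ∃ k, n ≤ s k := ⟨n, hmono.le_apply⟩
    set k := Nat.find hex with hkdef
    have hk1 : n ≤ s k := Nat.find_spec hex
    have hk0 : 1 ≤ k := by
      rcases Nat.eq_zero_or_pos k with h | h
      · exfalso; rw [h, hs0] at hk1; omega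
      · exact h
    have hklt : s (k - 1) < n := by
      have := Nat.find_min hex (show k - 1 < k by omega)
      omega
    have hmem : T^[s k] x ∈ Atil k := by
      rw [hA k n hk0 hklt hk1] at hnA
      have : T^[s k - n] (T^[n] x) ∈ Atil k := hnA
      rwa [← Function.iterate_add_apply, Nat.sub_add_cancel hk1] at this
    have hxB : x ∈ B (k - 1) := by
      simp only [hB, Set.mem_preimage]
      have : k - 1 + 1 = k := by omega
      rw [this]; exact hmem
    have hkK : k - 1 < K := by
      by_contra h
      exact hK (k - 1) (by omega) hxB
    have : k ≤ K := by omega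
    exact le_trans hk1 (hmono.monotone this)
end

section
/- (Lemma 3.1.) Let μ be a σ-invariant Borel probability measure on the two-sided subshift Σ_A satisfying the Gibbs cylinder estimates with constants c₁, c₂, c₃ > 0 and θ₁, θ₂, θ₃ ∈ (0,1). For two finite intervals Λ₁ = [n₁⁻, n₁⁺] and Λ₂ = [n₂⁻, n₂⁺] in ℤ define the asymmetric distance δ(Λ₁, Λ₂) = max{ n₂⁺ − n₁⁺, n₁⁻ − n₂⁻, 0 }. Then there exist constants c₄ > 0 and θ₄ ∈ (0,1), depending only on c₁, c₂, c₃, θ₁, θ₂, θ₃, such that for all cylinders C₁ on Λ₁ and C₂ on Λ₂ one has |μ(C₁ ∩ C₂) − μ(C₁)μ(C₂)| ≤ c₄·θ₄^{δ(Λ₁, Λ₂)}·μ(C₁). -/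
open MeasureTheory Filter

/-- The two-sided subshift of finite type `Σ_A ⊆ {1,…,M}^ℤ`. -/
def shiftSpace (M : ℕ) (Amat : Fin M → Fin M → Bool) : Set (ℤ → Fin M) :=
  {ω | ∀ i : ℤ, Amat (ω i) (ω (i + 1)) = true}

/-- The left shift `(σω)_i = ω_{i+1}` on two-sided sequences. -/
def shiftMap (M : ℕ) : (ℤ → Fin M) → (ℤ → Fin M) := fun ω i => ω (i + 1)

/-- `C` is a cylinder on the interval `[a, b] ⊆ ℤ` (relative to `Σ_A`):
it consists of all points of `Σ_A` whose symbols on `[a, b]` agree with a fixed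
admissible (i.e. realizable) choice of symbols. -/
def IsCylinderOn (M : ℕ) (Amat : Fin M → Fin M → Bool) (a b : ℤ)
    (C : Set (ℤ → Fin M)) : Prop :=
  ∃ w : ℤ → Fin M,
    C = {ω | ω ∈ shiftSpace M Amat ∧ ∀ i : ℤ, a ≤ i → i ≤ b → ω i = w i} ∧ C.Nonempty

/-- The Gibbs cylinder estimates (Facts 1–3 of Section 3) for a measure `μ` on
the two-sided subshift, with constants `c₁, c₂, c₃ > 0`, `θ₁, θ₂, θ₃ ∈ (0,1)`. -/
def GibbsEstimates (M : ℕ) (Amat : Fin M → Fin M → Bool) (μ : Measure (ℤ → Fin M))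
    (c₁ c₂ c₃ θ₁ θ₂ θ₃ : ℝ) : Prop :=
  (∀ a b : ℤ, a ≤ b → ∀ C : Set (ℤ → Fin M), IsCylinderOn M Amat a b C →
      c₁ * θ₁ ^ (b - a + 1).toNat ≤ (μ C).toReal ∧
      (μ C).toReal ≤ c₂ * θ₂ ^ (b - a + 1).toNat) ∧
  (∀ a b a₁ b₁ : ℤ, a ≤ b → a₁ ≤ a → b ≤ b₁ →
      ∀ C C₁ : Set (ℤ → Fin M), IsCylinderOn M Amat a b C →
        IsCylinderOn M Amat a₁ b₁ C₁ → C₁ ⊆ C →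
        c₁ * θ₁ ^ ((b₁ - a₁) - (b - a)).toNat * (μ C).toReal ≤ (μ C₁).toReal ∧
        (μ C₁).toReal ≤ c₂ * θ₂ ^ ((b₁ - a₁) - (b - a)).toNat * (μ C).toReal) ∧
  (∀ a₁ b₁ a₂ b₂ : ℤ, a₁ ≤ b₁ → a₂ ≤ b₂ → b₁ < a₂ →
      ∀ C₁ C₂ : Set (ℤ → Fin M), IsCylinderOn M Amat a₁ b₁ C₁ →
        IsCylinderOn M Amat a₂ b₂ C₂ →
        |(μ (C₁ ∩ C₂)).toReal - (μ C₁).toReal * (μ C₂).toReal| ≤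
          c₃ * θ₃ ^ (a₂ - b₁).toNat * ((μ C₁).toReal * (μ C₂).toReal))

/-- Auxiliary: mixed power bound `θ₃^n * θ₂^m ≤ (max θ₂ θ₃)^k` for `k ≤ n + m`. -/
lemma mix_pow_le {θ₂ θ₃ : ℝ} (h20 : 0 < θ₂) (h21 : θ₂ < 1) (h30 : 0 < θ₃) (h31 : θ₃ < 1)
    (n m k : ℕ) (hk : k ≤ n + m) : θ₃ ^ n * θ₂ ^ m ≤ (max θ₂ θ₃) ^ k := by
  have hθ0 : (0 : ℝ) < max θ₂ θ₃ := lt_max_of_lt_left h20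
  have hθ1 : max θ₂ θ₃ ≤ 1 := max_le h21.le h31.le
  calc θ₃ ^ n * θ₂ ^ m ≤ (max θ₂ θ₃) ^ n * (max θ₂ θ₃) ^ m := by
        apply mul_le_mul (pow_le_pow_left₀ h30.le (le_max_right _ _) n)
          (pow_le_pow_left₀ h20.le (le_max_left _ _) m) (by positivity) (by positivity)
    _ = (max θ₂ θ₃) ^ (n + m) := (pow_add _ _ _).symm
    _ ≤ (max θ₂ θ₃) ^ k := pow_le_pow_of_le_one hθ0.le hθ1 hk

/-- **Lemma 3.1.** For any probability measure on a two-sided subshift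
satisfying the Gibbs cylinder estimates, there are constants `c₄ > 0` and
`θ₄ ∈ (0,1)`, depending only on `c₁, c₂, c₃, θ₁, θ₂, θ₃`, such that for all
cylinders `C₁` on `Λ₁ = [a₁, b₁]` and `C₂` on `Λ₂ = [a₂, b₂]`,
`|μ(C₁ ∩ C₂) − μ(C₁)μ(C₂)| ≤ c₄·θ₄^{δ(Λ₁,Λ₂)}·μ(C₁)`, where
`δ(Λ₁, Λ₂) = max{b₂ − b₁, a₁ − a₂, 0}`. -/
theorem cylinder_correlation_bound
    (c₁ c₂ c₃ θ₁ θ₂ θ₃ : ℝ) (hc₁ : 0 < c₁) (hc₂ : 0 < c₂) (hc₃ : 0 < c₃)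
    (hθ₁ : θ₁ ∈ Set.Ioo (0 : ℝ) 1) (hθ₂ : θ₂ ∈ Set.Ioo (0 : ℝ) 1)
    (hθ₃ : θ₃ ∈ Set.Ioo (0 : ℝ) 1) :
    ∃ c₄ : ℝ, 0 < c₄ ∧ ∃ θ₄ : ℝ, θ₄ ∈ Set.Ioo (0 : ℝ) 1 ∧
      ∀ (M : ℕ) (Amat : Fin M → Fin M → Bool) (μ : Measure (ℤ → Fin M)),
        2 ≤ M → IsProbabilityMeasure μ → MeasurePreserving (shiftMap M) μ μ →
        μ (shiftSpace M Amat) = 1 →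
        GibbsEstimates M Amat μ c₁ c₂ c₃ θ₁ θ₂ θ₃ →
        ∀ a₁ b₁ a₂ b₂ : ℤ, a₁ ≤ b₁ → a₂ ≤ b₂ →
          ∀ C₁ C₂ : Set (ℤ → Fin M), IsCylinderOn M Amat a₁ b₁ C₁ →
            IsCylinderOn M Amat a₂ b₂ C₂ →
            |(μ (C₁ ∩ C₂)).toReal - (μ C₁).toReal * (μ C₂).toReal| ≤
              c₄ * θ₄ ^ (max (b₂ - b₁) (a₁ - a₂)).toNat * (μ C₁).toReal := by
  obtain ⟨hθ₂0, hθ₂1⟩ := hθ₂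
  obtain ⟨hθ₃0, hθ₃1⟩ := hθ₃
  have hθ₄0 : (0 : ℝ) < max θ₂ θ₃ := lt_max_of_lt_left hθ₂0
  have hθ₄1 : max θ₂ θ₃ < 1 := max_lt hθ₂1 hθ₃1
  refine ⟨2 * c₂ + c₂ * c₃, by positivity, max θ₂ θ₃, ⟨hθ₄0, hθ₄1⟩, ?_⟩
  intro M Amat μ hM hprob hmp hfull hG a₁ b₁ a₂ b₂ h1 h2 C₁ C₂ hC₁ hC₂
  obtain ⟨hF1, hF2, hF3⟩ := hG
  set δ := (max (b₂ - b₁) (a₁ - a₂)).toNat with hδdef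
  have hμC₁0 : 0 ≤ (μ C₁).toReal := ENNReal.toReal_nonneg
  have hμC₂0 : 0 ≤ (μ C₂).toReal := ENNReal.toReal_nonneg
  have hC₂top : (μ C₂).toReal ≤ c₂ * θ₂ ^ (b₂ - a₂ + 1).toNat := (hF1 a₂ b₂ h2 C₂ hC₂).2
  have hfinal : c₂ * c₃ ≤ 2 * c₂ + c₂ * c₃ := by nlinarith
  have hfinal2 : 2 * c₂ ≤ 2 * c₂ + c₂ * c₃ := by nlinarith
  rcases lt_or_ge b₁ a₂ with hAB | hO1
  · -- Case A : Λ₁ strictly to the left of Λ₂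
    have h3 := hF3 a₁ b₁ a₂ b₂ h1 h2 hAB C₁ C₂ hC₁ hC₂
    have hsum : δ ≤ (a₂ - b₁).toNat + (b₂ - a₂ + 1).toNat := by omega
    calc |(μ (C₁ ∩ C₂)).toReal - (μ C₁).toReal * (μ C₂).toReal|
        ≤ c₃ * θ₃ ^ (a₂ - b₁).toNat * ((μ C₁).toReal * (μ C₂).toReal) := h3
      _ ≤ c₃ * θ₃ ^ (a₂ - b₁).toNat *
          ((μ C₁).toReal * (c₂ * θ₂ ^ (b₂ - a₂ + 1).toNat)) := by
          apply mul_le_mul_of_nonneg_left _ (by positivity)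
          exact mul_le_mul_of_nonneg_left hC₂top hμC₁0
      _ = c₂ * c₃ * (θ₃ ^ (a₂ - b₁).toNat * θ₂ ^ (b₂ - a₂ + 1).toNat) * (μ C₁).toReal := by
          ring
      _ ≤ c₂ * c₃ * (max θ₂ θ₃) ^ δ * (μ C₁).toReal := by
          apply mul_le_mul_of_nonneg_right _ hμC₁0
          exact mul_le_mul_of_nonneg_left
            (mix_pow_le hθ₂0 hθ₂1 hθ₃0 hθ₃1 _ _ _ hsum) (by positivity)
      _ ≤ (2 * c₂ + c₂ * c₃) * (max θ₂ θ₃) ^ δ * (μ C₁).toReal := by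
          apply mul_le_mul_of_nonneg_right _ hμC₁0
          exact mul_le_mul_of_nonneg_right hfinal (by positivity)
  rcases lt_or_ge b₂ a₁ with hBA | hO2
  · -- Case B : Λ₂ strictly to the left of Λ₁
    have h3 := hF3 a₂ b₂ a₁ b₁ h2 h1 hBA C₂ C₁ hC₂ hC₁
    rw [Set.inter_comm, mul_comm (μ C₂).toReal] at h3
    have hsum : δ ≤ (a₁ - b₂).toNat + (b₂ - a₂ + 1).toNat := by omega
    calc |(μ (C₁ ∩ C₂)).toReal - (μ C₁).toReal * (μ C₂).toReal|
        ≤ c₃ * θ₃ ^ (a₁ - b₂).toNat * ((μ C₁).toReal * (μ C₂).toReal) := by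
          have := h3; linarith [h3]
      _ ≤ c₃ * θ₃ ^ (a₁ - b₂).toNat *
          ((μ C₁).toReal * (c₂ * θ₂ ^ (b₂ - a₂ + 1).toNat)) := by
          apply mul_le_mul_of_nonneg_left _ (by positivity)
          exact mul_le_mul_of_nonneg_left hC₂top hμC₁0
      _ = c₂ * c₃ * (θ₃ ^ (a₁ - b₂).toNat * θ₂ ^ (b₂ - a₂ + 1).toNat) * (μ C₁).toReal := by
          ring
      _ ≤ c₂ * c₃ * (max θ₂ θ₃) ^ δ * (μ C₁).toReal := by
          apply mul_le_mul_of_nonneg_right _ hμC₁0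
          exact mul_le_mul_of_nonneg_left
            (mix_pow_le hθ₂0 hθ₂1 hθ₃0 hθ₃1 _ _ _ hsum) (by positivity)
      _ ≤ (2 * c₂ + c₂ * c₃) * (max θ₂ θ₃) ^ δ * (μ C₁).toReal := by
          apply mul_le_mul_of_nonneg_right _ hμC₁0
          exact mul_le_mul_of_nonneg_right hfinal (by positivity)
  · -- Case C : the intervals overlap (a₂ ≤ b₁ and a₁ ≤ b₂)
    -- bound for μ(C₁)·μ(C₂)
    have hδle : δ ≤ (b₂ - a₂ + 1).toNat := by omega
    have hprod : (μ C₁).toReal * (μ C₂).toReal ≤ c₂ * (max θ₂ θ₃) ^ δ * (μ C₁).toReal := by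
      have h2' : (μ C₂).toReal ≤ c₂ * (max θ₂ θ₃) ^ δ := by
        refine hC₂top.trans (mul_le_mul_of_nonneg_left ?_ hc₂.le)
        have := mix_pow_le hθ₂0 hθ₂1 hθ₃0 hθ₃1 0 (b₂ - a₂ + 1).toNat δ (by omega)
        simpa using this
      calc (μ C₁).toReal * (μ C₂).toReal ≤ (μ C₁).toReal * (c₂ * (max θ₂ θ₃) ^ δ) :=
            mul_le_mul_of_nonneg_left h2' hμC₁0
        _ = c₂ * (max θ₂ θ₃) ^ δ * (μ C₁).toReal := by ring
    by_cases hne : (C₁ ∩ C₂).Nonempty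
    · -- the intersection is itself a cylinder on [min a₁ a₂, max b₁ b₂]
      obtain ⟨ω₀, hω₀⟩ := hne
      obtain ⟨w1, hw1, _⟩ := hC₁
      obtain ⟨w2, hw2, _⟩ := hC₂
      have hω₁ : ω₀ ∈ shiftSpace M Amat ∧ ∀ i : ℤ, a₁ ≤ i → i ≤ b₁ → ω₀ i = w1 i := by
        have := hω₀.1; rwa [hw1] at this
      have hω₂ : ω₀ ∈ shiftSpace M Amat ∧ ∀ i : ℤ, a₂ ≤ i → i ≤ b₂ → ω₀ i = w2 i := by
        have := hω₀.2; rwa [hw2] at this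
      have hcyl : IsCylinderOn M Amat (min a₁ a₂) (max b₁ b₂) (C₁ ∩ C₂) := by
        refine ⟨ω₀, ?_, ⟨ω₀, hω₀⟩⟩
        ext ω
        simp only [hw1, hw2, Set.mem_inter_iff, Set.mem_setOf_eq]
        constructor
        · rintro ⟨⟨hs, hA⟩, ⟨-, hB⟩⟩
          refine ⟨hs, fun i hai hib => ?_⟩
          rcases le_or_gt a₁ i with hi1 | hi1
          · rcases le_or_gt i b₁ with hi2 | hi2
            · rw [hA i hi1 hi2, ← hω₁.2 i hi1 hi2]
            · have ha : a₂ ≤ i := le_trans hO1 hi2.le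
              have hb : i ≤ b₂ := by omega
              rw [hB i ha hb, ← hω₂.2 i ha hb]
          · have ha : a₂ ≤ i := by omega
            have hb : i ≤ b₂ := le_trans hi1.le hO2
            rw [hB i ha hb, ← hω₂.2 i ha hb]
        · rintro ⟨hs, hagree⟩
          refine ⟨⟨hs, fun i hi1 hi2 => ?_⟩, ⟨hs, fun i hi1 hi2 => ?_⟩⟩
          · rw [hagree i (by omega) (by omega), hω₁.2 i hi1 hi2]
          · rw [hagree i (by omega) (by omega), hω₂.2 i hi1 hi2]
      have hsub : C₁ ∩ C₂ ⊆ C₁ := Set.inter_subset_left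
      have hFact2 := (hF2 a₁ b₁ (min a₁ a₂) (max b₁ b₂) h1 (min_le_left _ _)
        (le_max_left _ _) C₁ (C₁ ∩ C₂) ⟨w1, hw1, ?_⟩ hcyl hsub).2
      swap
      · exact ⟨ω₀, by rw [hw1] at hω₀ ⊢; exact hω₀.1⟩
      have hexp : δ ≤ ((max b₁ b₂ - min a₁ a₂) - (b₁ - a₁)).toNat := by omega
      have hinter : (μ (C₁ ∩ C₂)).toReal ≤ c₂ * (max θ₂ θ₃) ^ δ * (μ C₁).toReal := by
        refine hFact2.trans (mul_le_mul_of_nonneg_right ?_ hμC₁0)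
        refine mul_le_mul_of_nonneg_left ?_ hc₂.le
        calc θ₂ ^ ((max b₁ b₂ - min a₁ a₂) - (b₁ - a₁)).toNat
            ≤ (max θ₂ θ₃) ^ ((max b₁ b₂ - min a₁ a₂) - (b₁ - a₁)).toNat :=
              pow_le_pow_left₀ hθ₂0.le (le_max_left _ _) _
          _ ≤ (max θ₂ θ₃) ^ δ := pow_le_pow_of_le_one hθ₄0.le hθ₄1.le hexp
      calc |(μ (C₁ ∩ C₂)).toReal - (μ C₁).toReal * (μ C₂).toReal|
          ≤ |(μ (C₁ ∩ C₂)).toReal| + |(μ C₁).toReal * (μ C₂).toReal| := abs_sub _ _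
        _ = (μ (C₁ ∩ C₂)).toReal + (μ C₁).toReal * (μ C₂).toReal := by
            rw [abs_of_nonneg ENNReal.toReal_nonneg,
              abs_of_nonneg (mul_nonneg hμC₁0 hμC₂0)]
        _ ≤ c₂ * (max θ₂ θ₃) ^ δ * (μ C₁).toReal + c₂ * (max θ₂ θ₃) ^ δ * (μ C₁).toReal :=
            add_le_add hinter hprod
        _ = 2 * c₂ * (max θ₂ θ₃) ^ δ * (μ C₁).toReal := by ring
        _ ≤ (2 * c₂ + c₂ * c₃) * (max θ₂ θ₃) ^ δ * (μ C₁).toReal := by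
            apply mul_le_mul_of_nonneg_right _ hμC₁0
            exact mul_le_mul_of_nonneg_right hfinal2 (by positivity)
    · -- the intersection is empty
      have hempty : C₁ ∩ C₂ = ∅ := Set.not_nonempty_iff_eq_empty.mp hne
      rw [hempty]
      simp only [measure_empty, ENNReal.toReal_zero, zero_sub, abs_neg]
      rw [abs_of_nonneg (mul_nonneg hμC₁0 hμC₂0)]
      refine hprod.trans ?_
      apply mul_le_mul_of_nonneg_right _ hμC₁0
      exact mul_le_mul_of_nonneg_right (by nlinarith) (by positivity)
end

section
/- (Correlation decay for nested cylinders; key estimate in the proof of Theorem 2.2.) Let μ be a σ-invariant Borel probability measure on Σ_A satisfying the Gibbs cylinder estimates with constants c₁, c₂, c₃ > 0 and θ₁, θ₂, θ₃ ∈ (0,1), and let c₄ > 0, θ₄ ∈ (0,1) be the constants of Lemma 3.1. Let D ≥ 0, let C_m be a cylinder on a finite interval Λ_m ⊂ ℤ and C_n a cylinder on a finite interval Λ_n ⊂ ℤ, and suppose Λ_m is contained in the D-neighborhood of Λ_n (i.e. Λ_m ⊆ [n_n⁻ − D, n_n⁺ + D] where Λ_n = [n_n⁻, n_n⁺]). Then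 for all integers m, n one has |μ(σ^{-m}(C_m) ∩ σ^{-n}(C_n)) − μ(C_m)μ(C_n)| ≤ c₄·θ₄^{|m−n|−D}·μ(C_m). -/
open MeasureTheory Filter

lemma iterate_shift (M : ℕ) (m : ℕ) (ω : ℤ → Fin M) (i : ℤ) :
    (shiftMap M)^[m] ω i = ω (i + m) := by
  induction m generalizing i with
  | zero => simp
  | succ k ih =>
    rw [Function.iterate_succ_apply']
    show (shiftMap M)^[k] ω (i + 1) = _
    rw [ih]
    congr 1; push_cast; ring

lemma cyl_meas (M : ℕ) (Amat : Fin M → Fin M → Bool) (a b : ℤ) (C : Set (ℤ → Fin M))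
    (h : IsCylinderOn M Amat a b C) : MeasurableSet C := by
  obtain ⟨w, hC, -⟩ := h
  rw [hC]
  have : {ω : ℤ → Fin M | ω ∈ shiftSpace M Amat ∧ ∀ i : ℤ, a ≤ i → i ≤ b → ω i = w i}
      = (⋂ i : ℤ, {ω : ℤ → Fin M | Amat (ω i) (ω (i + 1)) = true}) ∩
        ⋂ i : ℤ, ⋂ (_ : a ≤ i), ⋂ (_ : i ≤ b), {ω : ℤ → Fin M | ω i = w i} := by
    ext ω; simp [shiftSpace]
  rw [this]
  apply MeasurableSet.inter
  · exact MeasurableSet.iInter fun i => by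
      have h1 : Measurable fun ω : ℤ → Fin M => (ω i, ω (i + 1)) :=
        (measurable_pi_apply i).prodMk (measurable_pi_apply (i + 1))
      have h2 : Measurable fun p : Fin M × Fin M => Amat p.1 p.2 :=
        measurable_of_countable _
      exact (h2.comp h1) (MeasurableSet.singleton true)
  · refine MeasurableSet.iInter fun i => MeasurableSet.iInter fun _ =>
      MeasurableSet.iInter fun _ => ?_
    show MeasurableSet ((fun ω : ℤ → Fin M => ω i) ⁻¹' {w i})
    exact (measurable_pi_apply i) (measurableSet_singleton (w i))

lemma shift_cyl (M : ℕ) (Amat : Fin M → Fin M → Bool) (a b : ℤ) (C : Set (ℤ → Fin M))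
    (h : IsCylinderOn M Amat a b C) (m : ℕ) :
    IsCylinderOn M Amat (a + m) (b + m) ((shiftMap M)^[m] ⁻¹' C) := by
  obtain ⟨w, hC, hne⟩ := h
  refine ⟨fun j => w (j - m), ?_, ?_⟩
  · ext ω
    simp only [Set.mem_preimage, hC, Set.mem_setOf_eq]
    constructor
    · rintro ⟨hs, hw⟩
      constructor
      · intro i
        have := hs (i - m)
        simpa [iterate_shift, sub_add_cancel, sub_add_eq_add_sub] using this
      · intro i h1 h2
        have := hw (i - m) (by omega) (by omega)
        rw [iterate_shift] at this
        simpa [sub_add_cancel] using this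
    · rintro ⟨hs, hw⟩
      constructor
      · intro i
        have h1 := iterate_shift M m ω i
        have h2 := iterate_shift M m ω (i + 1)
        rw [h1, h2]
        have := hs (i + m)
        convert this using 3
        ring
      · intro i h1 h2
        rw [iterate_shift]
        have := hw (i + m) (by omega) (by omega)
        simpa using this
  · obtain ⟨ω₀, hω₀⟩ := hne
    refine ⟨fun j => ω₀ (j - m), ?_⟩
    simp only [Set.mem_preimage]
    have : (shiftMap M)^[m] (fun j => ω₀ (j - m)) = ω₀ := by
      funext i
      rw [iterate_shift]
      simp
    rw [this]; exact hω₀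

/-- **Key estimate in the proof of Theorem 2.2.** Let `μ` satisfy the Gibbs
cylinder estimates and let `c₄ > 0`, `θ₄ ∈ (0,1)` be the constants of
Lemma 3.1. If `C_m` is a cylinder on `Λ_m` and `C_n` a cylinder on `Λ_n`, and
`Λ_m` lies in the `D`-neighborhood of `Λ_n`, then for all `m, n`,
`|μ(σ^{-m}C_m ∩ σ^{-n}C_n) − μ(C_m)μ(C_n)| ≤ c₄·θ₄^{|m−n|−D}·μ(C_m)`. -/
theorem nested_cylinder_correlation_decay
    (M : ℕ) (hM : 2 ≤ M) (Amat : Fin M → Fin M → Bool)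
    (μ : Measure (ℤ → Fin M)) [IsProbabilityMeasure μ]
    (hinv : MeasurePreserving (shiftMap M) μ μ) (hsupp : μ (shiftSpace M Amat) = 1)
    (c₁ c₂ c₃ θ₁ θ₂ θ₃ : ℝ) (hc₁ : 0 < c₁) (hc₂ : 0 < c₂) (hc₃ : 0 < c₃)
    (hθ₁ : θ₁ ∈ Set.Ioo (0 : ℝ) 1) (hθ₂ : θ₂ ∈ Set.Ioo (0 : ℝ) 1)
    (hθ₃ : θ₃ ∈ Set.Ioo (0 : ℝ) 1)
    (hGibbs : GibbsEstimates M Amat μ c₁ c₂ c₃ θ₁ θ₂ θ₃)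
    (c₄ θ₄ : ℝ) (hc₄ : 0 < c₄) (hθ₄ : θ₄ ∈ Set.Ioo (0 : ℝ) 1)
    (hL : ∀ a₁ b₁ a₂ b₂ : ℤ, a₁ ≤ b₁ → a₂ ≤ b₂ →
      ∀ C₁ C₂ : Set (ℤ → Fin M), IsCylinderOn M Amat a₁ b₁ C₁ →
        IsCylinderOn M Amat a₂ b₂ C₂ →
        |(μ (C₁ ∩ C₂)).toReal - (μ C₁).toReal * (μ C₂).toReal| ≤
          c₄ * θ₄ ^ (max (b₂ - b₁) (a₁ - a₂)).toNat * (μ C₁).toReal)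
    (D : ℤ) (hD : 0 ≤ D)
    (am bm an bn : ℤ) (ham : am ≤ bm) (han : an ≤ bn)
    (Cm Cn : Set (ℤ → Fin M))
    (hCm : IsCylinderOn M Amat am bm Cm) (hCn : IsCylinderOn M Amat an bn Cn)
    (hnest : an - D ≤ am ∧ bm ≤ bn + D) :
    ∀ m n : ℕ,
      |(μ ((shiftMap M)^[m] ⁻¹' Cm ∩ (shiftMap M)^[n] ⁻¹' Cn)).toReal -
          (μ Cm).toReal * (μ Cn).toReal| ≤
        c₄ * θ₄ ^ (|(m : ℤ) - (n : ℤ)| - D) * (μ Cm).toReal := by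
  intro m n
  have hCm' := shift_cyl M Amat am bm Cm hCm m
  have hCn' := shift_cyl M Amat an bn Cn hCn n
  have hmeq : μ ((shiftMap M)^[m] ⁻¹' Cm) = μ Cm :=
    (hinv.iterate m).measure_preimage (cyl_meas M Amat am bm Cm hCm).nullMeasurableSet
  have hneq : μ ((shiftMap M)^[n] ⁻¹' Cn) = μ Cn :=
    (hinv.iterate n).measure_preimage (cyl_meas M Amat an bn Cn hCn).nullMeasurableSet
  have key := hL (am + m) (bm + m) (an + n) (bn + n) (by omega) (by omega)
    _ _ hCm' hCn'
  rw [hmeq, hneq] at key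
  refine key.trans ?_
  have hK : |(m : ℤ) - (n : ℤ)| - D ≤
      ((max ((bn + n) - (bm + m)) ((am + m) - (an + n))).toNat : ℤ) := by
    rcases abs_cases ((m : ℤ) - (n : ℤ)) with ⟨h, _⟩ | ⟨h, _⟩ <;> omega
  have hpow : θ₄ ^ (max ((bn + n) - (bm + m)) ((am + m) - (an + n))).toNat ≤
      θ₄ ^ (|(m : ℤ) - (n : ℤ)| - D) := by
    rw [← zpow_natCast θ₄]
    exact zpow_le_zpow_right_of_le_one₀ hθ₄.1 hθ₄.2.le hK
  exact mul_le_mul_of_nonneg_right (mul_le_mul_of_nonneg_left hpow hc₄.le)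
    ENNReal.toReal_nonneg
end

section
/- (Theorem 2.2.) Let μ be a σ-invariant Borel probability measure on the two-sided subshift Σ_A satisfying the Gibbs cylinder estimates with constants c₁, c₂, c₃ > 0 and θ₁, θ₂, θ₃ ∈ (0,1). Let D ≥ 0 and let (C_n)_{n≥1} be a sequence of cylinders defined on finite intervals Λ_n ⊂ ℤ such that for all m, n ≥ 1 the intervals Λ_m and Λ_n are D-nested. Then (C_n) satisfies condition (SP) for the shift σ: there exists C > 0 such that ∑_{m,n=M}^N [ μ(σ^{-m}(C_m) ∩ σ^{-n}(C_n)) − μ(C_m)μ(C_n) ] ≤ C·∑_{n=M}^N μ(C_n) for all integers 1 ≤ M ≤ N. Consequently, if in addition ∑_{n=1}^∞ μ(C_n) = ∞, then for μ-a.e. ω ∈ Σ_A one has #{1 ≤ n ≤ N : σ^n(ω) ∈ C_n} / ∑_{n=1}^N μ(C_n) → 1 as N → ∞ (in particular (C_n) is a strongly Borel–Cantelli sequence). -/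
open MeasureTheory Filter

section SPhelpers
variable {M : ℕ} {Amat : Fin M → Fin M → Bool}

lemma shiftMap_iterate (n : ℕ) (ω : ℤ → Fin M) (i : ℤ) :
    (shiftMap M)^[n] ω i = ω (i + n) := by
  induction n generalizing ω i with
  | zero => simp
  | succ k ih =>
    rw [Function.iterate_succ_apply, ih (shiftMap M ω) i]
    show ω (i + k + 1) = _
    congr 1; push_cast; ring

lemma measurable_shiftMap : Measurable (shiftMap M) := by
  apply measurable_pi_lambda
  intro i
  exact measurable_pi_apply (i + 1)

lemma measurableSet_shiftSpace : MeasurableSet (shiftSpace M Amat) := by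
  have : shiftSpace M Amat = ⋂ i : ℤ, {ω : ℤ → Fin M | Amat (ω i) (ω (i+1)) = true} := by
    ext ω; simp [shiftSpace, Set.mem_iInter]
  rw [this]
  refine MeasurableSet.iInter fun i => ?_
  have h1 : Measurable fun ω : ℤ → Fin M => (ω i, ω (i+1)) :=
    (measurable_pi_apply i).prodMk (measurable_pi_apply (i+1))
  have h2 : MeasurableSet {p : Fin M × Fin M | Amat p.1 p.2 = true} :=
    MeasurableSet.of_discrete
  exact h1 h2

lemma IsCylinderOn.measurableSet {a b : ℤ} {C : Set (ℤ → Fin M)}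
    (h : IsCylinderOn M Amat a b C) : MeasurableSet C := by
  obtain ⟨w, rfl, -⟩ := h
  have : {ω : ℤ → Fin M | ω ∈ shiftSpace M Amat ∧ ∀ i : ℤ, a ≤ i → i ≤ b → ω i = w i}
      = shiftSpace M Amat ∩ ⋂ i : ℤ, ⋂ (_ : a ≤ i), ⋂ (_ : i ≤ b), {ω : ℤ → Fin M | ω i = w i} := by
    ext ω; simp [Set.mem_iInter]
  rw [this]
  refine measurableSet_shiftSpace.inter ?_
  refine MeasurableSet.iInter fun i => MeasurableSet.iInter fun _ => MeasurableSet.iInter fun _ => ?_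
  have : {ω : ℤ → Fin M | ω i = w i} = (fun ω : ℤ → Fin M => ω i) ⁻¹' {w i} := rfl
  rw [this]
  exact (measurable_pi_apply i) (measurableSet_singleton (w i))

lemma shift_preimage_shiftSpace (n : ℕ) :
    (shiftMap M)^[n] ⁻¹' (shiftSpace M Amat) = shiftSpace M Amat := by
  ext ω
  simp only [Set.mem_preimage, shiftSpace, Set.mem_setOf_eq, shiftMap_iterate]
  constructor
  · intro h j
    have := h (j - n)
    have e1 : j - (n:ℤ) + n = j := by ring
    have e2 : j - (n:ℤ) + 1 + n = j + 1 := by ring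
    rwa [e1, e2] at this
  · intro h i
    have := h (i + n)
    have e : i + (n:ℤ) + 1 = i + 1 + n := by ring
    rwa [e] at this

lemma mem_shiftSpace_iterate_iff (n : ℕ) (ω : ℤ → Fin M) :
    (shiftMap M)^[n] ω ∈ shiftSpace M Amat ↔ ω ∈ shiftSpace M Amat := by
  rw [← Set.mem_preimage, shift_preimage_shiftSpace]

lemma IsCylinderOn.preimage {a b : ℤ} {C : Set (ℤ → Fin M)}
    (h : IsCylinderOn M Amat a b C) (n : ℕ) :
    IsCylinderOn M Amat (a + n) (b + n) ((shiftMap M)^[n] ⁻¹' C) := by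
  obtain ⟨w, hC, hne⟩ := h
  refine ⟨fun j => w (j - n), ?_, ?_⟩
  · ext ω
    rw [Set.mem_preimage, hC]
    simp only [Set.mem_setOf_eq, shiftMap_iterate, mem_shiftSpace_iterate_iff]
    constructor
    · rintro ⟨h1, h2⟩
      refine ⟨h1, fun j hj1 hj2 => ?_⟩
      have := h2 (j - n) (by omega) (by omega)
      have e : j - (n:ℤ) + n = j := by ring
      rwa [e] at this
    · rintro ⟨h1, h2⟩
      refine ⟨h1, fun i hi1 hi2 => ?_⟩
      have := h2 (i + n) (by omega) (by omega)
      have e : i + (n:ℤ) - n = i := by ring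
      rwa [e] at this
  · obtain ⟨ω', hω'⟩ := hne
    rw [hC] at hω' ⊢
    refine ⟨fun j => ω' (j - n), ?_⟩
    rw [Set.mem_preimage]
    have : (shiftMap M)^[n] (fun j => ω' (j - n)) = ω' := by
      funext i
      rw [shiftMap_iterate]
      simp only [add_sub_cancel_right]
    rw [this]
    exact hω'

lemma cylinder_inter {a₁ b₁ a₂ b₂ : ℤ} {C₁ C₂ : Set (ℤ → Fin M)}
    (h1 : IsCylinderOn M Amat a₁ b₁ C₁) (h2 : IsCylinderOn M Amat a₂ b₂ C₂)
    (hg1 : a₂ ≤ b₁ + 1) (hg2 : a₁ ≤ b₂ + 1)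
    (hne : (C₁ ∩ C₂).Nonempty) :
    IsCylinderOn M Amat (min a₁ a₂) (max b₁ b₂) (C₁ ∩ C₂) := by
  obtain ⟨ω₀, hω₀1, hω₀2⟩ := hne
  obtain ⟨u, hC1, -⟩ := h1
  obtain ⟨v, hC2, -⟩ := h2
  refine ⟨ω₀, ?_, ⟨ω₀, hω₀1, hω₀2⟩⟩
  have hu1 : ω₀ ∈ shiftSpace M Amat := by rw [hC1] at hω₀1; exact hω₀1.1
  have hu : ∀ i, a₁ ≤ i → i ≤ b₁ → ω₀ i = u i := by rw [hC1] at hω₀1; exact hω₀1.2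
  have hv : ∀ i, a₂ ≤ i → i ≤ b₂ → ω₀ i = v i := by rw [hC2] at hω₀2; exact hω₀2.2
  ext ω
  constructor
  · rintro ⟨m1, m2⟩
    rw [hC1] at m1; rw [hC2] at m2
    refine ⟨m1.1, fun i hi1 hi2 => ?_⟩
    rcases le_or_gt a₁ i with h | h
    · rcases le_or_gt i b₁ with h' | h'
      · rw [m1.2 i h h', ← hu i h h']
      · have ha2 : a₂ ≤ i := by omega
        have hb2 : i ≤ b₂ := by omega
        rw [m2.2 i ha2 hb2, ← hv i ha2 hb2]
    · have ha2 : a₂ ≤ i := by omega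
      have hb2 : i ≤ b₂ := by omega
      rw [m2.2 i ha2 hb2, ← hv i ha2 hb2]
  · rintro ⟨hsig, hagree⟩
    constructor
    · rw [hC1]
      refine ⟨hsig, fun i hi1 hi2 => ?_⟩
      rw [hagree i (by omega) (by omega), hu i hi1 hi2]
    · rw [hC2]
      refine ⟨hsig, fun i hi1 hi2 => ?_⟩
      rw [hagree i (by omega) (by omega), hv i hi1 hi2]

lemma pow_div_helper {θ : ℝ} (h0 : 0 < θ) (h1 : θ ≤ 1) {E D' d : ℕ}
    (h : (d : ℤ) ≤ (E : ℤ) + (D' : ℤ)) : θ ^ E ≤ θ⁻¹ ^ D' * θ ^ d := by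
  have hd : d ≤ E + D' := by exact_mod_cast h
  rw [inv_pow, inv_mul_eq_div, le_div_iff₀ (pow_pos h0 D'), ← pow_add]
  exact pow_le_pow_of_le_one h0.le h1 hd

lemma pair_bound {M : ℕ} {Amat : Fin M → Fin M → Bool}
    (μ : Measure (ℤ → Fin M)) [IsProbabilityMeasure μ]
    (hinv : MeasurePreserving (shiftMap M) μ μ)
    (c₁ c₂ c₃ θ₁ θ₂ θ₃ : ℝ) (hc₂ : 0 < c₂) (hc₃ : 0 < c₃)
    (hθ₂ : θ₂ ∈ Set.Ioo (0:ℝ) 1) (hθ₃ : θ₃ ∈ Set.Ioo (0:ℝ) 1)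
    (hGibbs : GibbsEstimates M Amat μ c₁ c₂ c₃ θ₁ θ₂ θ₃)
    (D : ℤ) (hD : 0 ≤ D)
    {m n : ℕ} {am bm an bn : ℤ} (habm : am ≤ bm) (habn : an ≤ bn)
    {Cm Cn : Set (ℤ → Fin M)}
    (hcm : IsCylinderOn M Amat am bm Cm) (hcn : IsCylinderOn M Amat an bn Cn)
    (hnst : (an - D ≤ am ∧ bm ≤ bn + D) ∨ (am - D ≤ an ∧ bn ≤ bm + D))
    (hmn : m < n) :
    (μ ((shiftMap M)^[m] ⁻¹' Cm ∩ (shiftMap M)^[n] ⁻¹' Cn)).toReal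
      - (μ Cm).toReal * (μ Cn).toReal
    ≤ ((c₂*c₃ + c₂ + c₃) * (max θ₂ θ₃)⁻¹ ^ (D.toNat + 1)) * (max θ₂ θ₃) ^ (n - m)
        * ((μ Cm).toReal + (μ Cn).toReal) := by
  set θ := max θ₂ θ₃ with hθdef
  have hθ0 : 0 < θ := lt_max_of_lt_left hθ₂.1
  have hθ1 : θ ≤ 1 := max_le hθ₂.2.le hθ₃.2.le
  set Q : ℝ := c₂*c₃ + c₂ + c₃ with hQdef
  have hQ0 : 0 ≤ Q := by positivity
  set Dm : Set (ℤ → Fin M) := (shiftMap M)^[m] ⁻¹' Cm with hDmdef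
  set Dn : Set (ℤ → Fin M) := (shiftMap M)^[n] ⁻¹' Cn with hDndef
  have hcmD : IsCylinderOn M Amat (am + m) (bm + m) Dm := hcm.preimage m
  have hcnD : IsCylinderOn M Amat (an + n) (bn + n) Dn := hcn.preimage n
  have hμm : μ Dm = μ Cm :=
    (hinv.iterate m).measure_preimage hcm.measurableSet.nullMeasurableSet
  have hμn : μ Dn = μ Cn :=
    (hinv.iterate n).measure_preimage hcn.measurableSet.nullMeasurableSet
  have h0m : (0:ℝ) ≤ (μ Cm).toReal := ENNReal.toReal_nonneg
  have h0n : (0:ℝ) ≤ (μ Cn).toReal := ENNReal.toReal_nonneg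
  have h1n : (μ Cn).toReal ≤ 1 := by
    rw [← ENNReal.toReal_one]
    exact ENNReal.toReal_mono (by simp) prob_le_one
  -- the uniform final step
  have main : ∀ (co : ℝ) (E : ℕ) (x : ℝ) (t : ℝ), 0 ≤ co → co ≤ Q →
      ((n - m : ℕ) : ℤ) ≤ (E : ℤ) + ((D.toNat + 1 : ℕ) : ℤ) →
      0 ≤ x → x ≤ (μ Cm).toReal + (μ Cn).toReal →
      t ≤ co * θ ^ E * x →
      t ≤ (Q * θ⁻¹ ^ (D.toNat + 1)) * θ ^ (n - m) * ((μ Cm).toReal + (μ Cn).toReal) := by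
    intro co E x t hco0 hcoQ hE hx0 hxle ht
    refine ht.trans ?_
    have h1 : θ ^ E ≤ θ⁻¹ ^ (D.toNat + 1) * θ ^ (n - m) := pow_div_helper hθ0 hθ1 hE
    calc co * θ ^ E * x
        ≤ Q * (θ⁻¹ ^ (D.toNat + 1) * θ ^ (n - m)) * ((μ Cm).toReal + (μ Cn).toReal) := by
          refine mul_le_mul ?_ hxle hx0 ?_
          · exact mul_le_mul hcoQ h1 (pow_nonneg hθ0.le E) hQ0
          · exact mul_nonneg hQ0
              (mul_nonneg (pow_nonneg (inv_nonneg.2 hθ0.le) _) (pow_nonneg hθ0.le _))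
      _ = (Q * θ⁻¹ ^ (D.toNat + 1)) * θ ^ (n - m) * ((μ Cm).toReal + (μ Cn).toReal) := by
          ring
  have hθ2θ : θ₂ ≤ θ := le_max_left _ _
  have hθ3θ : θ₃ ≤ θ := le_max_right _ _
  rcases lt_or_ge (bm + (m:ℤ) + 1) (an + n) with hord | hcov1
  · -- Case 1: Dm strictly left of Dn, gap ≥ 1
    have hlt : bm + (m:ℤ) < an + n := by omega
    have F3 := hGibbs.2.2 (am + m) (bm + m) (an + n) (bn + n) (by omega) (by omega) hlt
      Dm Dn hcmD hcnD
    have ht : (μ (Dm ∩ Dn)).toReal - (μ Cm).toReal * (μ Cn).toReal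
        ≤ c₃ * θ₃ ^ ((an + n) - (bm + m)).toNat * ((μ Cm).toReal * (μ Cn).toReal) := by
      rw [hμm, hμn] at F3
      have := abs_le.mp F3
      linarith [this.2]
    set g : ℕ := ((an + n) - (bm + m)).toNat with hgdef
    rcases hnst with ⟨h1', h2'⟩ | ⟨h1', h2'⟩
    · -- Λm inside Λn-D-neighborhood : expand μ Cn
      set Ln : ℕ := (bn - an + 1).toNat with hLndef
      have hF1 : (μ Cn).toReal ≤ c₂ * θ₂ ^ Ln := (hGibbs.1 an bn habn Cn hcn).2
      apply main (c₂*c₃) (g + Ln) ((μ Cm).toReal) _ (by positivity) (by nlinarith) ?_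
        h0m (by linarith) ?_
      · have e1 := Int.self_le_toNat ((an + n) - (bm + m))
        have e2 := Int.self_le_toNat (bn - an + 1)
        omega
      · refine ht.trans ?_
        have step : (μ Cm).toReal * (μ Cn).toReal ≤ (μ Cm).toReal * (c₂ * θ₂ ^ Ln) :=
          mul_le_mul_of_nonneg_left hF1 h0m
        have step2 : c₃ * θ₃ ^ g * ((μ Cm).toReal * (μ Cn).toReal)
            ≤ c₃ * θ₃ ^ g * ((μ Cm).toReal * (c₂ * θ₂ ^ Ln)) :=
          mul_le_mul_of_nonneg_left step (mul_nonneg hc₃.le (pow_nonneg hθ₃.1.le _))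
        refine step2.trans ?_
        have hp1 : θ₃ ^ g ≤ θ ^ g := pow_le_pow_left₀ hθ₃.1.le hθ3θ g
        have hp2 : θ₂ ^ Ln ≤ θ ^ Ln := pow_le_pow_left₀ hθ₂.1.le hθ2θ Ln
        have : θ₃ ^ g * θ₂ ^ Ln ≤ θ ^ (g + Ln) := by
          rw [pow_add]
          exact mul_le_mul hp1 hp2 (pow_nonneg hθ₂.1.le _) (pow_nonneg hθ0.le _)
        calc c₃ * θ₃ ^ g * ((μ Cm).toReal * (c₂ * θ₂ ^ Ln))
            = c₂ * c₃ * (θ₃ ^ g * θ₂ ^ Ln) * (μ Cm).toReal := by ring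
          _ ≤ c₂ * c₃ * θ ^ (g + Ln) * (μ Cm).toReal := by
              apply mul_le_mul_of_nonneg_right _ h0m
              exact mul_le_mul_of_nonneg_left this (by positivity)
    · -- Λn inside Λm-D-neighborhood : expand μ Cm
      set Lm : ℕ := (bm - am + 1).toNat with hLmdef
      have hF1 : (μ Cm).toReal ≤ c₂ * θ₂ ^ Lm := (hGibbs.1 am bm habm Cm hcm).2
      apply main (c₂*c₃) (g + Lm) ((μ Cn).toReal) _ (by positivity) (by nlinarith) ?_
        h0n (by linarith) ?_
      · have e1 := Int.self_le_toNat ((an + n) - (bm + m))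
        have e2 := Int.self_le_toNat (bm - am + 1)
        omega
      · refine ht.trans ?_
        have step : (μ Cm).toReal * (μ Cn).toReal ≤ (c₂ * θ₂ ^ Lm) * (μ Cn).toReal :=
          mul_le_mul_of_nonneg_right hF1 h0n
        have step2 : c₃ * θ₃ ^ g * ((μ Cm).toReal * (μ Cn).toReal)
            ≤ c₃ * θ₃ ^ g * ((c₂ * θ₂ ^ Lm) * (μ Cn).toReal) :=
          mul_le_mul_of_nonneg_left step (mul_nonneg hc₃.le (pow_nonneg hθ₃.1.le _))
        refine step2.trans ?_
        have hp1 : θ₃ ^ g ≤ θ ^ g := pow_le_pow_left₀ hθ₃.1.le hθ3θ g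
        have hp2 : θ₂ ^ Lm ≤ θ ^ Lm := pow_le_pow_left₀ hθ₂.1.le hθ2θ Lm
        have : θ₃ ^ g * θ₂ ^ Lm ≤ θ ^ (g + Lm) := by
          rw [pow_add]
          exact mul_le_mul hp1 hp2 (pow_nonneg hθ₂.1.le _) (pow_nonneg hθ0.le _)
        calc c₃ * θ₃ ^ g * ((c₂ * θ₂ ^ Lm) * (μ Cn).toReal)
            = c₂ * c₃ * (θ₃ ^ g * θ₂ ^ Lm) * (μ Cn).toReal := by ring
          _ ≤ c₂ * c₃ * θ ^ (g + Lm) * (μ Cn).toReal := by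
              apply mul_le_mul_of_nonneg_right _ h0n
              exact mul_le_mul_of_nonneg_left this (by positivity)
  rcases lt_or_ge (bn + (n:ℤ) + 1) (am + m) with hord2 | hcov2
  · -- Case 2: Dn strictly left of Dm; this forces n - m small
    have hlt : bn + (n:ℤ) < am + m := by omega
    have F3 := hGibbs.2.2 (an + n) (bn + n) (am + m) (bm + m) (by omega) (by omega) hlt
      Dn Dm hcnD hcmD
    rw [hμm, hμn, Set.inter_comm Dn Dm] at F3
    have habs := (abs_le.mp F3).2
    have hts : θ₃ ^ ((am + m) - (bn + n)).toNat ≤ 1 := pow_le_one₀ hθ₃.1.le hθ₃.2.le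
    have ht : (μ (Dm ∩ Dn)).toReal - (μ Cm).toReal * (μ Cn).toReal
        ≤ c₃ * 1 * (μ Cm).toReal := by
      have hp : 0 ≤ (μ Cn).toReal * (μ Cm).toReal := mul_nonneg h0n h0m
      have h3 : c₃ * θ₃ ^ (am + (m:ℤ) - (bn + n)).toNat * ((μ Cn).toReal * (μ Cm).toReal)
          ≤ c₃ * ((μ Cn).toReal * (μ Cm).toReal) := by
        have := mul_le_mul_of_nonneg_left hts hc₃.le
        calc c₃ * θ₃ ^ (am + (m:ℤ) - (bn + n)).toNat * ((μ Cn).toReal * (μ Cm).toReal)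
            ≤ (c₃ * 1) * ((μ Cn).toReal * (μ Cm).toReal) :=
              mul_le_mul_of_nonneg_right this hp
          _ = c₃ * ((μ Cn).toReal * (μ Cm).toReal) := by ring
      have h2 : (μ Cn).toReal * (μ Cm).toReal ≤ (μ Cm).toReal := by nlinarith
      have h4 : c₃ * ((μ Cn).toReal * (μ Cm).toReal) ≤ c₃ * (μ Cm).toReal :=
        mul_le_mul_of_nonneg_left h2 hc₃.le
      have h5 : (μ (Dm ∩ Dn)).toReal - (μ Cm).toReal * (μ Cn).toReal
          = (μ (Dm ∩ Dn)).toReal - (μ Cn).toReal * (μ Cm).toReal := by ring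
      linarith
    apply main c₃ 0 ((μ Cm).toReal) _ hc₃.le (by nlinarith) ?_ h0m (by linarith) (by simpa using ht)
    · -- n - m ≤ D + 1 from geometry
      have ham : am ≤ bn + D := by
        rcases hnst with ⟨h1', h2'⟩ | ⟨h1', h2'⟩
        · omega
        · omega
      omega
  · -- Case 3: the shifted windows overlap (hull covered)
    by_cases hne : (Dm ∩ Dn).Nonempty
    · have hJ : IsCylinderOn M Amat (min (am + m) (an + n)) (max (bm + m) (bn + n)) (Dm ∩ Dn) :=
        cylinder_inter hcmD hcnD (by omega) (by omega) hne
      rcases hnst with ⟨h1', h2'⟩ | ⟨h1', h2'⟩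
      · -- use Fact 2 over Dm
        have F2 := (hGibbs.2.1 (am + m) (bm + m) (min (am + m) (an + n)) (max (bm + m) (bn + n))
          (by omega) (min_le_left _ _) (le_max_left _ _) Dm (Dm ∩ Dn) hcmD hJ
          Set.inter_subset_left).2
        rw [hμm] at F2
        set E : ℕ := ((max (bm + m) (bn + n) - min (am + m) (an + n)) - (bm + m - (am + m))).toNat
          with hEdef
        apply main c₂ E ((μ Cm).toReal) _ hc₂.le (by nlinarith) ?_ h0m (by linarith) ?_
        · have e1 := Int.self_le_toNat ((max (bm + m) (bn + n) - min (am + m) (an + n))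
            - (bm + m - (am + m)))
          omega
        · have : (μ (Dm ∩ Dn)).toReal - (μ Cm).toReal * (μ Cn).toReal
              ≤ (μ (Dm ∩ Dn)).toReal := by nlinarith
          refine this.trans (F2.trans ?_)
          apply mul_le_mul_of_nonneg_right _ h0m
          exact mul_le_mul_of_nonneg_left (pow_le_pow_left₀ hθ₂.1.le hθ2θ E) hc₂.le
      · -- use Fact 2 over Dn
        have F2 := (hGibbs.2.1 (an + n) (bn + n) (min (am + m) (an + n)) (max (bm + m) (bn + n))
          (by omega) (min_le_right _ _) (le_max_right _ _) Dn (Dm ∩ Dn) hcnD hJ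
          Set.inter_subset_right).2
        rw [hμn] at F2
        set E : ℕ := ((max (bm + m) (bn + n) - min (am + m) (an + n)) - (bn + n - (an + n))).toNat
          with hEdef
        apply main c₂ E ((μ Cn).toReal) _ hc₂.le (by nlinarith) ?_ h0n (by linarith) ?_
        · have e1 := Int.self_le_toNat ((max (bm + m) (bn + n) - min (am + m) (an + n))
            - (bn + n - (an + n)))
          omega
        · have : (μ (Dm ∩ Dn)).toReal - (μ Cm).toReal * (μ Cn).toReal
              ≤ (μ (Dm ∩ Dn)).toReal := by nlinarith
          refine this.trans (F2.trans ?_)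
          apply mul_le_mul_of_nonneg_right _ h0n
          exact mul_le_mul_of_nonneg_left (pow_le_pow_left₀ hθ₂.1.le hθ2θ E) hc₂.le
    · -- empty intersection
      rw [Set.not_nonempty_iff_eq_empty] at hne
      rw [hne]
      simp only [measure_empty, ENNReal.toReal_zero, zero_sub]
      have hR : (0:ℝ) ≤ (Q * θ⁻¹ ^ (D.toNat + 1)) * θ ^ (n - m) * ((μ Cm).toReal + (μ Cn).toReal) := by
        apply mul_nonneg (mul_nonneg (mul_nonneg hQ0 (pow_nonneg (inv_nonneg.2 hθ0.le) _))
          (pow_nonneg hθ0.le _)) (by linarith)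
      have hp : 0 ≤ (μ Cm).toReal * (μ Cn).toReal := mul_nonneg h0m h0n
      linarith

lemma sum_pow_le {θ : ℝ} (h0 : 0 ≤ θ) (h1 : θ < 1) (T : Finset ℕ) (hT : 0 ∉ T) :
    ∑ k ∈ T, θ ^ k ≤ θ / (1 - θ) := by
  have h1' : (0:ℝ) < 1 - θ := by linarith
  have hsub : T ⊆ (Finset.range (T.sup id + 1)).erase 0 := by
    intro k hk
    rw [Finset.mem_erase, Finset.mem_range]
    exact ⟨fun h => hT (h ▸ hk), Nat.lt_succ_of_le (Finset.le_sup (f := id) hk)⟩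
  have hmono := Finset.sum_le_sum_of_subset_of_nonneg hsub
    (fun i _ _ => pow_nonneg h0 i)
  refine hmono.trans ?_
  rw [Finset.sum_erase_eq_sub (Finset.mem_range.mpr (Nat.succ_pos _))]
  have hgeom : ∑ k ∈ Finset.range (T.sup id + 1), θ ^ k ≤ 1 / (1 - θ) := by
    rw [geom_sum_eq (ne_of_lt h1)]
    have he2 : (θ ^ (T.sup id + 1) - 1) / (θ - 1) = (1 - θ ^ (T.sup id + 1)) / (1 - θ) := by
      rw [← neg_div_neg_eq, neg_sub, neg_sub]
    rw [he2, div_le_div_iff₀ h1' h1']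
    have hp : 0 ≤ θ ^ (T.sup id + 1) := pow_nonneg h0 _
    nlinarith
  have he : (1:ℝ) / (1 - θ) - 1 = θ / (1 - θ) := by
    field_simp
    ring
  simp only [pow_zero]
  linarith

lemma geo_dist_le {θ : ℝ} (h0 : 0 ≤ θ) (h1 : θ < 1) (S : Finset ℕ) (m : ℕ) :
    ∑ k ∈ S.erase m, θ ^ (Nat.dist m k) ≤ 2 * (θ / (1 - θ)) := by
  have h1' : (0:ℝ) < 1 - θ := by linarith
  have hsplit : S.erase m = (S.filter (fun k => k < m)) ∪ (S.filter (fun k => m < k)) := by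
    ext k
    simp only [Finset.mem_erase, Finset.mem_union, Finset.mem_filter]
    constructor
    · rintro ⟨hne, hk⟩
      rcases lt_or_gt_of_ne hne with h | h
      · exact Or.inl ⟨hk, h⟩
      · exact Or.inr ⟨hk, h⟩
    · rintro (⟨hk, h⟩ | ⟨hk, h⟩) <;> exact ⟨by omega, hk⟩
  have hdisj : Disjoint (S.filter (fun k => k < m)) (S.filter (fun k => m < k)) := by
    rw [Finset.disjoint_left]
    intro k hk1 hk2
    simp only [Finset.mem_filter] at hk1 hk2
    omega
  rw [hsplit, Finset.sum_union hdisj]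
  have hlt : ∑ k ∈ S.filter (fun k => k < m), θ ^ (Nat.dist m k) ≤ θ / (1 - θ) := by
    have hinj : Set.InjOn (fun k => m - k) (S.filter (fun k => k < m)) := by
      intro x hx y hy hxy
      simp only [Finset.coe_filter, Set.mem_setOf_eq] at hx hy
      simp only at hxy
      omega
    have heq : ∑ k ∈ S.filter (fun k => k < m), θ ^ (Nat.dist m k)
        = ∑ j ∈ (S.filter (fun k => k < m)).image (fun k => m - k), θ ^ j := by
      rw [Finset.sum_image hinj]
      apply Finset.sum_congr rfl
      intro k hk
      simp only [Finset.mem_filter] at hk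
      congr 1
      simp only [Nat.dist]
      omega
    rw [heq]
    apply sum_pow_le h0 h1
    intro h
    rw [Finset.mem_image] at h
    obtain ⟨k, hk, hk0⟩ := h
    simp only [Finset.mem_filter] at hk
    omega
  have hgt : ∑ k ∈ S.filter (fun k => m < k), θ ^ (Nat.dist m k) ≤ θ / (1 - θ) := by
    have hinj : Set.InjOn (fun k => k - m) (S.filter (fun k => m < k)) := by
      intro x hx y hy hxy
      simp only [Finset.coe_filter, Set.mem_setOf_eq] at hx hy
      simp only at hxy
      omega
    have heq : ∑ k ∈ S.filter (fun k => m < k), θ ^ (Nat.dist m k)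
        = ∑ j ∈ (S.filter (fun k => m < k)).image (fun k => k - m), θ ^ j := by
      rw [Finset.sum_image hinj]
      apply Finset.sum_congr rfl
      intro k hk
      simp only [Finset.mem_filter] at hk
      congr 1
      simp only [Nat.dist]
      omega
    rw [heq]
    apply sum_pow_le h0 h1
    intro h
    rw [Finset.mem_image] at h
    obtain ⟨k, hk, hk0⟩ := h
    simp only [Finset.mem_filter] at hk
    omega
  linarith

lemma SP_exists {M : ℕ} {Amat : Fin M → Fin M → Bool}
    (μ : Measure (ℤ → Fin M)) [IsProbabilityMeasure μ]
    (hinv : MeasurePreserving (shiftMap M) μ μ)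
    (c₁ c₂ c₃ θ₁ θ₂ θ₃ : ℝ) (hc₂ : 0 < c₂) (hc₃ : 0 < c₃)
    (hθ₂ : θ₂ ∈ Set.Ioo (0:ℝ) 1) (hθ₃ : θ₃ ∈ Set.Ioo (0:ℝ) 1)
    (hGibbs : GibbsEstimates M Amat μ c₁ c₂ c₃ θ₁ θ₂ θ₃)
    (D : ℤ) (hD : 0 ≤ D)
    (C : ℕ → Set (ℤ → Fin M)) (a b : ℕ → ℤ)
    (hab : ∀ n, 1 ≤ n → a n ≤ b n)
    (hcyl : ∀ n, 1 ≤ n → IsCylinderOn M Amat (a n) (b n) (C n))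
    (hnest : ∀ m n, 1 ≤ m → 1 ≤ n →
      (a n - D ≤ a m ∧ b m ≤ b n + D) ∨ (a m - D ≤ a n ∧ b n ≤ b m + D)) :
    ∃ K : ℝ, 0 < K ∧ ∀ M' N : ℕ, 1 ≤ M' → M' ≤ N →
      ∑ m ∈ Finset.Icc M' N, ∑ n ∈ Finset.Icc M' N,
        ((μ ((shiftMap M)^[m] ⁻¹' C m ∩ (shiftMap M)^[n] ⁻¹' C n)).toReal -
          (μ (C m)).toReal * (μ (C n)).toReal)
      ≤ K * ∑ n ∈ Finset.Icc M' N, (μ (C n)).toReal := by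
  set θ : ℝ := max θ₂ θ₃ with hθdef
  have hθ0 : 0 < θ := lt_max_of_lt_left hθ₂.1
  have hθlt : θ < 1 := max_lt hθ₂.2 hθ₃.2
  set Q' : ℝ := (c₂*c₃ + c₂ + c₃) * θ⁻¹ ^ (D.toNat + 1) with hQ'def
  have hQ'0 : 0 ≤ Q' := by
    apply mul_nonneg (by positivity) (pow_nonneg (inv_nonneg.2 hθ0.le) _)
  set c₄ : ℝ := 2 * (θ / (1 - θ)) with hc₄def
  have hc₄0 : 0 ≤ c₄ := by
    have : (0:ℝ) < 1 - θ := by linarith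
    positivity
  refine ⟨1 + 2 * Q' * c₄, by nlinarith, fun M' N hM' hMN => ?_⟩
  set S := Finset.Icc M' N with hSdef
  have hmem : ∀ m ∈ S, 1 ≤ m := fun m hm => le_trans hM' (Finset.mem_Icc.mp hm).1
  have hμeq : ∀ m ∈ S, μ ((shiftMap M)^[m] ⁻¹' C m) = μ (C m) := fun m hm =>
    (hinv.iterate m).measure_preimage (hcyl m (hmem m hm)).measurableSet.nullMeasurableSet
  have key : ∀ m ∈ S,
      ∑ n ∈ S, ((μ ((shiftMap M)^[m] ⁻¹' C m ∩ (shiftMap M)^[n] ⁻¹' C n)).toReal -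
          (μ (C m)).toReal * (μ (C n)).toReal)
      ≤ (μ (C m)).toReal +
        ∑ n ∈ S.erase m, Q' * θ ^ (Nat.dist m n) * ((μ (C m)).toReal + (μ (C n)).toReal) := by
    intro m hm
    rw [← Finset.add_sum_erase S _ hm]
    refine add_le_add ?_ (Finset.sum_le_sum ?_)
    · rw [Set.inter_self, hμeq m hm]
      have h0 : (0:ℝ) ≤ (μ (C m)).toReal := ENNReal.toReal_nonneg
      nlinarith
    · intro n hn
      have hnm : n ≠ m := (Finset.mem_erase.mp hn).1
      have hnS : n ∈ S := (Finset.mem_erase.mp hn).2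
      have h1m : 1 ≤ m := hmem m hm
      have h1n : 1 ≤ n := hmem n hnS
      rcases lt_or_gt_of_ne hnm with h | h
      · -- n < m
        have hd : Nat.dist m n = m - n := by simp [Nat.dist]; omega
        have hb := pair_bound μ hinv c₁ c₂ c₃ θ₁ θ₂ θ₃ hc₂ hc₃ hθ₂ hθ₃ hGibbs D hD
          (hab n h1n) (hab m h1m) (hcyl n h1n) (hcyl m h1m) (hnest n m h1n h1m) h
        rw [Set.inter_comm, mul_comm ((μ (C n)).toReal) ((μ (C m)).toReal),
          add_comm ((μ (C n)).toReal) ((μ (C m)).toReal)] at hb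
        rw [hd, hQ'def, hθdef]
        exact hb
      · -- m < n
        have hd : Nat.dist m n = n - m := by simp [Nat.dist]; omega
        have hb := pair_bound μ hinv c₁ c₂ c₃ θ₁ θ₂ θ₃ hc₂ hc₃ hθ₂ hθ₃ hGibbs D hD
          (hab m h1m) (hab n h1n) (hcyl m h1m) (hcyl n h1n) (hnest m n h1m h1n) h
        rw [hd, hQ'def, hθdef]
        exact hb
  have step1 : ∑ m ∈ S, ∑ n ∈ S,
      ((μ ((shiftMap M)^[m] ⁻¹' C m ∩ (shiftMap M)^[n] ⁻¹' C n)).toReal -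
        (μ (C m)).toReal * (μ (C n)).toReal)
      ≤ ∑ m ∈ S, ((μ (C m)).toReal +
        ∑ n ∈ S.erase m, Q' * θ ^ (Nat.dist m n) * ((μ (C m)).toReal + (μ (C n)).toReal)) :=
    Finset.sum_le_sum key
  refine step1.trans ?_
  rw [Finset.sum_add_distrib]
  -- bound the big off-diagonal double sum
  have hsplit : ∀ m ∈ S, ∑ n ∈ S.erase m, Q' * θ ^ (Nat.dist m n) *
        ((μ (C m)).toReal + (μ (C n)).toReal)
      = (Q' * (μ (C m)).toReal) * (∑ n ∈ S.erase m, θ ^ (Nat.dist m n))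
        + ∑ n ∈ S.erase m, (Q' * θ ^ (Nat.dist m n)) * (μ (C n)).toReal := by
    intro m hm
    rw [Finset.mul_sum]
    rw [← Finset.sum_add_distrib]
    apply Finset.sum_congr rfl
    intro n hn
    ring
  have hoff : ∑ m ∈ S, ∑ n ∈ S.erase m, Q' * θ ^ (Nat.dist m n) *
        ((μ (C m)).toReal + (μ (C n)).toReal)
      ≤ Q' * c₄ * (∑ n ∈ S, (μ (C n)).toReal) + Q' * c₄ * (∑ n ∈ S, (μ (C n)).toReal) := by
    rw [Finset.sum_congr rfl hsplit, Finset.sum_add_distrib]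
    apply add_le_add
    · have h1 : ∑ m ∈ S, (Q' * (μ (C m)).toReal) * (∑ n ∈ S.erase m, θ ^ (Nat.dist m n))
          ≤ ∑ m ∈ S, (Q' * (μ (C m)).toReal) * c₄ :=
        Finset.sum_le_sum fun m hm => mul_le_mul_of_nonneg_left (geo_dist_le hθ0.le hθlt S m)
          (mul_nonneg hQ'0 ENNReal.toReal_nonneg)
      refine h1.trans (le_of_eq ?_)
      calc ∑ m ∈ S, (Q' * (μ (C m)).toReal) * c₄
          = ∑ m ∈ S, (Q' * c₄) * (μ (C m)).toReal := by
            apply Finset.sum_congr rfl; intros; ring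
        _ = Q' * c₄ * ∑ n ∈ S, (μ (C n)).toReal := by rw [Finset.mul_sum]
    · have hswap : ∑ m ∈ S, ∑ n ∈ S.erase m, (Q' * θ ^ (Nat.dist m n)) * (μ (C n)).toReal
          = ∑ n ∈ S, ∑ m ∈ S.erase n, (Q' * θ ^ (Nat.dist m n)) * (μ (C n)).toReal := by
        apply Finset.sum_comm'
        intro x y
        simp only [Finset.mem_erase]
        constructor
        · rintro ⟨hx, hyx, hy⟩; exact ⟨⟨fun h => hyx h.symm, hx⟩, hy⟩
        · rintro ⟨⟨hxy, hx⟩, hy⟩; exact ⟨hx, fun h => hxy h.symm, hy⟩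
      rw [hswap]
      have h1 : ∀ n ∈ S, ∑ m ∈ S.erase n, (Q' * θ ^ (Nat.dist m n)) * (μ (C n)).toReal
          ≤ (Q' * (μ (C n)).toReal) * c₄ := by
        intro n hn
        have hrw : ∑ m ∈ S.erase n, (Q' * θ ^ (Nat.dist m n)) * (μ (C n)).toReal
            = (Q' * (μ (C n)).toReal) * ∑ m ∈ S.erase n, θ ^ (Nat.dist n m) := by
          rw [Finset.mul_sum]
          apply Finset.sum_congr rfl
          intro m hm
          rw [Nat.dist_comm]
          ring
        rw [hrw]
        exact mul_le_mul_of_nonneg_left (geo_dist_le hθ0.le hθlt S n)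
          (mul_nonneg hQ'0 ENNReal.toReal_nonneg)
      refine (Finset.sum_le_sum h1).trans (le_of_eq ?_)
      calc ∑ n ∈ S, (Q' * (μ (C n)).toReal) * c₄
          = ∑ n ∈ S, (Q' * c₄) * (μ (C n)).toReal := by
            apply Finset.sum_congr rfl; intros; ring
        _ = Q' * c₄ * ∑ n ∈ S, (μ (C n)).toReal := by rw [Finset.mul_sum]
  have : (1 + 2 * Q' * c₄) * ∑ n ∈ S, (μ (C n)).toReal
      = ∑ n ∈ S, (μ (C n)).toReal + (Q' * c₄ * (∑ n ∈ S, (μ (C n)).toReal)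
        + Q' * c₄ * (∑ n ∈ S, (μ (C n)).toReal)) := by ring
  rw [this]
  exact add_le_add (le_refl _) hoff

lemma endgame (T G : ℕ → ℝ) (φ : ℕ → ℕ)
    (hT0 : ∀ N, 0 ≤ T N) (hTmono : Monotone T) (hGmono : Monotone G)
    (hGN : ∀ N : ℕ, G N ≤ N)
    (hφ : ∀ k N, φ k ≤ N ↔ (k:ℝ)^2 ≤ G N)
    (hGup : ∀ k : ℕ, 1 ≤ k → G (φ k) ≤ (k:ℝ)^2 + 1)
    (hr : Tendsto (fun k => T (φ k) / G (φ k)) atTop (nhds 1)) :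
    Tendsto (fun N => T N / G N) atTop (nhds 1) := by
  have hGφ : ∀ k : ℕ, (k:ℝ)^2 ≤ G (φ k) := fun k => (hφ k (φ k)).1 le_rfl
  have hφnat : ∀ k : ℕ, k^2 ≤ φ k := by
    intro k
    have h1 : ((k:ℝ))^2 ≤ (φ k : ℝ) := (hGφ k).trans (hGN (φ k))
    exact_mod_cast h1
  have hkφ : ∀ k : ℕ, k ≤ φ k := fun k => le_trans (Nat.le_of_lt_succ (by nlinarith [hφnat k] : k < k^2 + 1)) (hφnat k)
  have hGpos : ∀ k : ℕ, 1 ≤ k → 0 < G (φ k) := by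
    intro k hk
    have : (1:ℝ) ≤ (k:ℝ)^2 := by
      have : (1:ℝ) ≤ (k:ℝ) := by exact_mod_cast hk
      nlinarith
    linarith [hGφ k]
  have hφmono : Monotone φ := by
    intro j k hjk
    rw [hφ]
    calc ((j:ℝ))^2 ≤ ((k:ℝ))^2 := by
          have : (j:ℝ) ≤ k := by exact_mod_cast hjk
          have : (0:ℝ) ≤ j := by positivity
          nlinarith
      _ ≤ G (φ k) := hGφ k
  set κ : ℕ → ℕ := fun N => Nat.findGreatest (fun k => φ k ≤ N) N with hκdef
  have hκprop : ∀ N k₀ : ℕ, 1 ≤ k₀ → φ k₀ ≤ N →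
      k₀ ≤ κ N ∧ φ (κ N) ≤ N ∧ N < φ (κ N + 1) := by
    intro N k₀ hk₀ hφk₀
    have hk₀N : k₀ ≤ N := le_trans (hkφ k₀) hφk₀
    refine ⟨Nat.le_findGreatest (P := fun k => φ k ≤ N) hk₀N hφk₀,
      Nat.findGreatest_spec (P := fun k => φ k ≤ N) hk₀N hφk₀, ?_⟩
    by_contra hcon
    push_neg at hcon
    rcases le_or_gt (κ N + 1) N with h | h
    · exact Nat.findGreatest_is_greatest (P := fun k => φ k ≤ N) (Nat.lt_succ_self _) h hcon
    · have h2 : κ N + 1 ≤ φ (κ N + 1) := hkφ _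
      omega
  have hkinf : Tendsto κ atTop atTop := by
    rw [tendsto_atTop_atTop]
    intro c
    refine ⟨φ (max c 1), fun N hN => ?_⟩
    have := (hκprop N (max c 1) (le_max_right _ _)
      (le_trans (hφmono le_rfl) hN)).1
    omega
  have hu : Tendsto (fun k : ℕ => (((k:ℝ)+1)^2 + 1) / (k:ℝ)^2) atTop (nhds 1) := by
    have h1 : Tendsto (fun k : ℕ => ((1 + 1/(k:ℝ))^2 + (1/(k:ℝ))^2)) atTop (nhds 1) := by
      have h0 := tendsto_one_div_atTop_nhds_zero_nat (𝕜 := ℝ)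
      have h1 : Tendsto (fun k : ℕ => 1 + 1/(k:ℝ)) atTop (nhds (1 + 0)) :=
        tendsto_const_nhds.add h0
      have := (h1.pow 2).add (h0.pow 2)
      simpa using this
    apply h1.congr'
    filter_upwards [eventually_ge_atTop 1] with k hk
    have hk0 : (k:ℝ) ≠ 0 := by positivity
    field_simp
  have hratio : Tendsto (fun k : ℕ => G (φ (k+1)) / G (φ k)) atTop (nhds 1) := by
    apply tendsto_of_tendsto_of_tendsto_of_le_of_le' tendsto_const_nhds hu
    · filter_upwards [eventually_ge_atTop 1] with k hk
      rw [le_div_iff₀ (hGpos k hk), one_mul]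
      exact hGmono (hφmono (Nat.le_succ k))
    · filter_upwards [eventually_ge_atTop 1] with k hk
      have hk2 : (0:ℝ) < (k:ℝ)^2 := by
        have : (1:ℝ) ≤ (k:ℝ) := by exact_mod_cast hk
        nlinarith
      apply div_le_div₀ (by positivity) ?_ hk2 (hGφ k)
      have := hGup (k+1) (by omega)
      push_cast at this ⊢
      linarith
  have hratio' : Tendsto (fun k : ℕ => G (φ k) / G (φ (k+1))) atTop (nhds 1) := by
    have := hratio.inv₀ one_ne_zero
    simpa [inv_div] using this
  have hlo : Tendsto (fun k : ℕ => (T (φ k) / G (φ k)) * (G (φ k) / G (φ (k+1))))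
      atTop (nhds 1) := by simpa using hr.mul hratio'
  have hhi : Tendsto (fun k : ℕ => (T (φ (k+1)) / G (φ (k+1))) * (G (φ (k+1)) / G (φ k)))
      atTop (nhds 1) := by
    have h1 : Tendsto (fun k : ℕ => T (φ (k+1)) / G (φ (k+1))) atTop (nhds 1) :=
      hr.comp (tendsto_add_atTop_nat 1)
    simpa using h1.mul hratio
  apply tendsto_of_tendsto_of_tendsto_of_le_of_le' (hlo.comp hkinf) (hhi.comp hkinf)
  · filter_upwards [eventually_ge_atTop (φ 1)] with N hN
    obtain ⟨hk1, hkle, hklt⟩ := hκprop N 1 le_rfl hN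
    set k := κ N
    have hG1 : 0 < G (φ k) := hGpos k hk1
    have hG2 : 0 < G (φ (k+1)) := hGpos (k+1) (by omega)
    have hGN0 : 0 < G N := lt_of_lt_of_le hG1 (hGmono hkle)
    have heq : (T (φ k) / G (φ k)) * (G (φ k) / G (φ (k+1))) = T (φ k) / G (φ (k+1)) := by
      field_simp
    show (T (φ k) / G (φ k)) * (G (φ k) / G (φ (k+1))) ≤ T N / G N
    rw [heq]
    exact div_le_div₀ (hT0 N) (hTmono hkle) hGN0 (hGmono hklt.le)
  · filter_upwards [eventually_ge_atTop (φ 1)] with N hN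
    obtain ⟨hk1, hkle, hklt⟩ := hκprop N 1 le_rfl hN
    set k := κ N
    have hG1 : 0 < G (φ k) := hGpos k hk1
    have hG2 : 0 < G (φ (k+1)) := hGpos (k+1) (by omega)
    have heq : (T (φ (k+1)) / G (φ (k+1))) * (G (φ (k+1)) / G (φ k)) = T (φ (k+1)) / G (φ k) := by
      field_simp
    show T N / G N ≤ (T (φ (k+1)) / G (φ (k+1))) * (G (φ (k+1)) / G (φ k))
    rw [heq]
    exact div_le_div₀ (hT0 _) (hTmono hklt.le) hG1 (hGmono hkle)

lemma indicator_mul_indicator {α : Type*} (A B : Set α) (ω : α) :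
    A.indicator (fun _ => (1:ℝ)) ω * B.indicator (fun _ => (1:ℝ)) ω
      = (A ∩ B).indicator (fun _ => (1:ℝ)) ω := by
  by_cases h1 : ω ∈ A <;> by_cases h2 : ω ∈ B <;>
    simp [Set.indicator_apply, h1, h2, Set.mem_inter_iff]

lemma sprindzuk {α : Type*} [MeasurableSpace α] (μ : Measure α) [IsProbabilityMeasure μ]
    (E : ℕ → Set α) (hE : ∀ n, 1 ≤ n → MeasurableSet (E n)) (K : ℝ) (hK : 0 < K)
    (hSP : ∀ N : ℕ, 1 ≤ N →
      ∑ m ∈ Finset.Icc 1 N, ∑ n ∈ Finset.Icc 1 N,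
        ((μ (E m ∩ E n)).toReal - (μ (E m)).toReal * (μ (E n)).toReal)
      ≤ K * ∑ n ∈ Finset.Icc 1 N, (μ (E n)).toReal)
    (hdiv : Tendsto (fun N : ℕ => ∑ n ∈ Finset.Icc 1 N, (μ (E n)).toReal) atTop atTop) :
    ∀ᵐ ω ∂μ, Tendsto
      (fun N : ℕ => (∑ n ∈ Finset.Icc 1 N, (E n).indicator (fun _ => (1:ℝ)) ω) /
        ∑ n ∈ Finset.Icc 1 N, (μ (E n)).toReal) atTop (nhds 1) := by
  classical
  set G : ℕ → ℝ := fun N => ∑ n ∈ Finset.Icc 1 N, (μ (E n)).toReal with hGdef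
  set T : ℕ → α → ℝ := fun N ω => ∑ n ∈ Finset.Icc 1 N, (E n).indicator (fun _ => (1:ℝ)) ω
    with hTdef
  -- basic facts
  have hmeas : ∀ N : ℕ, ∀ n ∈ Finset.Icc 1 N, MeasurableSet (E n) := by
    intro N n hn
    exact hE n (Finset.mem_Icc.mp hn).1
  have hind_int : ∀ N : ℕ, ∀ n ∈ Finset.Icc 1 N,
      Integrable ((E n).indicator (fun _ => (1:ℝ))) μ := by
    intro N n hn
    exact (integrable_const (1:ℝ)).indicator (hmeas N n hn)
  have hTint : ∀ N, Integrable (T N) μ := by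
    intro N
    exact integrable_finset_sum _ (hind_int N)
  have hTintegral : ∀ N, ∫ ω, T N ω ∂μ = G N := by
    intro N
    rw [hTdef, hGdef]
    rw [integral_finset_sum _ (hind_int N)]
    apply Finset.sum_congr rfl
    intro n hn
    rw [integral_indicator_const (1:ℝ) (hmeas N n hn)]
    simp
    rfl
  have hT2fun : ∀ N, (fun ω => (T N ω)^2) = fun ω =>
      ∑ m ∈ Finset.Icc 1 N, ∑ n ∈ Finset.Icc 1 N,
        (E m ∩ E n).indicator (fun _ => (1:ℝ)) ω := by
    intro N
    funext ω
    rw [sq, hTdef]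
    rw [Finset.sum_mul_sum]
    apply Finset.sum_congr rfl; intro m _
    apply Finset.sum_congr rfl; intro n _
    exact indicator_mul_indicator (E m) (E n) ω
  have hT2int : ∀ N, Integrable (fun ω => (T N ω)^2) μ := by
    intro N
    rw [hT2fun N]
    apply integrable_finset_sum _
    intro m hm
    apply integrable_finset_sum _
    intro n hn
    exact (integrable_const (1:ℝ)).indicator ((hmeas N m hm).inter (hmeas N n hn))
  have hT2integral : ∀ N, ∫ ω, (T N ω)^2 ∂μ
      = ∑ m ∈ Finset.Icc 1 N, ∑ n ∈ Finset.Icc 1 N, (μ (E m ∩ E n)).toReal := by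
    intro N
    rw [hT2fun N]
    rw [integral_finset_sum _ (fun m hm => integrable_finset_sum _ (fun n hn =>
      (integrable_const (1:ℝ)).indicator ((hmeas N m hm).inter (hmeas N n hn))))]
    apply Finset.sum_congr rfl; intro m hm
    rw [integral_finset_sum _ (fun n hn =>
      (integrable_const (1:ℝ)).indicator ((hmeas N m hm).inter (hmeas N n hn)))]
    apply Finset.sum_congr rfl; intro n hn
    rw [integral_indicator_const (1:ℝ) ((hmeas N m hm).inter (hmeas N n hn))]
    simp
    rfl
  have hvar : ∀ N : ℕ, 1 ≤ N → ∫ ω, (T N ω - G N)^2 ∂μ ≤ K * G N := by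
    intro N hN
    have hfun : (fun ω => (T N ω - G N)^2)
        = fun ω => ((T N ω)^2 - (2 * G N) * T N ω) + (G N)^2 := by
      funext ω; ring
    rw [hfun]
    have hint1 : Integrable (fun ω => T N ω ^ 2 - 2 * G N * T N ω) μ := by
      exact (hT2int N).sub ((hTint N).const_mul _)
    have hint2 : Integrable (fun ω => 2 * G N * T N ω) μ := (hTint N).const_mul _
    rw [integral_add hint1 (integrable_const _)]
    rw [integral_sub (hT2int N) hint2]
    rw [integral_const_mul, hTintegral N, integral_const]
    simp only [measure_univ, probReal_univ, ENNReal.toReal_one, smul_eq_mul, one_mul]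
    have hG2 : (G N)^2 = ∑ m ∈ Finset.Icc 1 N, ∑ n ∈ Finset.Icc 1 N,
        (μ (E m)).toReal * (μ (E n)).toReal := by
      rw [hGdef, sq, Finset.sum_mul_sum]
    have expand : ∫ ω, (T N ω)^2 ∂μ - 2 * G N * G N + (G N)^2
        = ∫ ω, (T N ω)^2 ∂μ - (G N)^2 := by ring
    rw [expand, hT2integral N, hG2, ← Finset.sum_sub_distrib]
    have : ∀ m ∈ Finset.Icc 1 N,
        (∑ n ∈ Finset.Icc 1 N, (μ (E m ∩ E n)).toReal)
          - ∑ n ∈ Finset.Icc 1 N, (μ (E m)).toReal * (μ (E n)).toReal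
        = ∑ n ∈ Finset.Icc 1 N,
          ((μ (E m ∩ E n)).toReal - (μ (E m)).toReal * (μ (E n)).toReal) := by
      intro m hm
      rw [Finset.sum_sub_distrib]
    rw [Finset.sum_congr rfl this]
    exact hSP N hN
  -- construction of φ
  have hex : ∀ k : ℕ, ∃ N, (k:ℝ)^2 ≤ G N := by
    intro k
    exact (hdiv.eventually_ge_atTop ((k:ℝ)^2)).exists
  set φ : ℕ → ℕ := fun k => Nat.find (hex k) with hφdef
  have hμle1 : ∀ n : ℕ, (μ (E n)).toReal ≤ 1 := by
    intro n
    rw [← ENNReal.toReal_one]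
    exact ENNReal.toReal_mono (by simp) prob_le_one
  have hμ0 : ∀ n : ℕ, 0 ≤ (μ (E n)).toReal := fun n => ENNReal.toReal_nonneg
  have hGmono : Monotone G := by
    intro N N' h
    apply Finset.sum_le_sum_of_subset_of_nonneg
    · exact Finset.Icc_subset_Icc le_rfl h
    · intro n _ _; exact hμ0 n
  have hφiff : ∀ k N : ℕ, φ k ≤ N ↔ (k:ℝ)^2 ≤ G N := by
    intro k N
    constructor
    · intro h
      exact le_trans (Nat.find_spec (hex k)) (hGmono h)
    · intro h
      exact Nat.find_min' (hex k) h
  have hG0 : G 0 = 0 := by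
    rw [hGdef]
    simp
  have hGup : ∀ k : ℕ, 1 ≤ k → G (φ k) ≤ (k:ℝ)^2 + 1 := by
    intro k hk
    have h1 : (1:ℝ) ≤ (k:ℝ)^2 := by
      have : (1:ℝ) ≤ (k:ℝ) := by exact_mod_cast hk
      nlinarith
    have hφpos : φ k ≠ 0 := by
      intro h
      have hspec : (k:ℝ)^2 ≤ G (φ k) := Nat.find_spec (hex k)
      rw [h, hG0] at hspec
      linarith
    obtain ⟨p, hp⟩ : ∃ p, φ k = p + 1 := ⟨φ k - 1, by omega⟩
    have hplt : p < φ k := by omega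
    have hmin : ¬ ((k:ℝ)^2 ≤ G p) := Nat.find_min (hex k) hplt
    have hsum : G (p + 1) = G p + (μ (E (p+1))).toReal := by
      simp only [hGdef]
      have hins : Finset.Icc 1 (p+1) = insert (p+1) (Finset.Icc 1 p) := by
        ext x
        simp only [Finset.mem_Icc, Finset.mem_insert]
        omega
      rw [hins, Finset.sum_insert (by simp [Finset.mem_Icc])]
      ring
    rw [hp, hsum]
    push_neg at hmin
    have := hμle1 (p+1)
    linarith
  have hGN : ∀ N : ℕ, G N ≤ N := by
    intro N
    calc G N ≤ ∑ n ∈ Finset.Icc 1 N, (1:ℝ) := Finset.sum_le_sum (fun n _ => hμle1 n)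
      _ = N := by simp [Nat.card_Icc]
  -- Chebyshev and Borel-Cantelli
  set A : ℕ → ℕ → Set α := fun j k =>
    {ω | (G (φ k) / ((j:ℝ)+1))^2 ≤ (T (φ k) ω - G (φ k))^2} with hAdef
  have hGφpos : ∀ k : ℕ, 1 ≤ k → 0 < G (φ k) := by
    intro k hk
    have h1 : (1:ℝ) ≤ (k:ℝ)^2 := by
      have : (1:ℝ) ≤ (k:ℝ) := by exact_mod_cast hk
      nlinarith
    have := (hφiff k (φ k)).1 le_rfl
    linarith
  have hφpos : ∀ k : ℕ, 1 ≤ k → 1 ≤ φ k := by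
    intro k hk
    by_contra h
    have : φ k = 0 := by omega
    have h2 := hGφpos k hk
    rw [this, hG0] at h2
    linarith
  have hcheb : ∀ j k : ℕ, 1 ≤ k →
      (μ (A j k)).toReal ≤ K * ((j:ℝ)+1)^2 / (k:ℝ)^2 := by
    intro j k hk
    have hGpos := hGφpos k hk
    have hj1 : (0:ℝ) < (j:ℝ)+1 := by positivity
    have hε : (0:ℝ) < (G (φ k) / ((j:ℝ)+1))^2 := by positivity
    have hint : Integrable (fun ω => (T (φ k) ω - G (φ k))^2) μ := by
      have hfun : (fun ω => (T (φ k) ω - G (φ k))^2)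
          = fun ω => ((T (φ k) ω)^2 - (2 * G (φ k)) * T (φ k) ω) + (G (φ k))^2 := by
        funext ω; ring
      rw [hfun]
      exact (Integrable.sub (hT2int _) ((hTint _).const_mul _)).add (integrable_const _)
    have hmark := mul_meas_ge_le_integral_of_nonneg
      (Filter.Eventually.of_forall (fun ω => sq_nonneg (T (φ k) ω - G (φ k)))) hint
      ((G (φ k) / ((j:ℝ)+1))^2)
    have hvark := hvar (φ k) (hφpos k hk)
    have hAset : {x | (G (φ k) / ((j:ℝ)+1))^2 ≤ (fun ω => (T (φ k) ω - G (φ k))^2) x} = A j k := rfl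
    rw [hAset] at hmark
    have hle : (μ (A j k)).toReal ≤ K * G (φ k) / (G (φ k) / ((j:ℝ)+1))^2 := by
      rw [le_div_iff₀ hε]
      calc (μ (A j k)).toReal * (G (φ k) / ((j:ℝ)+1))^2
          = (G (φ k) / ((j:ℝ)+1))^2 * (μ (A j k)).toReal := by ring
        _ ≤ ∫ ω, (T (φ k) ω - G (φ k))^2 ∂μ := hmark
        _ ≤ K * G (φ k) := hvark
    refine hle.trans ?_
    have heq : K * G (φ k) / (G (φ k) / ((j:ℝ)+1))^2 = K * ((j:ℝ)+1)^2 / G (φ k) := by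
      field_simp
    rw [heq]
    apply div_le_div₀ (by positivity) le_rfl ?_ ((hφiff k (φ k)).1 le_rfl)
    have h1 : (1:ℝ) ≤ (k:ℝ) := by exact_mod_cast hk
    nlinarith
  have hsummable : ∀ j : ℕ, (∑' k : ℕ, μ (A j (k+1))) ≠ ⊤ := by
    intro j
    have hb : ∀ k : ℕ, μ (A j (k+1)) ≤
        ENNReal.ofReal (K * ((j:ℝ)+1)^2 * (1/((k:ℝ)+1)^2)) := by
      intro k
      apply (ENNReal.le_ofReal_iff_toReal_le (measure_ne_top μ _) ?_).2
      · have := hcheb j (k+1) (by omega)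
        push_cast at this ⊢
        calc (μ (A j (k+1))).toReal ≤ K * ((j:ℝ)+1)^2 / ((k:ℝ)+1)^2 := this
          _ = K * ((j:ℝ)+1)^2 * (1/((k:ℝ)+1)^2) := by ring
      · positivity
    have hsum : Summable (fun k : ℕ => K * ((j:ℝ)+1)^2 * (1/((k:ℝ)+1)^2)) := by
      apply Summable.mul_left
      have h2 : Summable (fun n : ℕ => 1/(n:ℝ)^2) := by
        rw [Real.summable_one_div_nat_pow]
        omega
      have h3 := h2.comp_injective (add_left_injective 1)
      apply h3.congr
      intro k
      simp only [Function.comp_apply]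
      push_cast
      ring
    have hle : ∑' k : ℕ, μ (A j (k+1))
        ≤ ENNReal.ofReal (∑' k : ℕ, K * ((j:ℝ)+1)^2 * (1/((k:ℝ)+1)^2)) := by
      calc ∑' k : ℕ, μ (A j (k+1))
          ≤ ∑' k : ℕ, ENNReal.ofReal (K * ((j:ℝ)+1)^2 * (1/((k:ℝ)+1)^2)) :=
            ENNReal.tsum_le_tsum hb
        _ = ENNReal.ofReal (∑' k : ℕ, K * ((j:ℝ)+1)^2 * (1/((k:ℝ)+1)^2)) :=
            (ENNReal.ofReal_tsum_of_nonneg (fun k => by positivity) hsum).symm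
    exact ne_top_of_le_ne_top ENNReal.ofReal_ne_top hle
  have hBC : ∀ᵐ ω ∂μ, ∀ j : ℕ, ∀ᶠ k in atTop, ω ∉ A j (k+1) := by
    rw [ae_all_iff]
    intro j
    exact ae_eventually_notMem (hsummable j)
  filter_upwards [hBC] with ω hω
  -- first, convergence along the subsequence
  have hrsub : Tendsto (fun k => T (φ k) ω / G (φ k)) atTop (nhds 1) := by
    rw [Metric.tendsto_atTop]
    intro ε hε
    obtain ⟨j, hj⟩ := exists_nat_one_div_lt hε
    obtain ⟨k₁, hk₁⟩ := (hω j).exists_forall_of_atTop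
    refine ⟨k₁ + 1, fun k hk => ?_⟩
    have hk1 : 1 ≤ k := by omega
    obtain ⟨p, hp⟩ : ∃ p, k = p + 1 := ⟨k - 1, by omega⟩
    have hnotin : ω ∉ A j k := by
      rw [hp]
      exact hk₁ p (by omega)
    rw [hAdef] at hnotin
    simp only [Set.mem_setOf_eq, not_le] at hnotin
    have hGpos := hGφpos k hk1
    have hj1 : (0:ℝ) < (j:ℝ)+1 := by positivity
    have habs : |T (φ k) ω - G (φ k)| < G (φ k) / ((j:ℝ)+1) := by
      have h := abs_lt_of_sq_lt_sq' hnotin (by positivity)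
      exact abs_lt.2 ⟨h.1, h.2⟩
    rw [Real.dist_eq]
    have heq : T (φ k) ω / G (φ k) - 1 = (T (φ k) ω - G (φ k)) / G (φ k) := by
      field_simp
    rw [heq, abs_div, abs_of_pos hGpos]
    rw [div_lt_iff₀ hGpos]
    calc |T (φ k) ω - G (φ k)| < G (φ k) / ((j:ℝ)+1) := habs
      _ = (1/((j:ℝ)+1)) * G (φ k) := by ring
      _ ≤ ε * G (φ k) := mul_le_mul_of_nonneg_right hj.le hGpos.le
  -- now apply the deterministic endgame
  have hT0 : ∀ N, 0 ≤ T N ω := by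
    intro N
    apply Finset.sum_nonneg
    intro n _
    exact Set.indicator_nonneg (fun _ _ => zero_le_one) ω
  have hTmono : Monotone (fun N => T N ω) := by
    intro N N' h
    apply Finset.sum_le_sum_of_subset_of_nonneg (Finset.Icc_subset_Icc le_rfl h)
    intro n _ _
    exact Set.indicator_nonneg (fun _ _ => zero_le_one) ω
  exact endgame (fun N => T N ω) G φ hT0 hTmono hGmono hGN hφiff hGup hrsub

end SPhelpers

open scoped Classical

/-- **Theorem 2.2.** Let `μ` be a shift-invariant probability measure on the
two-sided subshift `Σ_A` satisfying the Gibbs cylinder estimates, `D ≥ 0`, and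
let `(C n)` be a sequence of cylinders on finite intervals `Λ n = [a n, b n]`
which are pairwise `D`-nested. Then `(C n)` satisfies condition (SP), and
consequently, if in addition the sum of the measures diverges, then for
`μ`-a.e. `ω` one has `#{1 ≤ n ≤ N : σ^n ω ∈ C n} / ∑_{n=1}^N μ(C n) → 1`. -/
theorem nested_cylinders_SP_and_sBC
    (M : ℕ) (hM : 2 ≤ M) (Amat : Fin M → Fin M → Bool)
    (μ : Measure (ℤ → Fin M)) [IsProbabilityMeasure μ]
    (hinv : MeasurePreserving (shiftMap M) μ μ) (hsupp : μ (shiftSpace M Amat) = 1)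
    (c₁ c₂ c₃ θ₁ θ₂ θ₃ : ℝ) (hc₁ : 0 < c₁) (hc₂ : 0 < c₂) (hc₃ : 0 < c₃)
    (hθ₁ : θ₁ ∈ Set.Ioo (0 : ℝ) 1) (hθ₂ : θ₂ ∈ Set.Ioo (0 : ℝ) 1)
    (hθ₃ : θ₃ ∈ Set.Ioo (0 : ℝ) 1)
    (hGibbs : GibbsEstimates M Amat μ c₁ c₂ c₃ θ₁ θ₂ θ₃)
    (D : ℤ) (hD : 0 ≤ D)
    (C : ℕ → Set (ℤ → Fin M)) (a b : ℕ → ℤ)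
    (hab : ∀ n, 1 ≤ n → a n ≤ b n)
    (hcyl : ∀ n, 1 ≤ n → IsCylinderOn M Amat (a n) (b n) (C n))
    (hnest : ∀ m n, 1 ≤ m → 1 ≤ n →
      (a n - D ≤ a m ∧ b m ≤ b n + D) ∨ (a m - D ≤ a n ∧ b n ≤ b m + D)) :
    (∃ K : ℝ, 0 < K ∧ ∀ M' N : ℕ, 1 ≤ M' → M' ≤ N →
      ∑ m ∈ Finset.Icc M' N, ∑ n ∈ Finset.Icc M' N,
        ((μ ((shiftMap M)^[m] ⁻¹' C m ∩ (shiftMap M)^[n] ⁻¹' C n)).toReal -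
          (μ (C m)).toReal * (μ (C n)).toReal)
      ≤ K * ∑ n ∈ Finset.Icc M' N, (μ (C n)).toReal) ∧
    (Tendsto (fun N : ℕ => ∑ n ∈ Finset.Icc 1 N, (μ (C n)).toReal) atTop atTop →
      ∀ᵐ ω ∂μ, Tendsto
        (fun N : ℕ =>
          (((Finset.Icc 1 N).filter (fun n => (shiftMap M)^[n] ω ∈ C n)).card : ℝ) /
            ∑ n ∈ Finset.Icc 1 N, (μ (C n)).toReal)
        atTop (nhds 1)) := by
  obtain ⟨K, hK0, hSP⟩ := SP_exists μ hinv c₁ c₂ c₃ θ₁ θ₂ θ₃ hc₂ hc₃ hθ₂ hθ₃ hGibbs D hD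
    C a b hab hcyl hnest
  refine ⟨⟨K, hK0, hSP⟩, ?_⟩
  intro hdivC
  set E : ℕ → Set (ℤ → Fin M) := fun n => (shiftMap M)^[n] ⁻¹' C n with hEdef
  have hμeq : ∀ n : ℕ, 1 ≤ n → μ (E n) = μ (C n) := fun n hn =>
    (hinv.iterate n).measure_preimage (hcyl n hn).measurableSet.nullMeasurableSet
  have hsum_eq : ∀ N : ℕ, ∑ n ∈ Finset.Icc 1 N, (μ (E n)).toReal
      = ∑ n ∈ Finset.Icc 1 N, (μ (C n)).toReal := fun N =>
    Finset.sum_congr rfl (fun n hn => by rw [hμeq n (Finset.mem_Icc.mp hn).1])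
  have hE : ∀ n : ℕ, 1 ≤ n → MeasurableSet (E n) := fun n hn =>
    ((hcyl n hn).preimage n).measurableSet
  have hSP' : ∀ N : ℕ, 1 ≤ N →
      ∑ m ∈ Finset.Icc 1 N, ∑ n ∈ Finset.Icc 1 N,
        ((μ (E m ∩ E n)).toReal - (μ (E m)).toReal * (μ (E n)).toReal)
      ≤ K * ∑ n ∈ Finset.Icc 1 N, (μ (E n)).toReal := by
    intro N hN
    have h1 := hSP 1 N le_rfl hN
    rw [hsum_eq N]
    refine le_trans (le_of_eq ?_) h1
    apply Finset.sum_congr rfl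
    intro m hm
    apply Finset.sum_congr rfl
    intro n hn
    rw [hμeq m (Finset.mem_Icc.mp hm).1, hμeq n (Finset.mem_Icc.mp hn).1]
  have hdiv' : Tendsto (fun N : ℕ => ∑ n ∈ Finset.Icc 1 N, (μ (E n)).toReal) atTop atTop := by
    have : (fun N : ℕ => ∑ n ∈ Finset.Icc 1 N, (μ (E n)).toReal)
        = fun N : ℕ => ∑ n ∈ Finset.Icc 1 N, (μ (C n)).toReal := funext hsum_eq
    rw [this]
    exact hdivC
  have hae := sprindzuk μ E hE K hK0 hSP' hdiv'
  filter_upwards [hae] with ω hω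
  have hfun : (fun N : ℕ =>
      (((Finset.Icc 1 N).filter (fun n => (shiftMap M)^[n] ω ∈ C n)).card : ℝ) /
        ∑ n ∈ Finset.Icc 1 N, (μ (C n)).toReal)
      = fun N : ℕ => (∑ n ∈ Finset.Icc 1 N, (E n).indicator (fun _ => (1:ℝ)) ω) /
        ∑ n ∈ Finset.Icc 1 N, (μ (E n)).toReal := by
    funext N
    rw [hsum_eq N]
    congr 1
    rw [Finset.card_filter]
    push_cast
    apply Finset.sum_congr rfl
    intro n hn
    rw [Set.indicator_apply]
    congr 1
  rw [hfun]
  exact hω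
end
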